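/- arXiv:1809.08281 — 7 statements merged into one kernel-verified Lean document; each statement's English description precedes it below -/
import Mathlib

section
/- Let k be an integer with k ≥ 2. Then every 2-dimensional grid P_{n₁} □ P_{n₂} (n₁, n₂ ≥ 2) is equitably k-list arborable. -/
open SimpleGraph

/-- A finite simple graph `G` is equitably `k`-list arborable if for every list assignment
giving each vertex a set of exactly `k` colours, there is a colouring from the lists in which
each colour class has at most `⌈|V(G)|/k⌉` vertices and induces an acyclic subgraph. -/
def EquitablyListArborable {V : Type*} [Fintype V] (G : SimpleGraph V) (k : ℕ) : Prop :=
  ∀ L : V → Finset ℕ, (∀ v, (L v).card = k) →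
    ∃ c : V → ℕ, (∀ v, c v ∈ L v) ∧
      (∀ col : ℕ, (Finset.univ.filter fun v => c v = col).card ≤ (Fintype.card V + k - 1) / k) ∧
      (∀ col : ℕ, (G.induce {v | c v = col}).IsAcyclic)

lemma exists_two_nbrs {V : Type*} {G : SimpleGraph V} {v₀ : V} {q : G.Walk v₀ v₀}
    (hq : q.IsCycle) :
    ∃ a b, a ≠ b ∧ G.Adj v₀ a ∧ G.Adj v₀ b ∧ a ∈ q.support ∧ b ∈ q.support := by
  cases q with
  | nil => exact absurd rfl hq.ne_nil
  | cons h p =>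
    rename_i a
    rw [Walk.cons_isCycle_iff] at hq
    rcases hr : p.reverse with _ | ⟨hadj, r'⟩
    · -- p.reverse nil forces a = v₀, contradicting irreflexivity
      exact absurd h (G.irrefl)
    · rename_i b
      refine ⟨a, b, ?_, h, hadj, ?_, ?_⟩
      · rintro rfl
        apply hq.2
        have : s(v₀, a) ∈ p.reverse.edges := by
          rw [hr]; simp
        rwa [Walk.edges_reverse, List.mem_reverse] at this
      · simp [Walk.support_cons, Walk.start_mem_support]
      · have : b ∈ p.reverse.support := by rw [hr]; simp [Walk.support_cons, Walk.start_mem_support]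
        rw [Walk.support_reverse, List.mem_reverse] at this
        simp [Walk.support_cons, this]


lemma rotate_support_subset {V : Type*} [DecidableEq V] {G : SimpleGraph V} {v u : V}
    (q : G.Walk v v) (hu : u ∈ q.support) : ∀ x ∈ (q.rotate u hu).support, x ∈ q.support := by
  intro x hx
  rw [Walk.support_eq_cons (q.rotate u hu)] at hx
  rcases List.mem_cons.1 hx with rfl | hx
  · exact hu
  · exact List.mem_of_mem_tail (((Walk.support_rotate q u hu).mem_iff).1 hx)

lemma grid_acyclic {n₁ n₂ k : ℕ} (hk : 2 ≤ k) (hn₂ : 2 ≤ n₂)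
    (S : Set (Fin n₁ × Fin n₂)) (β : ℕ → ZMod k)
    (hS : ∀ (r : Fin n₁) (c c' : Fin n₂), (r, c) ∈ S → (r, c') ∈ S →
      (c : ℕ) + 1 = (c' : ℕ) → ((c : ℕ) : ZMod k) = β (r : ℕ))
    (hβ : ∀ r, β r ≠ β (r + 1)) :
    ((pathGraph n₁ □ pathGraph n₂).induce S).IsAcyclic := by
  haveI : Fact (1 < k) := ⟨hk⟩
  intro x p hp
  let ι : ((pathGraph n₁ □ pathGraph n₂).induce S) ↪g (pathGraph n₁ □ pathGraph n₂) :=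
    SimpleGraph.Embedding.induce S
  have hq : (p.map ι.toHom).IsCycle := hp.map ι.injective
  set q := p.map ι.toHom with hqdef
  have hsupp : ∀ u ∈ q.support, u ∈ S := by
    intro u hu
    rw [hqdef, Walk.support_map] at hu
    obtain ⟨w, _, rfl⟩ := List.mem_map.mp hu
    exact w.2
  set κ : Fin n₁ × Fin n₂ → ℕ := fun u => (u.1 : ℕ) * n₂ + (u.2 : ℕ) with hκ
  obtain ⟨v₀, hv₀T, hmin'⟩ := Finset.exists_min_image q.support.toFinset κ
    ⟨ι.toHom x, List.mem_toFinset.2 q.start_mem_support⟩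
  rw [List.mem_toFinset] at hv₀T
  have hmin : ∀ w ∈ q.support, κ v₀ ≤ κ w := fun w hw => hmin' w (List.mem_toFinset.2 hw)
  have classify : ∀ u w : Fin n₁ × Fin n₂, (pathGraph n₁ □ pathGraph n₂).Adj u w →
      κ v₀ ≤ κ w → κ u ≤ κ v₀ + 1 →
      (w.1 = u.1 ∧ (w.2 : ℕ) = (u.2 : ℕ) + 1) ∨ (w.2 = u.2 ∧ (w.1 : ℕ) = (u.1 : ℕ) + 1)
      ∨ (w.1 = u.1 ∧ (w.2 : ℕ) + 1 = (u.2 : ℕ)) := by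
    intro u w hadj hw hu
    rw [boxProd_adj] at hadj
    rcases hadj with ⟨h1, h2⟩ | ⟨h1, h2⟩
    · rw [pathGraph_adj] at h1
      rcases h1 with h1 | h1
      · exact Or.inr (Or.inl ⟨h2.symm, h1.symm⟩)
      · exfalso
        have hprod : (u.1 : ℕ) * n₂ = (w.1 : ℕ) * n₂ + n₂ := by
          rw [← h1, add_mul, one_mul]
        have h2' : (u.2 : ℕ) = (w.2 : ℕ) := by rw [h2]
        rw [hκ] at hw hu
        simp only at hw hu
        omega
    · rw [pathGraph_adj] at h1
      rcases h1 with h1 | h1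
      · exact Or.inl ⟨h2.symm, h1.symm⟩
      · exact Or.inr (Or.inr ⟨h2.symm, h1⟩)
  -- first stage
  have hv₀S : v₀ ∈ S := hsupp v₀ hv₀T
  have hq' := hq.rotate hv₀T
  obtain ⟨a, b, hab, haadj, hbadj, haS, hbS⟩ := exists_two_nbrs hq'
  have haQ : a ∈ q.support := rotate_support_subset q hv₀T a haS
  have hbQ : b ∈ q.support := rotate_support_subset q hv₀T b hbS
  have noopt3 : ∀ w : Fin n₁ × Fin n₂, w ∈ q.support →
      ¬(w.1 = v₀.1 ∧ (w.2 : ℕ) + 1 = (v₀.2 : ℕ)) := by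
    rintro w hw ⟨h1, h2⟩
    have hmw := hmin w hw
    have hp1 : (w.1 : ℕ) * n₂ = (v₀.1 : ℕ) * n₂ := by rw [h1]
    rw [hκ] at hmw
    simp only at hmw
    omega
  have ca := classify v₀ a haadj (hmin a haQ) (by omega)
  have cb := classify v₀ b hbadj (hmin b hbQ) (by omega)
  have hcases : ∃ w1 w2 : Fin n₁ × Fin n₂, w1 ∈ q.support ∧ w2 ∈ q.support ∧
      (w1.1 = v₀.1 ∧ (w1.2 : ℕ) = (v₀.2 : ℕ) + 1) ∧
      (w2.2 = v₀.2 ∧ (w2.1 : ℕ) = (v₀.1 : ℕ) + 1) := by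
    rcases ca with h | h | h
    · rcases cb with h' | h' | h'
      · exfalso; apply hab
        exact Prod.ext (h.1.trans h'.1.symm) (Fin.val_injective (by omega))
      · exact ⟨a, b, haQ, hbQ, h, h'⟩
      · exact absurd ⟨h'.1, h'.2⟩ (noopt3 b hbQ)
    · rcases cb with h' | h' | h'
      · exact ⟨b, a, hbQ, haQ, h', h⟩
      · exfalso; apply hab
        exact Prod.ext (Fin.val_injective (by omega)) (h.1.trans h'.1.symm)
      · exact absurd ⟨h'.1, h'.2⟩ (noopt3 b hbQ)
    · exact absurd ⟨h.1, h.2⟩ (noopt3 a haQ)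
  obtain ⟨w1, w2, hw1Q, hw2Q, ⟨hw11, hw12⟩, ⟨hw22, hw21⟩⟩ := hcases
  have hw1S : w1 ∈ S := hsupp w1 hw1Q
  have hw2S : w2 ∈ S := hsupp w2 hw2Q
  have e1 : (((v₀.2 : ℕ)) : ZMod k) = β (v₀.1 : ℕ) := by
    refine hS v₀.1 v₀.2 w1.2 ?_ ?_ hw12.symm
    · rw [Prod.mk.eta]; exact hv₀S
    · rw [← hw11, Prod.mk.eta]; exact hw1S
  -- second stage : around w1
  have hκw1 : κ w1 = κ v₀ + 1 := by
    have hp1 : (w1.1 : ℕ) * n₂ = (v₀.1 : ℕ) * n₂ := by rw [hw11]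
    rw [hκ]; simp only; omega
  have hq'' := hq.rotate hw1Q
  obtain ⟨a', b', hab', ha'adj, hb'adj, ha'S, hb'S⟩ := exists_two_nbrs hq''
  have ha'Q : a' ∈ q.support := rotate_support_subset q hw1Q a' ha'S
  have hb'Q : b' ∈ q.support := rotate_support_subset q hw1Q b' hb'S
  have final : ∀ z : Fin n₁ × Fin n₂, z ∈ q.support →
      (pathGraph n₁ □ pathGraph n₂).Adj w1 z → z ≠ v₀ → False := by
    intro z hzQ hzadj hzne
    have hzS : z ∈ S := hsupp z hzQ
    rcases classify w1 z hzadj (hmin z hzQ) (by omega) with ⟨h1, h2⟩ | ⟨h1, h2⟩ | ⟨h1, h2⟩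
    · -- z = (r, c+2)
      have e3 : (((w1.2 : ℕ)) : ZMod k) = β (w1.1 : ℕ) := by
        refine hS w1.1 w1.2 z.2 ?_ ?_ h2.symm
        · rw [Prod.mk.eta]; exact hw1S
        · rw [← h1, Prod.mk.eta]; exact hzS
      rw [hw12, hw11] at e3
      have h10 : (1 : ZMod k) = 0 := by
        push_cast at e3 e1
        linear_combination e3 - e1
      exact one_ne_zero h10
    · -- z = (r+1, c+1)
      have hzw2 : z.1 = w2.1 := Fin.val_injective (by omega)
      have e2 : (((w2.2 : ℕ)) : ZMod k) = β (z.1 : ℕ) := by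
        refine hS z.1 w2.2 z.2 ?_ ?_ (by omega)
        · rw [hzw2, Prod.mk.eta]; exact hw2S
        · rw [Prod.mk.eta]; exact hzS
      rw [hw22] at e2
      have hz1v : (z.1 : ℕ) = (v₀.1 : ℕ) + 1 := by omega
      rw [hz1v] at e2
      exact hβ (v₀.1 : ℕ) (e1.symm.trans e2)
    · -- z = v₀
      exact hzne (Prod.ext (h1.trans hw11) (Fin.val_injective (by omega)))
  by_cases hav : a' = v₀
  · have hbv : b' ≠ v₀ := fun h => hab' (hav.trans h.symm)
    exact final b' hb'Q hb'adj hbv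
  · exact final a' ha'Q ha'adj hav

lemma exists_rainbow {V : Type*} [DecidableEq V] (k : ℕ) (L : V → Finset ℕ)
    (hL : ∀ v, k ≤ (L v).card) (F : Finset V) (hF : F.card ≤ k) :
    ∃ f : V → ℕ, (∀ v ∈ F, f v ∈ L v) ∧ Set.InjOn f F := by
  induction F using Finset.induction with
  | empty => exact ⟨fun _ => 0, by simp, by simp [Set.InjOn]⟩
  | insert _ _ hv =>
    rename_i v F ih
    rw [Finset.card_insert_of_notMem hv] at hF
    obtain ⟨f, hf1, hf2⟩ := ih (by omega)
    have hne : (L v \ F.image f).Nonempty := by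
      apply Finset.card_pos.1
      have h1 : (F.image f).card ≤ F.card := Finset.card_image_le
      have h2 := Finset.le_card_sdiff (F.image f) (L v)
      have := hL v
      omega
    obtain ⟨y, hy⟩ := hne
    rw [Finset.mem_sdiff] at hy
    refine ⟨Function.update f v y, ?_, ?_⟩
    · intro w hw
      rcases Finset.mem_insert.1 hw with rfl | hw
      · simpa using hy.1
      · rw [Function.update_of_ne (ne_of_mem_of_not_mem hw hv)]
        exact hf1 w hw
    · intro x hx y' hy' hxy
      simp only [Finset.coe_insert, Set.mem_insert_iff, Finset.mem_coe] at hx hy'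
      rcases hx with rfl | hx <;> rcases hy' with rfl | hy'
      · rfl
      · exfalso
        rw [Function.update_self, Function.update_of_ne (ne_of_mem_of_not_mem hy' hv)] at hxy
        exact hy.2 (Finset.mem_image.2 ⟨y', hy', hxy.symm⟩)
      · exfalso
        rw [Function.update_self, Function.update_of_ne (ne_of_mem_of_not_mem hx hv)] at hxy
        exact hy.2 (Finset.mem_image.2 ⟨x, hx, hxy⟩)
      · rw [Function.update_of_ne (ne_of_mem_of_not_mem hx hv),
          Function.update_of_ne (ne_of_mem_of_not_mem hy' hv)] at hxy
        exact hf2 hx hy' hxy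

theorem grid2_equitably_list_arborable (k n₁ n₂ : ℕ) (hk : 2 ≤ k) (hn₁ : 2 ≤ n₁) (hn₂ : 2 ≤ n₂) :
    EquitablyListArborable (pathGraph n₁ □ pathGraph n₂) k := by
  intro L hL
  classical
  have hk0 : 0 < k := by omega
  haveI : NeZero k := ⟨by omega⟩
  have hn₂0 : 0 < n₂ := by omega
  set t : ℕ := if k ∣ n₂ then 1 else 0 with ht
  set e : Fin n₁ × Fin n₂ → ℕ := fun v => (v.1 : ℕ) * n₂ + ((v.2 : ℕ) + t * (v.1 : ℕ)) % n₂
    with he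
  have hdivlem : ∀ (r x : ℕ), x < n₂ → (r * n₂ + x) / n₂ = r := by
    intro r x hx
    rw [mul_comm, Nat.mul_add_div hn₂0, Nat.div_eq_of_lt hx, add_zero]
  have he_lt : ∀ v, e v < n₁ * n₂ := by
    intro v
    have h1 : ((v.2 : ℕ) + t * (v.1 : ℕ)) % n₂ < n₂ := Nat.mod_lt _ hn₂0
    have h2 : (v.1 : ℕ) + 1 ≤ n₁ := v.1.isLt
    have h3 : ((v.1 : ℕ) + 1) * n₂ ≤ n₁ * n₂ := Nat.mul_le_mul_right n₂ h2
    have h4 : ((v.1 : ℕ) + 1) * n₂ = (v.1 : ℕ) * n₂ + n₂ := by ring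
    simp only [he]; omega
  have he_inj : Function.Injective e := by
    intro v w hvw
    have hv2 : ((v.2 : ℕ) + t * (v.1 : ℕ)) % n₂ < n₂ := Nat.mod_lt _ hn₂0
    have hw2 : ((w.2 : ℕ) + t * (w.1 : ℕ)) % n₂ < n₂ := Nat.mod_lt _ hn₂0
    rw [he] at hvw
    simp only at hvw
    have h1 : (v.1 : ℕ) = (w.1 : ℕ) := by
      have hv := hdivlem (v.1 : ℕ) _ hv2
      have hw := hdivlem (w.1 : ℕ) _ hw2
      rw [← hv, ← hw, hvw]
    have hp : (v.1 : ℕ) * n₂ = (w.1 : ℕ) * n₂ := by rw [h1]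
    have h2 : ((v.2 : ℕ) + t * (v.1 : ℕ)) % n₂ = ((w.2 : ℕ) + t * (w.1 : ℕ)) % n₂ := by omega
    rw [h1] at h2
    have h3 : (v.2 : ℕ) % n₂ = (w.2 : ℕ) % n₂ :=
      Nat.ModEq.add_right_cancel' (t * (w.1 : ℕ)) h2
    rw [Nat.mod_eq_of_lt v.2.isLt, Nat.mod_eq_of_lt w.2.isLt] at h3
    exact Prod.ext (Fin.val_injective h1) (Fin.val_injective h3)
  set B : Fin n₁ × Fin n₂ → ℕ := fun v => e v / k with hB
  have hfiber : ∀ b, (Finset.univ.filter fun v => B v = b).card ≤ k := by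
    intro b
    have h : (Finset.univ.filter fun v => B v = b).card ≤
        (Finset.Ico (b * k) (b * k + k)).card := by
      refine Finset.card_le_card_of_injOn e (fun v hv => ?_) (fun v _ w _ h => he_inj h)
      rw [Finset.mem_coe, Finset.mem_filter] at hv
      have hBvb : e v / k = b := hv.2
      rw [Finset.mem_coe, Finset.mem_Ico]
      constructor
      · rw [← hBvb]; exact Nat.div_mul_le_self _ _
      · have h5 : e v / k < b + 1 := by omega
        have h6 := (Nat.div_lt_iff_lt_mul hk0).1 h5
        have h7 : (b + 1) * k = b * k + k := by ring
        omega
    rwa [Nat.card_Ico, Nat.add_sub_cancel_left] at h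
  have hrain : ∀ b : ℕ, ∃ f : Fin n₁ × Fin n₂ → ℕ,
      (∀ v ∈ (Finset.univ.filter fun v => B v = b), f v ∈ L v) ∧
      Set.InjOn f (Finset.univ.filter fun v => B v = b) :=
    fun b => exists_rainbow k L (fun v => (hL v).ge) _ (hfiber b)
  choose f hf1 hf2 using hrain
  refine ⟨fun v => f (B v) v, fun v => hf1 (B v) v (by simp), ?_, ?_⟩
  · -- cardinality of colour classes
    intro col
    have hN : Fintype.card (Fin n₁ × Fin n₂) = n₁ * n₂ := by simp
    have hM : (Fintype.card (Fin n₁ × Fin n₂) + k - 1) / k = (n₁ * n₂ - 1) / k + 1 := by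
      rw [hN]
      have hpos : 0 < n₁ * n₂ := Nat.mul_pos (by omega) (by omega)
      have h1 : n₁ * n₂ + k - 1 = (n₁ * n₂ - 1) + k := by omega
      rw [h1, Nat.add_div_right _ hk0]
    rw [hM]
    have h : (Finset.univ.filter fun v => f (B v) v = col).card ≤
        (Finset.range ((n₁ * n₂ - 1) / k + 1)).card := by
      refine Finset.card_le_card_of_injOn B (fun v hv => ?_) ?_
      · rw [Finset.mem_coe, Finset.mem_range]
        have h1 : e v ≤ n₁ * n₂ - 1 := by have := he_lt v; omega
        have h2 : B v ≤ (n₁ * n₂ - 1) / k := Nat.div_le_div_right h1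
        omega
      · intro v hv w hw hBvw
        simp only [Finset.coe_filter, Set.mem_setOf_eq, Finset.mem_univ, true_and] at hv hw
        refine hf2 (B v) ?_ ?_ ?_
        · simp only [Finset.coe_filter, Set.mem_setOf_eq, Finset.mem_univ, true_and]
        · simp only [Finset.coe_filter, Set.mem_setOf_eq, Finset.mem_univ, true_and]
          exact hBvw.symm
        · have hfw : f (B v) w = f (B w) w := by rw [hBvw]
          rw [hv, hfw, hw]
    rwa [Finset.card_range] at h
  · -- acyclicity
    intro col
    set S : Set (Fin n₁ × Fin n₂) := {v | f (B v) v = col} with hSdef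
    have hdiffB : ∀ v w, v ∈ S → w ∈ S → v ≠ w → B v ≠ B w := by
      intro v w hv hw hne hBB
      apply hne
      refine hf2 (B v) ?_ ?_ ?_
      · simp only [Finset.coe_filter, Set.mem_setOf_eq, Finset.mem_univ, true_and]
      · simp only [Finset.coe_filter, Set.mem_setOf_eq, Finset.mem_univ, true_and]
        exact hBB.symm
      · rw [hSdef] at hv hw
        simp only [Set.mem_setOf_eq] at hv hw
        have hfw : f (B v) w = f (B w) w := by rw [hBB]
        rw [hv, hfw, hw]
    -- the key horizontal divisibility fact
    have hkey : ∀ (r : Fin n₁) (c c' : Fin n₂), (r, c) ∈ S → (r, c') ∈ S →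
        (c : ℕ) + 1 = (c' : ℕ) → ¬ (B (r, c) = B (r, c')) := by
      intro r c c' hc hc' hcc
      refine hdiffB _ _ hc hc' (fun h => ?_)
      have := congrArg (fun p : Fin n₁ × Fin n₂ => (p.2 : ℕ)) h
      simp only at this
      omega
    by_cases hdvd : k ∣ n₂
    · have ht1 : t = 1 := if_pos hdvd
      refine grid_acyclic hk hn₂ S (fun r => -((r : ℕ) : ZMod k) - 1) ?_ ?_
      · intro r c c' hc hc' hcc
        have hBne := hkey r c c' hc hc' hcc
        -- show k ∣ (c + r + 1)
        have hdvd1 : k ∣ ((c : ℕ) + (r : ℕ) + 1) := by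
          by_contra hfin
          apply hBne
          set m := (c : ℕ) + (r : ℕ) with hm
          have hme : ((c : ℕ) + t * (r : ℕ)) = m := by rw [ht1]; ring
          have hme' : ((c' : ℕ) + t * (r : ℕ)) = m + 1 := by rw [ht1]; omega
          have he1 : e (r, c) = (r : ℕ) * n₂ + m % n₂ := by simp only [he, hme]
          have he2 : e (r, c') = (r : ℕ) * n₂ + (m + 1) % n₂ := by simp only [he, hme']
          have hcase : m % n₂ ≠ n₂ - 1 := by
            intro hcase
            apply hfin
            have h1 : (m + 1) % n₂ = 0 := by
              have := Nat.add_mod m 1 n₂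
              rw [hcase] at this
              have h2 : (n₂ - 1 + 1 % n₂) % n₂ = 0 := by
                rw [Nat.mod_eq_of_lt (show 1 < n₂ by omega)]
                have : n₂ - 1 + 1 = n₂ := by omega
                rw [this, Nat.mod_self]
              omega
            exact dvd_trans hdvd (Nat.dvd_of_mod_eq_zero h1)
          have hmod : (m + 1) % n₂ = m % n₂ + 1 := by
            have h1 := Nat.add_mod m 1 n₂
            have h2 : 1 % n₂ = 1 := Nat.mod_eq_of_lt (by omega)
            have h3 : m % n₂ < n₂ := Nat.mod_lt _ hn₂0
            rw [h2] at h1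
            rw [h1, Nat.mod_eq_of_lt (by omega)]
          -- so e (r,c') = e (r,c) + 1 and k does not divide e (r,c) + 1
          have hsucc : e (r, c') = e (r, c) + 1 := by rw [he1, he2, hmod]; omega
          have hknd : ¬ k ∣ (e (r, c) + 1) := by
            intro hdd
            apply hfin
            -- k ∣ r*n₂ + m%n₂ + 1  and  k ∣ n₂  gives  k ∣ m + 1
            have h1 : k ∣ (r : ℕ) * n₂ := Dvd.dvd.mul_left hdvd _
            have h2 : k ∣ m % n₂ + 1 := by
              have h3 : e (r, c) + 1 = (r : ℕ) * n₂ + (m % n₂ + 1) := by rw [he1]; ring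
              rw [h3] at hdd
              exact (Nat.dvd_add_right h1).1 hdd
            have h4 : m + 1 = n₂ * (m / n₂) + (m % n₂ + 1) := by
              have := Nat.div_add_mod m n₂
              omega
            rw [h4]
            exact Dvd.dvd.add (Dvd.dvd.mul_right hdvd _) h2
          show e (r, c) / k = e (r, c') / k
          rw [hsucc, Nat.succ_div, if_neg hknd, add_zero]
        -- conclude in ZMod k
        have h0 : (((c : ℕ) + (r : ℕ) + 1 : ℕ) : ZMod k) = 0 :=
          (ZMod.natCast_eq_zero_iff _ _).2 hdvd1
        push_cast at h0
        linear_combination h0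
      · intro r hcon
        haveI : Fact (1 < k) := ⟨hk⟩
        have h10 : (1 : ZMod k) = 0 := by push_cast at hcon; linear_combination hcon
        exact one_ne_zero h10
    · have ht0 : t = 0 := if_neg hdvd
      refine grid_acyclic hk hn₂ S (fun r => -(((r * n₂ : ℕ)) : ZMod k) - 1) ?_ ?_
      · intro r c c' hc hc' hcc
        have hBne := hkey r c c' hc hc' hcc
        have hdvd1 : k ∣ ((r : ℕ) * n₂ + (c : ℕ) + 1) := by
          by_contra hfin
          apply hBne
          have hme : ((c : ℕ) + t * (r : ℕ)) % n₂ = (c : ℕ) := by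
            rw [ht0]; simp [Nat.mod_eq_of_lt c.isLt]
          have hme' : ((c' : ℕ) + t * (r : ℕ)) % n₂ = (c : ℕ) + 1 := by
            rw [ht0]; simp only [Nat.zero_mul, Nat.add_zero]
            have := c'.isLt
            rw [Nat.mod_eq_of_lt (by omega)]
            omega
          have he1 : e (r, c) = (r : ℕ) * n₂ + (c : ℕ) := by simp only [he, hme]
          have he2 : e (r, c') = (r : ℕ) * n₂ + (c : ℕ) + 1 := by
            simp only [he, hme']; ring
          have hknd : ¬ k ∣ (e (r, c) + 1) := by rw [he1]; exact hfin
          show e (r, c) / k = e (r, c') / k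
          rw [he2, show (r:ℕ) * n₂ + (c:ℕ) + 1 = e (r,c) + 1 by rw [he1],
            Nat.succ_div, if_neg hknd, add_zero]
        have h0 : (((r : ℕ) * n₂ + (c : ℕ) + 1 : ℕ) : ZMod k) = 0 :=
          (ZMod.natCast_eq_zero_iff _ _).2 hdvd1
        push_cast at h0 ⊢
        linear_combination h0
      · intro r hcon
        apply hdvd
        rw [← ZMod.natCast_eq_zero_iff]
        push_cast at hcon
        linear_combination hcon
end

section
/- Let k be an integer with k ≥ 8. Then every 5-dimensional grid P_{n₁} □ P_{n₂} □ P_{n₃} □ P_{n₄} □ P_{n₅} (all n_i ≥ 2) is equitably k-list arborable. -/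
open SimpleGraph Finset

namespace GridArb


variable {V : Type*} {G : SimpleGraph V}

/-- No cycle of `G` has all its vertices in `s`. -/
def NoCycleIn (G : SimpleGraph V) (s : Set V) : Prop :=
  ∀ ⦃v : V⦄ (w : G.Walk v v), w.IsCycle → ¬ (∀ x ∈ w.support, x ∈ s)

lemma exists_two_nbrs {v : V} {w : G.Walk v v} (hw : w.IsCycle) :
    ∃ y z : V, y ≠ z ∧ G.Adj v y ∧ G.Adj v z ∧ y ∈ w.support ∧ z ∈ w.support := by
  have h3 := hw.three_le_length
  cases w with
  | nil => exact absurd hw Walk.IsCycle.not_of_nil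
  | cons h q =>
    rename_i b
    rw [Walk.cons_isCycle_iff] at hw
    obtain ⟨hq, he⟩ := hw
    -- consider q.reverse : G.Walk v b
    have hqlen : 2 ≤ q.length := by
      simp only [Walk.length_cons] at h3; omega
    cases hr : q.reverse with
    | nil =>
      have : q.length = 0 := by
        have := congrArg Walk.length hr
        simpa using this
      omega
    | cons h' r =>
      rename_i z
      refine ⟨b, z, ?_, h, h', ?_, ?_⟩
      · rintro rfl
        apply he
        have : s(v, b) ∈ q.reverse.edges := by rw [hr]; simp
        rw [Walk.edges_reverse, List.mem_reverse] at this
        exact this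
      · simp
      · have hz : z ∈ q.reverse.support := by rw [hr]; simp
        rw [Walk.support_reverse, List.mem_reverse] at hz
        simp [hz]

lemma noCycleIn_of_subsingleton {s : Set V} (hs : s.Subsingleton) : NoCycleIn G s := by
  intro v w hw hall
  obtain ⟨y, z, hyz, hvy, hvz, hy, hz⟩ := exists_two_nbrs hw
  exact hyz (hs (hall y hy) (hall z hz))

lemma NoCycleIn.insert_of_subsingleton [DecidableEq V] {s : Set V} {x : V} (hs : NoCycleIn G s)
    (hnbr : {y | y ∈ s ∧ G.Adj x y}.Subsingleton) :
    NoCycleIn G (insert x s) := by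
  intro v w hw hall
  by_cases hx : x ∈ w.support
  · have hw' : (w.rotate x hx).IsCycle := hw.rotate hx
    have hsupp : ∀ y ∈ (w.rotate x hx).support, y ∈ insert x s := by
      intro y hy
      rw [Walk.mem_support_iff] at hy
      rcases hy with rfl | hy
      · exact Set.mem_insert _ _
      · have hperm := Walk.support_rotate w x hx
        have : y ∈ w.support.tail := (hperm.perm.mem_iff).mp hy
        exact hall y (List.mem_of_mem_tail this)
    obtain ⟨y, z, hyz, hxy, hxz, hy, hz⟩ := exists_two_nbrs hw'
    have hys : y ∈ s := by
      rcases hsupp y hy with h | h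
      · exact absurd h.symm (G.ne_of_adj hxy)
      · exact h
    have hzs : z ∈ s := by
      rcases hsupp z hz with h | h
      · exact absurd h.symm (G.ne_of_adj hxz)
      · exact h
    exact hyz (hnbr ⟨hys, hxy⟩ ⟨hzs, hxz⟩)
  · refine hs w hw (fun y hy => ?_)
    rcases hall y hy with h | h
    · exact absurd (h ▸ hy) hx
    · exact h

lemma isAcyclic_induce_of_noCycleIn {s : Set V} (h : NoCycleIn G s) :
    (G.induce s).IsAcyclic := by
  intro v w hw
  have hinj : Function.Injective (SimpleGraph.Embedding.induce (G := G) s).toHom := by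
    intro x y hxy
    exact Subtype.ext (by simpa using hxy)
  have hw' : (w.map (SimpleGraph.Embedding.induce (G := G) s).toHom).IsCycle := hw.map hinj
  apply h _ hw'
  intro x hx
  rw [Walk.support_map] at hx
  obtain ⟨y, hy, rfl⟩ := List.mem_map.mp hx
  exact y.2





section Greedy

variable [DecidableEq V]

lemma exists_greedy_fun (A : V → Finset ℕ) :
    ∀ (xs : List V), xs.Nodup → ∀ (used : Finset ℕ),
      (∀ j (h : j < xs.length), used.card + j + 1 ≤ (A (xs.get ⟨j, h⟩)).card) →
      ∃ g : V → ℕ, (∀ v ∈ xs, g v ∈ A v ∧ g v ∉ used) ∧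
        (∀ u ∈ xs, ∀ v ∈ xs, u ≠ v → g u ≠ g v) := by
  intro xs
  induction xs with
  | nil =>
    intro _ used _
    exact ⟨fun _ => 0, by simp, by simp⟩
  | cons x xs ih =>
    intro hnd used hA
    have h0 : used.card + 1 ≤ (A x).card := by simpa using hA 0 (by simp)
    have hne : (A x \ used).Nonempty := by
      rw [← Finset.card_pos]
      have := Finset.le_card_sdiff used (A x)
      omega
    obtain ⟨col, hcol⟩ := hne
    rw [Finset.mem_sdiff] at hcol
    have hnd' : xs.Nodup := hnd.of_cons
    obtain ⟨g', hg1, hg2⟩ := ih hnd' (insert col used) (fun j h => by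
      have h2 := hA (j + 1) (by simpa using Nat.succ_lt_succ h)
      have hins := Finset.card_insert_le col used
      simp only [List.get_cons_succ] at h2
      omega)
    have hxnot : x ∉ xs := by
      rw [List.nodup_cons] at hnd; exact hnd.1
    refine ⟨Function.update g' x col, ?_, ?_⟩
    · intro v hv
      rcases List.mem_cons.mp hv with rfl | hv
      · rw [Function.update_self]
        exact ⟨hcol.1, hcol.2⟩
      · have hvx : v ≠ x := fun h => hxnot (h ▸ hv)
        rw [Function.update_of_ne hvx]
        have := hg1 v hv
        exact ⟨this.1, fun hu => this.2 (Finset.mem_insert_of_mem hu)⟩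
    · intro u hu v hv huv
      by_cases hux : u = x <;> by_cases hvx : v = x
      · exact absurd (hux.trans hvx.symm) huv
      · subst hux
        have hv' : v ∈ xs := (List.mem_cons.mp hv).resolve_left hvx
        rw [Function.update_self, Function.update_of_ne hvx]
        intro h
        exact (hg1 v hv').2 (h ▸ Finset.mem_insert_self col used)
      · subst hvx
        have hu' : u ∈ xs := (List.mem_cons.mp hu).resolve_left hux
        rw [Function.update_self, Function.update_of_ne hux]
        intro h
        exact (hg1 u hu').2 (h.symm ▸ Finset.mem_insert_self col used)
      · have hu' : u ∈ xs := (List.mem_cons.mp hu).resolve_left hux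
        have hv' : v ∈ xs := (List.mem_cons.mp hv).resolve_left hvx
        rw [Function.update_of_ne hux, Function.update_of_ne hvx]
        exact hg2 u hu' v hv' huv

end Greedy

section Main

variable [DecidableEq V] [DecidableRel G.Adj]

lemma main_color (k : ℕ) (hk : 3 ≤ k)
    (HS : ∀ U : Finset V, k + 1 ≤ U.card →
      ∃ xs : List V, xs.Nodup ∧ xs.length = k ∧ (∀ v ∈ xs, v ∈ U) ∧
        ∀ j (hj : j < xs.length),
          (((U \ xs.toFinset)).filter (fun z => G.Adj (xs.get ⟨j, hj⟩) z)).card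
            ≤ 2 * (k - 1 - j) + 1) :
    ∀ (U : Finset V) (m : ℕ) (L : V → Finset ℕ), U.card ≤ k * m → (∀ v, k ≤ (L v).card) →
      ∃ c : V → ℕ, (∀ v ∈ U, c v ∈ L v) ∧
        (∀ col, (U.filter (fun v => c v = col)).card ≤ m) ∧
        (∀ col, NoCycleIn G {v | v ∈ U ∧ c v = col}) := by
  intro U
  induction U using Finset.strongInduction with
  | _ U ih =>
    intro m L hUm hL
    by_cases hsmall : U.card ≤ k
    · -- base case: all distinct colours
      obtain ⟨g, hg1, hg2⟩ := exists_greedy_fun L U.toList U.nodup_toList ∅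
        (fun j h => by
          have hj : j < U.card := by simpa using h
          have := hL (U.toList.get ⟨j, h⟩)
          simp only [Finset.card_empty]
          omega)
      refine ⟨g, fun v hv => (hg1 v (Finset.mem_toList.mpr hv)).1, ?_, ?_⟩
      · intro col
        have h1 : (U.filter (fun v => g v = col)).card ≤ 1 := by
          rw [Finset.card_le_one]
          intro a ha b hb
          rw [Finset.mem_filter] at ha hb
          by_contra hab
          exact hg2 a (Finset.mem_toList.mpr ha.1) b (Finset.mem_toList.mpr hb.1) hab
            (ha.2.trans hb.2.symm)
        rcases Finset.eq_empty_or_nonempty U with rfl | hUne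
        · simpa using Nat.zero_le m
        · have hpos := Finset.card_pos.mpr hUne
          have : 1 ≤ m := by
            rcases Nat.eq_zero_or_pos m with rfl | h
            · rw [Nat.mul_zero] at hUm; omega
            · exact h
          omega
      · intro col
        apply noCycleIn_of_subsingleton
        intro a ha b hb
        by_contra hab
        exact hg2 a (Finset.mem_toList.mpr ha.1) b (Finset.mem_toList.mpr hb.1) hab
          (ha.2.trans hb.2.symm)
    · -- inductive step
      push_neg at hsmall
      obtain ⟨xs, hnd, hlen, hmem, hout⟩ := HS U hsmall
      set S : Finset V := xs.toFinset with hS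
      have hScard : S.card = k := by rw [hS, List.card_toFinset, hnd.dedup]; exact hlen
      have hSU : S ⊆ U := by intro v hv; exact hmem v (List.mem_toFinset.mp hv)
      have hSne : S.Nonempty := by
        rw [← Finset.card_pos, hScard]; omega
      have hss : U \ S ⊂ U := Finset.sdiff_ssubset hSU hSne
      have hm2 : 2 ≤ m := by
        by_contra hm
        push_neg at hm
        interval_cases m <;> simp_all <;> omega
      have hU'card : (U \ S).card = U.card - k := by rw [Finset.card_sdiff_of_subset hSU, hScard]
      have hU'le : (U \ S).card ≤ k * (m - 1) := by
        have : k * (m - 1) + k = k * m := by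
          have : m - 1 + 1 = m := by omega
          rw [← this, Nat.mul_succ, this]
        omega
      obtain ⟨c₀, hc₀mem, hc₀card, hc₀cyc⟩ := ih (U \ S) hss (m - 1) L hU'le hL
      set nbrs : V → Finset V := fun x => (U \ S).filter (fun z => G.Adj x z) with hnbrs
      set Bad : V → Finset ℕ := fun x =>
        ((nbrs x).image c₀).filter (fun col => 2 ≤ ((nbrs x).filter (fun z => c₀ z = col)).card)
        with hBad
      have hBadcard : ∀ (x : V), 2 * (Bad x).card ≤ (nbrs x).card := by
        intro x
        have hsum : (nbrs x).card
            = ∑ col ∈ (nbrs x).image c₀, ((nbrs x).filter (fun z => c₀ z = col)).card :=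
          Finset.card_eq_sum_card_image c₀ (nbrs x)
        have h1 : ∑ col ∈ Bad x, 2 ≤ ∑ col ∈ Bad x, ((nbrs x).filter (fun z => c₀ z = col)).card := by
          apply Finset.sum_le_sum
          intro col hcol
          exact (Finset.mem_filter.mp hcol).2
        have h2 : ∑ col ∈ Bad x, ((nbrs x).filter (fun z => c₀ z = col)).card
            ≤ ∑ col ∈ (nbrs x).image c₀, ((nbrs x).filter (fun z => c₀ z = col)).card := by
          apply Finset.sum_le_sum_of_subset (Finset.filter_subset _ _)
        simp only [Finset.sum_const, smul_eq_mul] at h1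
        omega
      obtain ⟨g, hg1, hg2⟩ := exists_greedy_fun (fun x => L x \ Bad x) xs hnd ∅
        (fun j hj => by
          have hb := hBadcard (xs.get ⟨j, hj⟩)
          have ho := hout j hj
          have hnb : nbrs (xs.get ⟨j, hj⟩)
              = (U \ S).filter (fun z => G.Adj (xs.get ⟨j, hj⟩) z) := rfl
          rw [hnb] at hb
          have hLb := hL (xs.get ⟨j, hj⟩)
          have hsd := Finset.le_card_sdiff (Bad (xs.get ⟨j, hj⟩)) (L (xs.get ⟨j, hj⟩))
          have hjk : j < k := by rw [← hlen]; exact hj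
          simp only [Finset.card_empty]
          omega)
      refine ⟨fun v => if v ∈ S then g v else c₀ v, ?_, ?_, ?_⟩
      · intro v hv
        by_cases hvS : v ∈ S
        · simp only [hvS, if_true]
          have := (hg1 v (List.mem_toFinset.mp hvS)).1
          exact (Finset.mem_sdiff.mp this).1
        · simp only [hvS, if_false]
          exact hc₀mem v (Finset.mem_sdiff.mpr ⟨hv, hvS⟩)
      · intro col
        show (U.filter (fun v => (if v ∈ S then g v else c₀ v) = col)).card ≤ m
        have hUsplit : U = (U \ S) ∪ S := (Finset.sdiff_union_of_subset hSU).symm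
        rw [hUsplit, Finset.filter_union]
        have hc1 : ((U \ S).filter (fun v => (if v ∈ S then g v else c₀ v) = col)).card ≤ m - 1 := by
          have : (U \ S).filter (fun v => (if v ∈ S then g v else c₀ v) = col)
              = (U \ S).filter (fun v => c₀ v = col) := by
            apply Finset.filter_congr
            intro v hv
            have : v ∉ S := (Finset.mem_sdiff.mp hv).2
            simp [this]
          rw [this]
          exact hc₀card col
        have hc2 : (S.filter (fun v => (if v ∈ S then g v else c₀ v) = col)).card ≤ 1 := by
          rw [Finset.card_le_one]
          intro a ha b hb
          rw [Finset.mem_filter] at ha hb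
          have haS := ha.1; have hbS := hb.1
          rw [if_pos haS] at ha; rw [if_pos hbS] at hb
          by_contra hab
          exact hg2 a (List.mem_toFinset.mp haS) b (List.mem_toFinset.mp hbS) hab
            (ha.2.trans hb.2.symm)
        calc _ ≤ _ := Finset.card_union_le _ _
          _ ≤ (m - 1) + 1 := by omega
          _ ≤ m := by omega
      · intro col
        show NoCycleIn G {v | v ∈ U ∧ (if v ∈ S then g v else c₀ v) = col}
        by_cases hex : ∃ x ∈ xs, g x = col
        · obtain ⟨x, hxmem, hgx⟩ := hex
          have hxS : x ∈ S := List.mem_toFinset.mpr hxmem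
          have huniq : ∀ y ∈ xs, g y = col → y = x := by
            intro y hy hgy
            by_contra hyx
            exact hg2 y hy x hxmem hyx (hgy.trans hgx.symm)
          have hset : {v | v ∈ U ∧ (if v ∈ S then g v else c₀ v) = col}
              = insert x {v | v ∈ (U \ S) ∧ c₀ v = col} := by
            ext v
            simp only [Set.mem_setOf_eq, Set.mem_insert_iff]
            constructor
            · rintro ⟨hvU, hvc⟩
              by_cases hvS : v ∈ S
              · rw [if_pos hvS] at hvc
                exact Or.inl (huniq v (List.mem_toFinset.mp hvS) hvc)
              · rw [if_neg hvS] at hvc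
                exact Or.inr ⟨Finset.mem_sdiff.mpr ⟨hvU, hvS⟩, hvc⟩
            · rintro (rfl | ⟨hv, hvc⟩)
              · exact ⟨hSU hxS, by rw [if_pos hxS]; exact hgx⟩
              · have hvS : v ∉ S := (Finset.mem_sdiff.mp hv).2
                exact ⟨(Finset.mem_sdiff.mp hv).1, by rw [if_neg hvS]; exact hvc⟩
          rw [hset]
          apply (hc₀cyc col).insert_of_subsingleton
          -- neighbours of x in the old class form a subsingleton
          have hcolBad : col ∉ Bad x := by
            have := (hg1 x hxmem).1
            rw [← hgx]
            exact (Finset.mem_sdiff.mp this).2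
          have hF : ((nbrs x).filter (fun z => c₀ z = col)).card ≤ 1 := by
            by_contra hF
            push_neg at hF
            have h2 : 2 ≤ ((nbrs x).filter (fun z => c₀ z = col)).card := hF
            have hne : ((nbrs x).filter (fun z => c₀ z = col)).Nonempty := by
              rw [← Finset.card_pos]; omega
            obtain ⟨y, hy⟩ := hne
            rw [Finset.mem_filter] at hy
            apply hcolBad
            rw [hBad]
            simp only [Finset.mem_filter]
            exact ⟨Finset.mem_image.mpr ⟨y, hy.1, hy.2⟩, h2⟩
          intro y hy z hz
          simp only [Set.mem_setOf_eq] at hy hz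
          have hyF : y ∈ (nbrs x).filter (fun z => c₀ z = col) := by
            rw [Finset.mem_filter, hnbrs]
            exact ⟨Finset.mem_filter.mpr ⟨hy.1.1, hy.2⟩, hy.1.2⟩
          have hzF : z ∈ (nbrs x).filter (fun z => c₀ z = col) := by
            rw [Finset.mem_filter, hnbrs]
            exact ⟨Finset.mem_filter.mpr ⟨hz.1.1, hz.2⟩, hz.1.2⟩
          exact Finset.card_le_one.mp hF y hyF z hzF
        · push_neg at hex
          have hset : {v | v ∈ U ∧ (if v ∈ S then g v else c₀ v) = col}
              = {v | v ∈ (U \ S) ∧ c₀ v = col} := by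
            ext v
            simp only [Set.mem_setOf_eq]
            constructor
            · rintro ⟨hvU, hvc⟩
              by_cases hvS : v ∈ S
              · rw [if_pos hvS] at hvc
                exact absurd hvc (hex v (List.mem_toFinset.mp hvS))
              · rw [if_neg hvS] at hvc
                exact ⟨Finset.mem_sdiff.mpr ⟨hvU, hvS⟩, hvc⟩
            · rintro ⟨hv, hvc⟩
              have hvS : v ∉ S := (Finset.mem_sdiff.mp hv).2
              exact ⟨(Finset.mem_sdiff.mp hv).1, by rw [if_neg hvS]; exact hvc⟩
          rw [hset]
          exact hc₀cyc col

end Main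



section Grid

variable {n₁ n₂ n₃ n₄ n₅ : ℕ}

/-- Rank function: positional encoding of grid coordinates. -/
def ρ (v : ((((Fin n₁ × Fin n₂) × Fin n₃) × Fin n₄) × Fin n₅)) : ℕ :=
  (((v.1.1.1.1.val * n₂ + v.1.1.1.2.val) * n₃ + v.1.1.2.val) * n₄ + v.1.2.val) * n₅ + v.2.val

lemma digit_inj {n a a' b b' : ℕ} (hb : b < n) (hb' : b' < n)
    (h : a * n + b = a' * n + b') : a = a' ∧ b = b' := by
  have hbb : b = b' := by
    have h1 : (a * n + b) % n = (a' * n + b') % n := by rw [h]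
    rw [Nat.mul_comm a n, Nat.mul_comm a' n] at h1
    rwa [Nat.mul_add_mod, Nat.mul_add_mod, Nat.mod_eq_of_lt hb, Nat.mod_eq_of_lt hb'] at h1
  subst hbb
  have hmul : a * n = a' * n := by omega
  have hn : 0 < n := by omega
  exact ⟨Nat.eq_of_mul_eq_mul_right hn hmul, rfl⟩

lemma rho_injective :
    Function.Injective (ρ (n₁ := n₁) (n₂ := n₂) (n₃ := n₃) (n₄ := n₄) (n₅ := n₅)) := by
  rintro ⟨⟨⟨⟨a1, a2⟩, a3⟩, a4⟩, a5⟩ ⟨⟨⟨⟨b1, b2⟩, b3⟩, b4⟩, b5⟩ h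
  simp only [ρ] at h
  obtain ⟨h, h5⟩ := digit_inj a5.isLt b5.isLt h
  obtain ⟨h, h4⟩ := digit_inj a4.isLt b4.isLt h
  obtain ⟨h, h3⟩ := digit_inj a3.isLt b3.isLt h
  obtain ⟨h1, h2⟩ := digit_inj a2.isLt b2.isLt h
  simp only [Prod.mk.injEq]
  exact ⟨⟨⟨⟨Fin.ext h1, Fin.ext h2⟩, Fin.ext h3⟩, Fin.ext h4⟩, Fin.ext h5⟩

lemma grid_adj_rho {u z : ((((Fin n₁ × Fin n₂) × Fin n₃) × Fin n₄) × Fin n₅)}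
    (h : (boxProd (boxProd (boxProd (boxProd (pathGraph n₁) (pathGraph n₂)) (pathGraph n₃)) (pathGraph n₄)) (pathGraph n₅)).Adj u z) :
    (ρ z : ℤ) - ρ u = 1 ∨ (ρ z : ℤ) - ρ u = -1 ∨
    (ρ z : ℤ) - ρ u = (n₅ : ℤ) ∨ (ρ z : ℤ) - ρ u = -(n₅ : ℤ) ∨
    (ρ z : ℤ) - ρ u = ((n₄ : ℤ) * n₅) ∨ (ρ z : ℤ) - ρ u = -((n₄ : ℤ) * n₅) ∨
    (ρ z : ℤ) - ρ u = ((n₃ : ℤ) * n₄ * n₅) ∨ (ρ z : ℤ) - ρ u = -((n₃ : ℤ) * n₄ * n₅) ∨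
    (ρ z : ℤ) - ρ u = ((n₂ : ℤ) * n₃ * n₄ * n₅) ∨ (ρ z : ℤ) - ρ u = -((n₂ : ℤ) * n₃ * n₄ * n₅) := by
  obtain ⟨⟨⟨⟨a1, a2⟩, a3⟩, a4⟩, a5⟩ := u
  obtain ⟨⟨⟨⟨b1, b2⟩, b3⟩, b4⟩, b5⟩ := z
  simp only [boxProd_adj, Prod.mk.injEq, pathGraph_adj] at h
  simp only [ρ]
  rcases h with ⟨⟨⟨⟨hc | hc, rfl⟩ | ⟨hc | hc, rfl⟩, rfl⟩ | ⟨hc | hc, rfl, rfl⟩, rfl⟩ |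
    ⟨hc | hc, ⟨rfl, rfl⟩, rfl⟩, rfl⟩ | ⟨hc | hc, ⟨⟨rfl, rfl⟩, rfl⟩, rfl⟩
  · -- coord 1, plus
    have hq : ((a1 : ℕ) : ℤ) + 1 = ((b1 : ℕ) : ℤ) := by exact_mod_cast hc
    refine Or.inr (Or.inr (Or.inr (Or.inr (Or.inr (Or.inr (Or.inr (Or.inr (Or.inl ?_))))))))
    push_cast
    linear_combination (-(n₂ : ℤ) * n₃ * n₄ * n₅) * hq
  · -- coord 1, minus
    have hq : ((b1 : ℕ) : ℤ) + 1 = ((a1 : ℕ) : ℤ) := by exact_mod_cast hc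
    refine Or.inr (Or.inr (Or.inr (Or.inr (Or.inr (Or.inr (Or.inr (Or.inr (Or.inr ?_))))))))
    push_cast
    linear_combination ((n₂ : ℤ) * n₃ * n₄ * n₅) * hq
  · -- coord 2, plus
    have hq : ((a2 : ℕ) : ℤ) + 1 = ((b2 : ℕ) : ℤ) := by exact_mod_cast hc
    refine Or.inr (Or.inr (Or.inr (Or.inr (Or.inr (Or.inr (Or.inl ?_))))))
    push_cast
    linear_combination (-(n₃ : ℤ) * n₄ * n₅) * hq
  · -- coord 2, minus
    have hq : ((b2 : ℕ) : ℤ) + 1 = ((a2 : ℕ) : ℤ) := by exact_mod_cast hc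
    refine Or.inr (Or.inr (Or.inr (Or.inr (Or.inr (Or.inr (Or.inr (Or.inl ?_)))))))
    push_cast
    linear_combination ((n₃ : ℤ) * n₄ * n₅) * hq
  · -- coord 3, plus
    have hq : ((a3 : ℕ) : ℤ) + 1 = ((b3 : ℕ) : ℤ) := by exact_mod_cast hc
    refine Or.inr (Or.inr (Or.inr (Or.inr (Or.inl ?_))))
    push_cast
    linear_combination (-(n₄ : ℤ) * n₅) * hq
  · -- coord 3, minus
    have hq : ((b3 : ℕ) : ℤ) + 1 = ((a3 : ℕ) : ℤ) := by exact_mod_cast hc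
    refine Or.inr (Or.inr (Or.inr (Or.inr (Or.inr (Or.inl ?_)))))
    push_cast
    linear_combination ((n₄ : ℤ) * n₅) * hq
  · -- coord 4, plus
    have hq : ((a4 : ℕ) : ℤ) + 1 = ((b4 : ℕ) : ℤ) := by exact_mod_cast hc
    refine Or.inr (Or.inr (Or.inl ?_))
    push_cast
    linear_combination (-(n₅ : ℤ)) * hq
  · -- coord 4, minus
    have hq : ((b4 : ℕ) : ℤ) + 1 = ((a4 : ℕ) : ℤ) := by exact_mod_cast hc
    refine Or.inr (Or.inr (Or.inr (Or.inl ?_)))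
    push_cast
    linear_combination ((n₅ : ℤ)) * hq
  · -- coord 5, plus
    have hq : ((a5 : ℕ) : ℤ) + 1 = ((b5 : ℕ) : ℤ) := by exact_mod_cast hc
    refine Or.inl ?_
    push_cast
    linear_combination -hq
  · -- coord 5, minus
    have hq : ((b5 : ℕ) : ℤ) + 1 = ((a5 : ℕ) : ℤ) := by exact_mod_cast hc
    refine Or.inr (Or.inl ?_)
    push_cast
    linear_combination (1 : ℤ) * hq

end Grid


/-- The 5-dimensional grid graph. -/
abbrev gridG (n₁ n₂ n₃ n₄ n₅ : ℕ) :
    SimpleGraph ((((Fin n₁ × Fin n₂) × Fin n₃) × Fin n₄) × Fin n₅) :=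
  boxProd (boxProd (boxProd (boxProd (pathGraph n₁) (pathGraph n₂)) (pathGraph n₃)) (pathGraph n₄)) (pathGraph n₅)

section Grid2
variable {n₁ n₂ n₃ n₄ n₅ : ℕ}

lemma card_insert_le' {s : Finset ℤ} {a : ℤ} {n : ℕ} (h : s.card ≤ n) :
    (insert a s).card ≤ n + 1 :=
  le_trans (Finset.card_insert_le _ _) (by omega)


variable [DecidableRel (gridG n₁ n₂ n₃ n₄ n₅).Adj]

lemma out_card_le {W : Finset ((((Fin n₁ × Fin n₂) × Fin n₃) × Fin n₄) × Fin n₅)} {x : ((((Fin n₁ × Fin n₂) × Fin n₃) × Fin n₄) × Fin n₅)} {F : Finset ℤ}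
    (hmem : ∀ z ∈ W, (gridG n₁ n₂ n₃ n₄ n₅).Adj x z → (ρ z : ℤ) ∈ F) :
    (W.filter (fun z => (gridG n₁ n₂ n₃ n₄ n₅).Adj x z)).card ≤ F.card := by
  apply Finset.card_le_card_of_injOn (fun z => ((ρ z : ℤ)))
  · intro z hz
    rw [Finset.mem_coe, Finset.mem_filter] at hz
    exact hmem z hz.1 hz.2
  · exact fun y _ z _ h => rho_injective (Nat.cast_injective (R := ℤ) h)

section Facts
variable (hn₂ : 2 ≤ n₂) (hn₃ : 2 ≤ n₃) (hn₄ : 2 ≤ n₄) (hn₅ : 2 ≤ n₅)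

include hn₅ in
lemma zf5 : (2 : ℤ) ≤ (n₅ : ℤ) := by exact_mod_cast hn₅

include hn₄ in
lemma zf45 : 2 * (n₅ : ℤ) ≤ (n₄ : ℤ) * n₅ := by
  have h : 2 * n₅ ≤ n₄ * n₅ := Nat.mul_le_mul_right _ hn₄
  exact_mod_cast h

include hn₃ in
lemma zf345 : 2 * ((n₄ : ℤ) * n₅) ≤ (n₃ : ℤ) * n₄ * n₅ := by
  have h : 2 * (n₄ * n₅) ≤ n₃ * (n₄ * n₅) := Nat.mul_le_mul_right _ hn₃
  push_cast at h ⊢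
  linarith

include hn₂ in
lemma zf2345 : 2 * ((n₃ : ℤ) * n₄ * n₅) ≤ (n₂ : ℤ) * n₃ * n₄ * n₅ := by
  have h : 2 * (n₃ * (n₄ * n₅)) ≤ n₂ * (n₃ * (n₄ * n₅)) := Nat.mul_le_mul_right _ hn₂
  push_cast at h ⊢
  linarith

end Facts

section OL

variable {U S : Finset ((((Fin n₁ × Fin n₂) × Fin n₃) × Fin n₄) × Fin n₅)} {x : ((((Fin n₁ × Fin n₂) × Fin n₃) × Fin n₄) × Fin n₅)}
  (hn₂ : 2 ≤ n₂) (hn₃ : 2 ≤ n₃) (hn₄ : 2 ≤ n₄) (hn₅ : 2 ≤ n₅)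

include hn₂ hn₃ hn₄ hn₅

/-- Generic: if everything above `x` (in rank) is in `S`, then `x` has at most 5
neighbours outside `S`. -/
lemma out_le_five (hxU : x ∈ U) (hP2 : ∀ z ∈ U, ρ x < ρ z → z ∈ S) :
    ((U \ S).filter (fun z => (gridG n₁ n₂ n₃ n₄ n₅).Adj x z)).card ≤ 5 := by
  have h2 := zf5 hn₅
  have h3 := zf45 (n₅ := n₅) hn₄
  have h4 := zf345 (n₄ := n₄) (n₅ := n₅) hn₃
  have h5 := zf2345 (n₃ := n₃) (n₄ := n₄) (n₅ := n₅) hn₂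
  refine le_trans (out_card_le (F := {(ρ x : ℤ) - 1, (ρ x : ℤ) - n₅, (ρ x : ℤ) - (n₄ : ℤ) * n₅,
      (ρ x : ℤ) - (n₃ : ℤ) * n₄ * n₅, (ρ x : ℤ) - (n₂ : ℤ) * n₃ * n₄ * n₅}) ?_) ?_
  · intro z hz hadj
    rw [Finset.mem_sdiff] at hz
    have hlt : ¬ (ρ x < ρ z) := fun hlt => hz.2 (hP2 z hz.1 hlt)
    have hltz : ¬ ((ρ x : ℤ) < (ρ z : ℤ)) := fun hlt' => hlt (by exact_mod_cast hlt')
    simp only [Finset.mem_insert, Finset.mem_singleton]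
    rcases grid_adj_rho hadj with h|h|h|h|h|h|h|h|h|h
    · exact absurd (by linarith) hltz
    · left; linarith
    · exact absurd (by linarith) hltz
    · right; left; linarith
    · exact absurd (by linarith) hltz
    · right; right; left; linarith
    · exact absurd (by linarith) hltz
    · right; right; right; left; linarith
    · exact absurd (by linarith) hltz
    · right; right; right; right; linarith
  · exact card_insert_le' (card_insert_le' (card_insert_le' (card_insert_le'
      (le_of_eq (Finset.card_singleton _)))))

omit hn₂ hn₃ hn₄ hn₅ in
/-- Anything adjacent to a member of `S` has at most 9 neighbours outside `S`. -/
lemma out_le_nine {s : ((((Fin n₁ × Fin n₂) × Fin n₃) × Fin n₄) × Fin n₅)} (hsS : s ∈ S) (hadj : (gridG n₁ n₂ n₃ n₄ n₅).Adj x s) :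
    ((U \ S).filter (fun z => (gridG n₁ n₂ n₃ n₄ n₅).Adj x z)).card ≤ 9 := by
  set F10 : Finset ℤ := {(ρ x : ℤ) + 1, (ρ x : ℤ) - 1,
    (ρ x : ℤ) + n₅, (ρ x : ℤ) - n₅,
    (ρ x : ℤ) + (n₄ : ℤ) * n₅, (ρ x : ℤ) - (n₄ : ℤ) * n₅,
    (ρ x : ℤ) + (n₃ : ℤ) * n₄ * n₅, (ρ x : ℤ) - (n₃ : ℤ) * n₄ * n₅,
    (ρ x : ℤ) + (n₂ : ℤ) * n₃ * n₄ * n₅, (ρ x : ℤ) - (n₂ : ℤ) * n₃ * n₄ * n₅} with hF10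
  have hmemF : ∀ z : ((((Fin n₁ × Fin n₂) × Fin n₃) × Fin n₄) × Fin n₅), (gridG n₁ n₂ n₃ n₄ n₅).Adj x z → (ρ z : ℤ) ∈ F10 := by
    intro z hadjz
    rw [hF10]
    simp only [Finset.mem_insert, Finset.mem_singleton]
    rcases grid_adj_rho hadjz with h|h|h|h|h|h|h|h|h|h
    · left; linarith
    · right; left; linarith
    · right; right; left; linarith
    · right; right; right; left; linarith
    · right; right; right; right; left; linarith
    · right; right; right; right; right; left; linarith
    · right; right; right; right; right; right; left; linarith
    · right; right; right; right; right; right; right; left; linarith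
    · right; right; right; right; right; right; right; right; left; linarith
    · right; right; right; right; right; right; right; right; right; linarith
  have hsF : (ρ s : ℤ) ∈ F10 := hmemF s hadj
  refine le_trans (out_card_le (F := F10 \ {(ρ s : ℤ)}) ?_) ?_
  · intro z hz hadjz
    rw [Finset.mem_sdiff] at hz ⊢
    refine ⟨hmemF z hadjz, ?_⟩
    simp only [Finset.mem_singleton]
    intro hzs
    have : z = s := rho_injective (by exact_mod_cast hzs)
    exact hz.2 (this ▸ hsS)
  · have hc10 : F10.card ≤ 10 := by
      rw [hF10]
      exact card_insert_le' (card_insert_le' (card_insert_le' (card_insert_le'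
        (card_insert_le' (card_insert_le' (card_insert_le' (card_insert_le'
        (card_insert_le' (le_of_eq (Finset.card_singleton _))))))))))
    have := Finset.card_sdiff_of_subset (Finset.singleton_subset_iff.mpr hsF)
    rw [this, Finset.card_singleton]
    omega

/-- The `v₂` bound. -/
lemma out_le_three (hP2 : ∀ z ∈ U, ρ x < ρ z → z ∈ S)
    (hm1 : ∀ z ∈ U, z ∉ S → (gridG n₁ n₂ n₃ n₄ n₅).Adj x z → (ρ z : ℤ) ≠ (ρ x : ℤ) - 1)
    {c₂ : ((((Fin n₁ × Fin n₂) × Fin n₃) × Fin n₄) × Fin n₅)} (hc₂S : c₂ ∈ S)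
    (hc₂ρ : (ρ c₂ : ℤ) = (ρ x : ℤ) - n₅ ∨ (ρ c₂ : ℤ) = (ρ x : ℤ) - (n₄ : ℤ) * n₅ ∨
      (ρ c₂ : ℤ) = (ρ x : ℤ) - (n₃ : ℤ) * n₄ * n₅ ∨ (ρ c₂ : ℤ) = (ρ x : ℤ) - (n₂ : ℤ) * n₃ * n₄ * n₅) :
    ((U \ S).filter (fun z => (gridG n₁ n₂ n₃ n₄ n₅).Adj x z)).card ≤ 3 := by
  have h2 := zf5 hn₅
  have h3 := zf45 (n₅ := n₅) hn₄
  have h4 := zf345 (n₄ := n₄) (n₅ := n₅) hn₃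
  have h5 := zf2345 (n₃ := n₃) (n₄ := n₄) (n₅ := n₅) hn₂
  set F4 : Finset ℤ := {(ρ x : ℤ) - n₅, (ρ x : ℤ) - (n₄ : ℤ) * n₅,
      (ρ x : ℤ) - (n₃ : ℤ) * n₄ * n₅, (ρ x : ℤ) - (n₂ : ℤ) * n₃ * n₄ * n₅} with hF4
  have hc₂F : (ρ c₂ : ℤ) ∈ F4 := by
    rw [hF4]; simp only [Finset.mem_insert, Finset.mem_singleton]; tauto
  refine le_trans (out_card_le (F := F4 \ {(ρ c₂ : ℤ)}) ?_) ?_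
  · intro z hz hadj
    rw [Finset.mem_sdiff] at hz
    have hlt : ¬ (ρ x < ρ z) := fun hlt => hz.2 (hP2 z hz.1 hlt)
    have hltz : ¬ ((ρ x : ℤ) < (ρ z : ℤ)) := fun hlt' => hlt (by exact_mod_cast hlt')
    have hne1 : (ρ z : ℤ) ≠ (ρ x : ℤ) - 1 := hm1 z hz.1 hz.2 hadj
    have hnec : (ρ z : ℤ) ≠ (ρ c₂ : ℤ) := by
      intro hcontra
      have hzc : z = c₂ := rho_injective (Nat.cast_injective (R := ℤ) hcontra)
      exact hz.2 (hzc ▸ hc₂S)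
    rw [Finset.mem_sdiff, Finset.mem_singleton, hF4]
    refine ⟨?_, hnec⟩
    simp only [Finset.mem_insert, Finset.mem_singleton]
    rcases grid_adj_rho hadj with h|h|h|h|h|h|h|h|h|h
    · exact absurd (by linarith) hltz
    · exact absurd (by linarith) hne1
    · exact absurd (by linarith) hltz
    · left; linarith
    · exact absurd (by linarith) hltz
    · right; left; linarith
    · exact absurd (by linarith) hltz
    · right; right; left; linarith
    · exact absurd (by linarith) hltz
    · right; right; right; linarith
  · have hsub : ({(ρ c₂ : ℤ)} : Finset ℤ) ⊆ F4 := Finset.singleton_subset_iff.mpr hc₂F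
    rw [Finset.card_sdiff_of_subset hsub, Finset.card_singleton]
    have hF4le : F4.card ≤ 4 := by
      rw [hF4]
      exact card_insert_le' (card_insert_le' (card_insert_le' (le_of_eq (Finset.card_singleton _))))
    omega

/-- The `v₃` bound: the vertex directly below `v₂`. -/
lemma out_le_five_c1 {v2 : ((((Fin n₁ × Fin n₂) × Fin n₃) × Fin n₄) × Fin n₅)} (hv2S : v2 ∈ S)
    (hρ : (ρ x : ℤ) = (ρ v2 : ℤ) - 1) (hP2 : ∀ z ∈ U, ρ v2 < ρ z → z ∈ S) :
    ((U \ S).filter (fun z => (gridG n₁ n₂ n₃ n₄ n₅).Adj x z)).card ≤ 5 := by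
  have h2 := zf5 hn₅
  have h3 := zf45 (n₅ := n₅) hn₄
  have h4 := zf345 (n₄ := n₄) (n₅ := n₅) hn₃
  have h5 := zf2345 (n₃ := n₃) (n₄ := n₄) (n₅ := n₅) hn₂
  refine le_trans (out_card_le (F := {(ρ x : ℤ) - 1, (ρ x : ℤ) - n₅, (ρ x : ℤ) - (n₄ : ℤ) * n₅,
      (ρ x : ℤ) - (n₃ : ℤ) * n₄ * n₅, (ρ x : ℤ) - (n₂ : ℤ) * n₃ * n₄ * n₅}) ?_) ?_
  · intro z hz hadj
    rw [Finset.mem_sdiff] at hz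
    have hlt : ¬ ((ρ v2 : ℤ) < (ρ z : ℤ)) := fun hlt' => hz.2 (hP2 z hz.1 (by exact_mod_cast hlt'))
    have hnev2 : (ρ z : ℤ) ≠ (ρ v2 : ℤ) := by
      intro hcontra
      have hzv : z = v2 := rho_injective (Nat.cast_injective (R := ℤ) hcontra)
      exact hz.2 (hzv ▸ hv2S)
    simp only [Finset.mem_insert, Finset.mem_singleton]
    rcases grid_adj_rho hadj with h|h|h|h|h|h|h|h|h|h
    · exact absurd (by linarith) hnev2
    · left; linarith
    · exact absurd (by linarith) hlt
    · right; left; linarith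
    · exact absurd (by linarith) hlt
    · right; right; left; linarith
    · exact absurd (by linarith) hlt
    · right; right; right; left; linarith
    · exact absurd (by linarith) hlt
    · right; right; right; right; linarith
  · exact card_insert_le' (card_insert_le' (card_insert_le' (card_insert_le'
      (le_of_eq (Finset.card_singleton _)))))

/-- The `v₄` bound: a neighbour of the maximum `a` at distance `n₅` or `n₄n₅` below. -/
lemma out_le_seven {a : ((((Fin n₁ × Fin n₂) × Fin n₃) × Fin n₄) × Fin n₅)} (haS : a ∈ S)
    (hamax : ∀ z ∈ U, ρ z ≤ ρ a)
    (hρ : (ρ x : ℤ) = (ρ a : ℤ) - n₅ ∨ (ρ x : ℤ) = (ρ a : ℤ) - (n₄ : ℤ) * n₅) :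
    ((U \ S).filter (fun z => (gridG n₁ n₂ n₃ n₄ n₅).Adj x z)).card ≤ 7 := by
  have h2 := zf5 hn₅
  have h3 := zf45 (n₅ := n₅) hn₄
  have h4 := zf345 (n₄ := n₄) (n₅ := n₅) hn₃
  have h5 := zf2345 (n₃ := n₃) (n₄ := n₄) (n₅ := n₅) hn₂
  refine le_trans (out_card_le (F := {(ρ x : ℤ) + 1, (ρ x : ℤ) + n₅,
      (ρ x : ℤ) - 1, (ρ x : ℤ) - n₅, (ρ x : ℤ) - (n₄ : ℤ) * n₅,
      (ρ x : ℤ) - (n₃ : ℤ) * n₄ * n₅, (ρ x : ℤ) - (n₂ : ℤ) * n₃ * n₄ * n₅}) ?_) ?_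
  · intro z hz hadj
    rw [Finset.mem_sdiff] at hz
    have hlea : ¬ ((ρ a : ℤ) < (ρ z : ℤ)) := fun hlt' => by
      have hle := hamax z hz.1
      have hlez : (ρ z : ℤ) ≤ (ρ a : ℤ) := by exact_mod_cast hle
      linarith
    have hnea : (ρ z : ℤ) ≠ (ρ a : ℤ) := by
      intro hcontra
      have hza : z = a := rho_injective (Nat.cast_injective (R := ℤ) hcontra)
      exact hz.2 (hza ▸ haS)
    simp only [Finset.mem_insert, Finset.mem_singleton]
    rcases grid_adj_rho hadj with h|h|h|h|h|h|h|h|h|h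
    · left; linarith
    · right; right; left; linarith
    · right; left; linarith
    · right; right; right; left; linarith
    · rcases hρ with hρ | hρ
      · exact absurd (by linarith) hlea
      · exact absurd (by linarith) hnea
    · right; right; right; right; left; linarith
    · rcases hρ with hρ | hρ
      · exact absurd (by linarith) hlea
      · exact absurd (by linarith) hlea
    · right; right; right; right; right; left; linarith
    · rcases hρ with hρ | hρ
      · exact absurd (by linarith) hlea
      · exact absurd (by linarith) hlea
    · right; right; right; right; right; right; linarith
  · exact card_insert_le' (card_insert_le' (card_insert_le' (card_insert_le'
      (card_insert_le' (card_insert_le' (le_of_eq (Finset.card_singleton _)))))))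

/-- Neighbours of the rank-maximum lie in the 5 "minus" positions. -/
lemma na_mem_F5 {a z : ((((Fin n₁ × Fin n₂) × Fin n₃) × Fin n₄) × Fin n₅)} (hamax : ∀ z ∈ U, ρ z ≤ ρ a)
    (hzU : z ∈ U) (hadj : (gridG n₁ n₂ n₃ n₄ n₅).Adj a z) :
    (ρ z : ℤ) ∈ ({(ρ a : ℤ) - 1, (ρ a : ℤ) - n₅, (ρ a : ℤ) - (n₄ : ℤ) * n₅,
      (ρ a : ℤ) - (n₃ : ℤ) * n₄ * n₅, (ρ a : ℤ) - (n₂ : ℤ) * n₃ * n₄ * n₅} : Finset ℤ) := by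
  have h2 := zf5 hn₅
  have h3 := zf45 (n₅ := n₅) hn₄
  have h4 := zf345 (n₄ := n₄) (n₅ := n₅) hn₃
  have h5 := zf2345 (n₃ := n₃) (n₄ := n₄) (n₅ := n₅) hn₂
  have hlea : ¬ ((ρ a : ℤ) < (ρ z : ℤ)) := fun hlt' => by
    have hle := hamax z hzU
    have hlez : (ρ z : ℤ) ≤ (ρ a : ℤ) := by exact_mod_cast hle
    linarith
  simp only [Finset.mem_insert, Finset.mem_singleton]
  rcases grid_adj_rho hadj with h|h|h|h|h|h|h|h|h|h
  · exact absurd (by linarith) hlea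
  · left; linarith
  · exact absurd (by linarith) hlea
  · right; left; linarith
  · exact absurd (by linarith) hlea
  · right; right; left; linarith
  · exact absurd (by linarith) hlea
  · right; right; right; left; linarith
  · exact absurd (by linarith) hlea
  · right; right; right; right; linarith

/-- The neighbourhood of the maximum has at most 5 elements. -/
lemma na_card_le_five {a : ((((Fin n₁ × Fin n₂) × Fin n₃) × Fin n₄) × Fin n₅)} (hamax : ∀ z ∈ U, ρ z ≤ ρ a) :
    (U.filter (fun z => (gridG n₁ n₂ n₃ n₄ n₅).Adj a z)).card ≤ 5 := by
  refine le_trans (Finset.card_le_card_of_injOn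
    (t := ({(ρ a : ℤ) - 1, (ρ a : ℤ) - n₅, (ρ a : ℤ) - (n₄ : ℤ) * n₅,
      (ρ a : ℤ) - (n₃ : ℤ) * n₄ * n₅, (ρ a : ℤ) - (n₂ : ℤ) * n₃ * n₄ * n₅} : Finset ℤ))
    (fun z => ((ρ z : ℤ)))
    (fun z hz => ?_) (fun y _ z _ h => rho_injective (Nat.cast_injective (R := ℤ) h))) ?_
  · rw [Finset.mem_coe, Finset.mem_filter] at hz
    exact na_mem_F5 hn₂ hn₃ hn₄ hn₅ hamax hz.1 hz.2
  · exact card_insert_le' (card_insert_le' (card_insert_le' (card_insert_le'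
      (le_of_eq (Finset.card_singleton _)))))

/-- If nobody in the neighbourhood of the max is directly below it, the
neighbourhood has at most 4 elements. -/
lemma na_card_le_four {a : ((((Fin n₁ × Fin n₂) × Fin n₃) × Fin n₄) × Fin n₅)} (hamax : ∀ z ∈ U, ρ z ≤ ρ a)
    (hno : ∀ z ∈ U.filter (fun z => (gridG n₁ n₂ n₃ n₄ n₅).Adj a z), (ρ z : ℤ) ≠ (ρ a : ℤ) - 1) :
    (U.filter (fun z => (gridG n₁ n₂ n₃ n₄ n₅).Adj a z)).card ≤ 4 := by
  refine le_trans (Finset.card_le_card_of_injOn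
    (t := ({(ρ a : ℤ) - n₅, (ρ a : ℤ) - (n₄ : ℤ) * n₅,
      (ρ a : ℤ) - (n₃ : ℤ) * n₄ * n₅, (ρ a : ℤ) - (n₂ : ℤ) * n₃ * n₄ * n₅} : Finset ℤ))
    (fun z => ((ρ z : ℤ)))
    (fun z hz => ?_)
    (fun y _ z _ h => rho_injective (Nat.cast_injective (R := ℤ) h))) ?_
  · rw [Finset.mem_coe, Finset.mem_filter] at hz
    have h5mem := na_mem_F5 hn₂ hn₃ hn₄ hn₅ hamax hz.1 hz.2
    have hne := hno z (Finset.mem_filter.mpr hz)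
    simp only [Finset.mem_coe, Finset.mem_insert, Finset.mem_singleton] at h5mem ⊢
    tauto
  · exact card_insert_le' (card_insert_le' (card_insert_le' (le_of_eq (Finset.card_singleton _))))

/-- If the neighbourhood of the max has at least 4 elements, one of them is at
distance `n₅` or `n₄ n₅` below. -/
lemma na_exists_special {a : ((((Fin n₁ × Fin n₂) × Fin n₃) × Fin n₄) × Fin n₅)} (hamax : ∀ z ∈ U, ρ z ≤ ρ a)
    (hcard : 4 ≤ (U.filter (fun z => (gridG n₁ n₂ n₃ n₄ n₅).Adj a z)).card) :
    ∃ x ∈ U.filter (fun z => (gridG n₁ n₂ n₃ n₄ n₅).Adj a z),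
      (ρ x : ℤ) = (ρ a : ℤ) - n₅ ∨ (ρ x : ℤ) = (ρ a : ℤ) - (n₄ : ℤ) * n₅ := by
  by_contra hno
  push_neg at hno
  have hle : (U.filter (fun z => (gridG n₁ n₂ n₃ n₄ n₅).Adj a z)).card ≤ 3 := by
    refine le_trans (Finset.card_le_card_of_injOn
      (t := ({(ρ a : ℤ) - 1,
        (ρ a : ℤ) - (n₃ : ℤ) * n₄ * n₅, (ρ a : ℤ) - (n₂ : ℤ) * n₃ * n₄ * n₅} : Finset ℤ))
      (fun z => ((ρ z : ℤ)))
      (fun z hz => ?_)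
      (fun y _ z _ h => rho_injective (Nat.cast_injective (R := ℤ) h))) ?_
    · rw [Finset.mem_coe, Finset.mem_filter] at hz
      have h5mem := na_mem_F5 hn₂ hn₃ hn₄ hn₅ hamax hz.1 hz.2
      have hne := hno z (Finset.mem_filter.mpr hz)
      simp only [Finset.mem_coe, Finset.mem_insert, Finset.mem_singleton] at h5mem ⊢
      tauto
    · exact card_insert_le' (card_insert_le' (le_of_eq (Finset.card_singleton _)))
  omega

end OL

section Fill
variable {n₁ n₂ n₃ n₄ n₅ : ℕ}

/-- Iteratively add rank-maximal elements of `U ∖ W` to `W`. -/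
lemma fill (U : Finset ((((Fin n₁ × Fin n₂) × Fin n₃) × Fin n₄) × Fin n₅)) :
    ∀ (n : ℕ) (W : Finset ((((Fin n₁ × Fin n₂) × Fin n₃) × Fin n₄) × Fin n₅)), W ⊆ U → W.card + n ≤ U.card →
    ∃ S' : Finset ((((Fin n₁ × Fin n₂) × Fin n₃) × Fin n₄) × Fin n₅), W ⊆ S' ∧ S' ⊆ U ∧ S'.card = W.card + n ∧
      ∀ x ∈ S', x ∉ W → (∀ z ∈ U, ρ x < ρ z → z ∈ S') := by
  intro n
  induction n with
  | zero =>
    intro W hWU _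
    exact ⟨W, subset_rfl, hWU, by omega, fun x hx hnx => absurd hx hnx⟩
  | succ n ihn =>
    intro W hWU hcard
    have hne : (U \ W).Nonempty := by
      rw [← Finset.card_pos, Finset.card_sdiff_of_subset hWU]
      omega
    obtain ⟨f, hfmem, hfmax⟩ := Finset.exists_max_image (U \ W) ρ hne
    rw [Finset.mem_sdiff] at hfmem
    have hfW : f ∉ W := hfmem.2
    obtain ⟨S', hWS', hS'U, hS'card, hS'max⟩ := ihn (insert f W)
      (Finset.insert_subset hfmem.1 hWU)
      (by rw [Finset.card_insert_of_notMem hfW]; omega)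
    refine ⟨S', (Finset.subset_insert f W).trans hWS', hS'U, ?_, ?_⟩
    · rw [hS'card, Finset.card_insert_of_notMem hfW]; omega
    · intro x hx hnx
      by_cases hxf : x = f
      · subst hxf
        intro z hz hlt
        by_cases hzW : z ∈ W
        · exact hWS' (Finset.mem_insert_of_mem hzW)
        · rcases eq_or_ne z x with rfl | hzx
          · exact hx
          · have hzsd : z ∈ U \ W := Finset.mem_sdiff.mpr ⟨hz, hzW⟩
            have := hfmax z hzsd
            omega
      · intro z hz hlt
        exact hS'max x hx (fun hmem => by
          rcases Finset.mem_insert.mp hmem with h | h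
          · exact hxf h
          · exact hnx h) z hz hlt

end Fill

section Assemble
variable {n₁ n₂ n₃ n₄ n₅ : ℕ} [DecidableRel (gridG n₁ n₂ n₃ n₄ n₅).Adj]

set_option maxHeartbeats 1000000 in
lemma grid_select (hn₂ : 2 ≤ n₂) (hn₃ : 2 ≤ n₃) (hn₄ : 2 ≤ n₄) (hn₅ : 2 ≤ n₅)
    (k : ℕ) (hk : 8 ≤ k) :
    ∀ U : Finset ((((Fin n₁ × Fin n₂) × Fin n₃) × Fin n₄) × Fin n₅), k + 1 ≤ U.card →
      ∃ xs : List ((((Fin n₁ × Fin n₂) × Fin n₃) × Fin n₄) × Fin n₅), xs.Nodup ∧ xs.length = k ∧ (∀ v ∈ xs, v ∈ U) ∧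
        ∀ j (hj : j < xs.length),
          (((U \ xs.toFinset)).filter (fun z => (gridG n₁ n₂ n₃ n₄ n₅).Adj (xs.get ⟨j, hj⟩) z)).card
            ≤ 2 * (k - 1 - j) + 1 := by
  intro U hU
  classical
  have hUne : U.Nonempty := Finset.card_pos.mp (by omega)
  obtain ⟨a, haU, hamax'⟩ := Finset.exists_max_image U ρ hUne
  have hamax : ∀ z ∈ U, ρ z ≤ ρ a := fun z hz => hamax' z hz
  set Na : Finset ((((Fin n₁ × Fin n₂) × Fin n₃) × Fin n₄) × Fin n₅) := U.filter (fun z => (gridG n₁ n₂ n₃ n₄ n₅).Adj a z) with hNa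
  have hNaU : Na ⊆ U := Finset.filter_subset _ _
  have hNa5 : Na.card ≤ 5 := na_card_le_five hn₂ hn₃ hn₄ hn₅ hamax
  have haNa : a ∉ Na := by
    intro hmem
    rw [hNa, Finset.mem_filter] at hmem
    exact (gridG n₁ n₂ n₃ n₄ n₅).irrefl hmem.2
  set S₁ : Finset ((((Fin n₁ × Fin n₂) × Fin n₃) × Fin n₄) × Fin n₅) := insert a Na with hS₁
  have hS₁U : S₁ ⊆ U := Finset.insert_subset haU hNaU
  have haS₁ : a ∈ S₁ := Finset.mem_insert_self _ _
  have hS₁card : S₁.card = Na.card + 1 := Finset.card_insert_of_notMem haNa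
  -- choose v₂
  obtain ⟨v2, hv2U, hP2v2', hv2a, hS2c1, hS2c2, hv2alt⟩ :
      ∃ v2, v2 ∈ U ∧ (∀ z ∈ U, ρ v2 < ρ z → z ∈ insert v2 S₁) ∧ v2 ≠ a ∧
        (insert v2 S₁).card ≤ Na.card + 2 ∧ (insert v2 S₁).card ≤ 6 ∧
        ((ρ v2 : ℤ) = (ρ a : ℤ) - 1 ∨ v2 ∉ S₁) := by
    by_cases hB : ∃ b ∈ Na, (ρ b : ℤ) = (ρ a : ℤ) - 1
    · obtain ⟨b, hbNa, hbρ⟩ := hB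
      have hbS₁ : b ∈ S₁ := Finset.mem_insert_of_mem hbNa
      have hbadj : (gridG n₁ n₂ n₃ n₄ n₅).Adj a b := (Finset.mem_filter.mp hbNa).2
      have hins : insert b S₁ = S₁ := Finset.insert_eq_self.mpr hbS₁
      refine ⟨b, hNaU hbNa, ?_, fun h => (gridG n₁ n₂ n₃ n₄ n₅).irrefl (h ▸ hbadj), ?_, ?_, Or.inl hbρ⟩
      · intro z hz hlt
        have hza : ρ z ≤ ρ a := hamax z hz
        have : ρ z = ρ a := by omega
        have : z = a := rho_injective this
        subst this
        exact Finset.mem_insert_of_mem haS₁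
      · rw [hins]; omega
      · rw [hins]; omega
    · have hNa4 : Na.card ≤ 4 := by
        apply na_card_le_four hn₂ hn₃ hn₄ hn₅ hamax
        intro z hz hzρ
        exact hB ⟨z, hz, hzρ⟩
      have hUS₁ : (U \ S₁).Nonempty := by
        rw [← Finset.card_pos, Finset.card_sdiff_of_subset hS₁U]
        omega
      obtain ⟨w, hwmem, hwmax⟩ := Finset.exists_max_image (U \ S₁) ρ hUS₁
      rw [Finset.mem_sdiff] at hwmem
      refine ⟨w, hwmem.1, ?_, fun h => hwmem.2 (h ▸ haS₁), ?_, ?_, Or.inr hwmem.2⟩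
      · intro z hz hlt
        by_cases hzS₁ : z ∈ S₁
        · exact Finset.mem_insert_of_mem hzS₁
        · have hzw := hwmax z (Finset.mem_sdiff.mpr ⟨hz, hzS₁⟩)
          omega
      · have := Finset.card_insert_le w S₁
        omega
      · have := Finset.card_insert_le w S₁
        omega
  set S₂ : Finset ((((Fin n₁ × Fin n₂) × Fin n₃) × Fin n₄) × Fin n₅) := insert v2 S₁ with hS₂
  have hS₂U : S₂ ⊆ U := Finset.insert_subset hv2U hS₁U
  have hS₁S₂ : S₁ ⊆ S₂ := Finset.subset_insert _ _
  have hv2S₂ : v2 ∈ S₂ := Finset.mem_insert_self _ _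
  have haS₂ : a ∈ S₂ := hS₁S₂ haS₁
  have hP2v2 : ∀ z ∈ U, ρ v2 < ρ z → z ∈ S₂ := hP2v2'
  -- choose c₁ / S₃
  obtain ⟨S₃, hS₂S₃, hS₃U, hS₃card, hS₃adj, hm1, hv3opt⟩ :
      ∃ S₃ : Finset ((((Fin n₁ × Fin n₂) × Fin n₃) × Fin n₄) × Fin n₅), S₂ ⊆ S₃ ∧ S₃ ⊆ U ∧ S₃.card ≤ S₂.card + 1 ∧
        (∀ x ∈ S₃, x ∉ S₂ → (gridG n₁ n₂ n₃ n₄ n₅).Adj v2 x) ∧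
        (∀ S : Finset ((((Fin n₁ × Fin n₂) × Fin n₃) × Fin n₄) × Fin n₅), S₃ ⊆ S → ∀ z ∈ U, z ∉ S → (gridG n₁ n₂ n₃ n₄ n₅).Adj v2 z →
          (ρ z : ℤ) ≠ (ρ v2 : ℤ) - 1) ∧
        ((∃ v3 ∈ S₃, v3 ∉ S₂ ∧ ∀ S : Finset ((((Fin n₁ × Fin n₂) × Fin n₃) × Fin n₄) × Fin n₅), S₃ ⊆ S →
            ((U \ S).filter (fun z => (gridG n₁ n₂ n₃ n₄ n₅).Adj v3 z)).card ≤ 5) ∨ S₃ = S₂) := by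
    by_cases hW1 : ∃ z ∈ U, z ∉ S₂ ∧ (gridG n₁ n₂ n₃ n₄ n₅).Adj v2 z ∧ (ρ z : ℤ) = (ρ v2 : ℤ) - 1
    · obtain ⟨c₁, hc₁U, hc₁S₂, hc₁adj, hc₁ρ⟩ := hW1
      refine ⟨insert c₁ S₂, Finset.subset_insert _ _, Finset.insert_subset hc₁U hS₂U,
        Finset.card_insert_le _ _, ?_, ?_, Or.inl ⟨c₁, Finset.mem_insert_self _ _, hc₁S₂, ?_⟩⟩
      · intro x hx hxS₂
        rcases Finset.mem_insert.mp hx with rfl | hx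
        · exact hc₁adj
        · exact absurd hx hxS₂
      · intro S hS z hzU hzS hzadj hzρ
        have : z = c₁ := rho_injective (Nat.cast_injective (R := ℤ) (hzρ.trans hc₁ρ.symm))
        exact hzS (hS (this ▸ Finset.mem_insert_self _ _))
      · intro S hS
        exact out_le_five_c1 hn₂ hn₃ hn₄ hn₅ (hS (Finset.mem_insert_of_mem hv2S₂)) hc₁ρ
          (fun z hz hlt => hS (Finset.mem_insert_of_mem (hP2v2 z hz hlt)))
    · push_neg at hW1
      exact ⟨S₂, subset_rfl, hS₂U, by omega, fun x hx hxS₂ => absurd hx hxS₂,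
        fun S hS z hzU hzS hzadj => hW1 z hzU (fun hzS₂ => hzS (hS hzS₂)) hzadj, Or.inr rfl⟩
  -- choose c₂ / S₄
  obtain ⟨S₄, hS₃S₄, hS₄U, hS₄card, hS₄adj, hv2bound⟩ :
      ∃ S₄ : Finset ((((Fin n₁ × Fin n₂) × Fin n₃) × Fin n₄) × Fin n₅), S₃ ⊆ S₄ ∧ S₄ ⊆ U ∧ S₄.card ≤ S₃.card + 1 ∧
        (∀ x ∈ S₄, x ∉ S₃ → (gridG n₁ n₂ n₃ n₄ n₅).Adj v2 x) ∧
        (∀ S : Finset ((((Fin n₁ × Fin n₂) × Fin n₃) × Fin n₄) × Fin n₅), S₄ ⊆ S →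
          ((U \ S).filter (fun z => (gridG n₁ n₂ n₃ n₄ n₅).Adj v2 z)).card ≤ 3) := by
    by_cases hW2 : ∃ z ∈ U, z ∉ S₃ ∧ (gridG n₁ n₂ n₃ n₄ n₅).Adj v2 z
    · obtain ⟨c₂, hc₂U, hc₂S₃, hc₂adj⟩ := hW2
      have hc₂ρ : (ρ c₂ : ℤ) = (ρ v2 : ℤ) - n₅ ∨ (ρ c₂ : ℤ) = (ρ v2 : ℤ) - (n₄ : ℤ) * n₅ ∨
          (ρ c₂ : ℤ) = (ρ v2 : ℤ) - (n₃ : ℤ) * n₄ * n₅ ∨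
          (ρ c₂ : ℤ) = (ρ v2 : ℤ) - (n₂ : ℤ) * n₃ * n₄ * n₅ := by
        have h2 := zf5 hn₅
        have h3 := zf45 (n₅ := n₅) hn₄
        have h4 := zf345 (n₄ := n₄) (n₅ := n₅) hn₃
        have h5 := zf2345 (n₃ := n₃) (n₄ := n₄) (n₅ := n₅) hn₂
        have hnotup : ¬ (ρ v2 < ρ c₂) := by
          intro hlt
          exact hc₂S₃ (hS₂S₃ (hP2v2 c₂ hc₂U hlt))
        have hnotupz : ¬ ((ρ v2 : ℤ) < (ρ c₂ : ℤ)) := fun h => hnotup (by exact_mod_cast h)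
        have hno1 : (ρ c₂ : ℤ) ≠ (ρ v2 : ℤ) - 1 := hm1 S₃ subset_rfl c₂ hc₂U hc₂S₃ hc₂adj
        rcases grid_adj_rho hc₂adj with h|h|h|h|h|h|h|h|h|h
        · exact absurd (by linarith) hnotupz
        · exact absurd (by linarith) hno1
        · exact absurd (by linarith) hnotupz
        · left; linarith
        · exact absurd (by linarith) hnotupz
        · right; left; linarith
        · exact absurd (by linarith) hnotupz
        · right; right; left; linarith
        · exact absurd (by linarith) hnotupz
        · right; right; right; linarith
      refine ⟨insert c₂ S₃, Finset.subset_insert _ _, Finset.insert_subset hc₂U hS₃U,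
        Finset.card_insert_le _ _, ?_, ?_⟩
      · intro x hx hxS₃
        rcases Finset.mem_insert.mp hx with rfl | hx
        · exact hc₂adj
        · exact absurd hx hxS₃
      · intro S hS
        apply out_le_three hn₂ hn₃ hn₄ hn₅
        · intro z hz hlt
          exact hS (Finset.mem_insert_of_mem (hS₂S₃ (hP2v2 z hz hlt)))
        · intro z hzU hzS hzadj
          exact hm1 S ((Finset.subset_insert _ _).trans hS) z hzU hzS hzadj
        · exact hS (Finset.mem_insert_self _ _)
        · exact hc₂ρ
    · push_neg at hW2
      refine ⟨S₃, subset_rfl, hS₃U, by omega, fun x hx hxS₃ => absurd hx hxS₃, ?_⟩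
      intro S hS
      have hempty : (U \ S).filter (fun z => (gridG n₁ n₂ n₃ n₄ n₅).Adj v2 z) = ∅ := by
        apply Finset.eq_empty_of_forall_notMem
        intro z hz
        rw [Finset.mem_filter, Finset.mem_sdiff] at hz
        exact hW2 z hz.1.1 (fun h => hz.1.2 (hS h)) hz.2
      rw [hempty]
      simp
  have hv2S₄ : v2 ∈ S₄ := hS₃S₄ (hS₂S₃ hv2S₂)
  have haS₄ : a ∈ S₄ := hS₃S₄ (hS₂S₃ haS₂)
  -- fill up to k elements
  have hS₄k : S₄.card ≤ 8 := by omega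
  obtain ⟨St, hS₄St, hStU, hStcard, hfill⟩ := fill U (k - S₄.card) S₄ hS₄U (by omega)
  have hStk : St.card = k := by omega
  have haSt : a ∈ St := hS₄St haS₄
  have hv2St : v2 ∈ St := hS₄St hv2S₄
  -- the bound for a
  have habound : ((U \ St).filter (fun z => (gridG n₁ n₂ n₃ n₄ n₅).Adj a z)).card = 0 := by
    rw [Finset.card_eq_zero]
    apply Finset.eq_empty_of_forall_notMem
    intro z hz
    rw [Finset.mem_filter, Finset.mem_sdiff] at hz
    exact hz.1.2 (hS₄St (hS₃S₄ (hS₂S₃ (hS₁S₂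
      (Finset.mem_insert_of_mem (Finset.mem_filter.mpr ⟨hz.1.1, hz.2⟩))))))
  -- choose v₃
  obtain ⟨v3, hv3St, hv3S₂, hv3bound, hv3disj⟩ :
      ∃ v3 ∈ St, v3 ∉ S₂ ∧ ((U \ St).filter (fun z => (gridG n₁ n₂ n₃ n₄ n₅).Adj v3 z)).card ≤ 5
        ∧ (v3 ∈ S₃ ∨ S₃ = S₂) := by
    rcases hv3opt with ⟨v3, hv3S₃, hv3S₂, hbnd⟩ | hS₃eq
    · exact ⟨v3, hS₄St (hS₃S₄ hv3S₃), hv3S₂, hbnd St (hS₃S₄.trans hS₄St), Or.inl hv3S₃⟩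
    · have hcc : S₃.card = S₂.card := by rw [hS₃eq]
      have hne : (St \ S₄).Nonempty := by
        rw [← Finset.card_pos, Finset.card_sdiff_of_subset hS₄St]
        omega
      obtain ⟨v3, hv3⟩ := hne
      rw [Finset.mem_sdiff] at hv3
      refine ⟨v3, hv3.1, fun h => hv3.2 (hS₃S₄ (hS₂S₃ h)), ?_, Or.inr hS₃eq⟩
      exact out_le_five hn₂ hn₃ hn₄ hn₅ (hStU hv3.1) (hfill v3 hv3.1 hv3.2)
  have hv3S₄orFill : v3 ∈ S₄ ∨ v3 ∉ S₄ := em _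
  -- choose v₄
  obtain ⟨v4, hv4St, hv4ne_a, hv4ne_v2, hv4ne_v3, hv4bound⟩ :
      ∃ v4 ∈ St, v4 ≠ a ∧ v4 ≠ v2 ∧ v4 ≠ v3 ∧
        ((U \ St).filter (fun z => (gridG n₁ n₂ n₃ n₄ n₅).Adj v4 z)).card ≤ 7 := by
    by_cases hNa4 : 4 ≤ Na.card
    · obtain ⟨v4, hv4Na, hv4ρ⟩ := na_exists_special hn₂ hn₃ hn₄ hn₅ hamax hNa4
      have hv4adj : (gridG n₁ n₂ n₃ n₄ n₅).Adj a v4 := (Finset.mem_filter.mp hv4Na).2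
      have hv4S₁ : v4 ∈ S₁ := Finset.mem_insert_of_mem hv4Na
      have h2 := zf5 hn₅
      have h3 := zf45 (n₅ := n₅) hn₄
      refine ⟨v4, hS₄St (hS₃S₄ (hS₂S₃ (hS₁S₂ hv4S₁))), ?_, ?_, ?_, ?_⟩
      · exact fun h => (gridG n₁ n₂ n₃ n₄ n₅).irrefl (h ▸ hv4adj)
      · rcases hv2alt with hv2ρ | hv2S₁
        · intro h
          subst h
          rcases hv4ρ with h | h <;> rw [hv2ρ] at h <;> linarith
        · intro h
          exact hv2S₁ (h ▸ hv4S₁)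
      · intro h
        exact hv3S₂ (h ▸ (hS₁S₂ hv4S₁))
      · exact out_le_seven hn₂ hn₃ hn₄ hn₅ haSt hamax hv4ρ
    · -- take a filler distinct from v₃
      push_neg at hNa4
      have hcard2 : 1 ≤ (St \ S₄).card - (if v3 ∈ S₄ then 0 else 1) := by
        have hc : (St \ S₄).card = k - S₄.card := by
          rw [Finset.card_sdiff_of_subset hS₄St, hStk]
        have hNa3 : Na.card ≤ 3 := by omega
        have hA : S₂.card ≤ Na.card + 2 := hS2c1
        by_cases hv3S₄ : v3 ∈ S₄
        · simp only [hv3S₄, if_true]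
          have h7 : S₄.card ≤ 7 := by omega
          omega
        · simp only [hv3S₄, if_false]
          have hS₃eq : S₃ = S₂ := by
            rcases hv3disj with hv3S₃ | h
            · exact absurd (hS₃S₄ hv3S₃) hv3S₄
            · exact h
          have hcc : S₃.card = S₂.card := by rw [hS₃eq]
          have h6 : S₄.card ≤ 6 := by omega
          omega
      have hne : ((St \ S₄) \ {v3}).Nonempty := by
        rw [← Finset.card_pos]
        have h1 := Finset.le_card_sdiff ({v3} : Finset ((((Fin n₁ × Fin n₂) × Fin n₃) × Fin n₄) × Fin n₅)) (St \ S₄)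
        rw [Finset.card_singleton] at h1
        by_cases hv3S₄ : v3 ∈ S₄
        · have : v3 ∉ St \ S₄ := fun h => (Finset.mem_sdiff.mp h).2 hv3S₄
          rw [Finset.sdiff_eq_self_of_disjoint (Finset.disjoint_singleton_right.mpr this)]
          rw [Finset.card_sdiff_of_subset hS₄St]
          simp only [hv3S₄, if_true] at hcard2
          omega
        · simp only [hv3S₄, if_false] at hcard2
          omega
      obtain ⟨v4, hv4⟩ := hne
      rw [Finset.mem_sdiff, Finset.mem_sdiff, Finset.mem_singleton] at hv4
      obtain ⟨⟨hv4St, hv4S₄⟩, hv4v3⟩ := hv4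
      refine ⟨v4, hv4St, fun h => hv4S₄ (h ▸ haS₄), fun h => hv4S₄ (h ▸ hv2S₄), hv4v3, ?_⟩
      refine le_trans (out_le_five hn₂ hn₃ hn₄ hn₅ (hStU hv4St) (hfill v4 hv4St hv4S₄)) (by omega)
  -- every element of St has outside-degree at most 9
  have hall9 : ∀ x ∈ St, ((U \ St).filter (fun z => (gridG n₁ n₂ n₃ n₄ n₅).Adj x z)).card ≤ 9 := by
    intro x hxSt
    by_cases hxS₄ : x ∈ S₄
    · by_cases hxS₃ : x ∈ S₃
      · by_cases hxS₂ : x ∈ S₂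
        · rcases Finset.mem_insert.mp hxS₂ with rfl | hxS₁
          · exact le_trans (hv2bound St hS₄St) (by omega)
          · rcases Finset.mem_insert.mp hxS₁ with rfl | hxNa
            · rw [habound]; omega
            · have hadj : (gridG n₁ n₂ n₃ n₄ n₅).Adj x a := (gridG n₁ n₂ n₃ n₄ n₅).adj_symm (Finset.mem_filter.mp hxNa).2
              exact out_le_nine haSt hadj
        · have hadj : (gridG n₁ n₂ n₃ n₄ n₅).Adj x v2 := (gridG n₁ n₂ n₃ n₄ n₅).adj_symm (hS₃adj x hxS₃ hxS₂)
          exact out_le_nine hv2St hadj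
      · have hadj : (gridG n₁ n₂ n₃ n₄ n₅).Adj x v2 := (gridG n₁ n₂ n₃ n₄ n₅).adj_symm (hS₄adj x hxS₄ hxS₃)
        exact out_le_nine hv2St hadj
    · exact le_trans (out_le_five hn₂ hn₃ hn₄ hn₅ (hStU hxSt) (hfill x hxSt hxS₄)) (by omega)
  -- assemble the list
  have hane_v2 : a ≠ v2 := fun h => hv2a h.symm
  have hane_v3 : a ≠ v3 := fun h => hv3S₂ (h ▸ haS₂)
  have hv2ne_v3 : v2 ≠ v3 := fun h => hv3S₂ (h ▸ hv2S₂)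
  have hv3ne_v4 : v3 ≠ v4 := fun h => hv4ne_v3 h.symm
  set Q : Finset ((((Fin n₁ × Fin n₂) × Fin n₃) × Fin n₄) × Fin n₅) := {a, v2, v3, v4} with hQ
  have hQSt : Q ⊆ St := by
    intro x hx
    rw [hQ] at hx
    simp only [Finset.mem_insert, Finset.mem_singleton] at hx
    rcases hx with rfl | rfl | rfl | rfl
    · exact haSt
    · exact hv2St
    · exact hv3St
    · exact hv4St
  have hQcard : Q.card = 4 := by
    rw [hQ]
    rw [Finset.card_insert_of_notMem, Finset.card_insert_of_notMem,
      Finset.card_insert_of_notMem, Finset.card_singleton]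
    · simp only [Finset.mem_singleton]
      exact hv3ne_v4
    · simp only [Finset.mem_insert, Finset.mem_singleton]
      push_neg
      exact ⟨hv2ne_v3, fun h => hv4ne_v2 h.symm⟩
    · simp only [Finset.mem_insert, Finset.mem_singleton]
      push_neg
      exact ⟨hane_v2, hane_v3, fun h => hv4ne_a h.symm⟩
  set rest : Finset ((((Fin n₁ × Fin n₂) × Fin n₃) × Fin n₄) × Fin n₅) := St \ Q with hrest
  have hrestcard : rest.card = k - 4 := by
    rw [hrest, Finset.card_sdiff_of_subset hQSt, hQcard, hStk]
  set restL := rest.toList with hrestL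
  have hrestLlen : restL.length = k - 4 := by
    rw [hrestL, Finset.length_toList, hrestcard]
  set L4 : List ((((Fin n₁ × Fin n₂) × Fin n₃) × Fin n₄) × Fin n₅) := [v4, v3, v2, a] with hL4
  have hL4nodup : L4.Nodup := by
    rw [hL4]
    refine List.nodup_cons.mpr ⟨?_, List.nodup_cons.mpr ⟨?_, List.nodup_cons.mpr
      ⟨?_, List.nodup_singleton a⟩⟩⟩
    · intro h
      simp only [List.mem_cons, List.mem_singleton, List.not_mem_nil, or_false] at h
      rcases h with h | h | h
      exacts [hv4ne_v3 h, hv4ne_v2 h, hv4ne_a h]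
    · intro h
      simp only [List.mem_cons, List.mem_singleton, List.not_mem_nil, or_false] at h
      rcases h with h | h
      exacts [hv2ne_v3 h.symm, hane_v3 h.symm]
    · intro h
      simp only [List.mem_singleton] at h
      exact hane_v2 h.symm
  have hL4Q : ∀ x ∈ L4, x ∈ Q := by
    intro x hx
    rw [hL4] at hx
    rw [hQ]
    simp only [List.mem_cons, List.mem_singleton, List.not_mem_nil, or_false] at hx
    simp only [Finset.mem_insert, Finset.mem_singleton]
    rcases hx with rfl | rfl | rfl | rfl
    · exact Or.inr (Or.inr (Or.inr rfl))
    · exact Or.inr (Or.inr (Or.inl rfl))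
    · exact Or.inr (Or.inl rfl)
    · exact Or.inl rfl
  have hL4St : ∀ x ∈ L4, x ∈ St := fun x hx => hQSt (hL4Q x hx)
  refine ⟨restL ++ L4, ?_, ?_, ?_, ?_⟩
  · apply List.Nodup.append (Finset.nodup_toList rest) hL4nodup
    intro x hx hx4
    have : x ∈ rest := Finset.mem_toList.mp hx
    rw [hrest, Finset.mem_sdiff] at this
    exact this.2 (hL4Q x hx4)
  · rw [List.length_append, hrestLlen, hL4]
    simp only [List.length_cons, List.length_nil]
    omega
  · intro v hv
    rcases List.mem_append.mp hv with hv | hv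
    · exact hStU (Finset.mem_sdiff.mp (Finset.mem_toList.mp hv)).1
    · exact hStU (hL4St v hv)
  · -- the crucial degree bounds
    have hxsfin : (restL ++ L4).toFinset = St := by
      rw [List.toFinset_append]
      apply Finset.Subset.antisymm
      · apply Finset.union_subset
        · intro x hx
          exact (Finset.mem_sdiff.mp (Finset.mem_toList.mp (List.mem_toFinset.mp hx))).1
        · intro x hx
          exact hL4St x (List.mem_toFinset.mp hx)
      · intro x hx
        by_cases hxQ : x ∈ Q
        · apply Finset.mem_union_right
          rw [List.mem_toFinset, hL4]
          rw [hQ] at hxQ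
          simp only [Finset.mem_insert, Finset.mem_singleton] at hxQ
          simp only [List.mem_cons, List.mem_singleton, List.not_mem_nil, or_false]
          rcases hxQ with rfl | rfl | rfl | rfl
          · exact Or.inr (Or.inr (Or.inr rfl))
          · exact Or.inr (Or.inr (Or.inl rfl))
          · exact Or.inr (Or.inl rfl)
          · exact Or.inl rfl
        · apply Finset.mem_union_left
          rw [List.mem_toFinset, hrestL, Finset.mem_toList, hrest, Finset.mem_sdiff]
          exact ⟨hx, hxQ⟩
    intro j hj
    have hjk : j < k := by
      have := hj
      rw [List.length_append, hrestLlen, hL4] at this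
      simp only [List.length_cons, List.length_nil] at this
      omega
    rw [hxsfin]
    simp only [List.get_eq_getElem]
    by_cases hjl : j < restL.length
    · simp only [List.getElem_append_left hjl]
      have hmem : restL[j] ∈ rest := Finset.mem_toList.mp (List.getElem_mem _)
      have hmemSt : restL[j] ∈ St := (Finset.mem_sdiff.mp hmem).1
      refine le_trans (hall9 _ hmemSt) ?_
      rw [hrestLlen] at hjl
      omega
    · push_neg at hjl
      simp only [List.getElem_append_right hjl]
      have hlt4 : j - restL.length < 4 := by
        rw [hrestLlen]
        omega
      have hjval : j - restL.length = 0 ∨ j - restL.length = 1 ∨ j - restL.length = 2 ∨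
          j - restL.length = 3 := by omega
      rw [hrestLlen] at hjl
      rcases hjval with h0 | h1 | h2 | h3
      · simp only [h0]
        show ((U \ St).filter (fun z => (gridG n₁ n₂ n₃ n₄ n₅).Adj v4 z)).card ≤ _
        refine le_trans hv4bound ?_
        rw [hrestLlen] at h0
        omega
      · simp only [h1]
        show ((U \ St).filter (fun z => (gridG n₁ n₂ n₃ n₄ n₅).Adj v3 z)).card ≤ _
        refine le_trans hv3bound ?_
        rw [hrestLlen] at h1
        omega
      · simp only [h2]
        show ((U \ St).filter (fun z => (gridG n₁ n₂ n₃ n₄ n₅).Adj v2 z)).card ≤ _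
        refine le_trans (hv2bound St hS₄St) ?_
        rw [hrestLlen] at h2
        omega
      · simp only [h3]
        show ((U \ St).filter (fun z => (gridG n₁ n₂ n₃ n₄ n₅).Adj a z)).card ≤ _
        rw [habound]
        omega

end Assemble

end Grid2

end GridArb

open GridArb

theorem grid5_equitably_list_arborable (k n₁ n₂ n₃ n₄ n₅ : ℕ) (hk : 8 ≤ k) (hn₁ : 2 ≤ n₁)
    (hn₂ : 2 ≤ n₂) (hn₃ : 2 ≤ n₃) (hn₄ : 2 ≤ n₄) (hn₅ : 2 ≤ n₅) :
    EquitablyListArborable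
      (boxProd (boxProd (boxProd (boxProd (pathGraph n₁) (pathGraph n₂)) (pathGraph n₃))
        (pathGraph n₄)) (pathGraph n₅)) k := by
  classical
  intro L hL
  haveI hdec : DecidableRel (boxProd (boxProd (boxProd (boxProd (pathGraph n₁) (pathGraph n₂)) (pathGraph n₃))
      (pathGraph n₄)) (pathGraph n₅)).Adj := Classical.decRel _
  have hkpos : 0 < k := by omega
  have hcard : (Finset.univ :
      Finset ((((Fin n₁ × Fin n₂) × Fin n₃) × Fin n₄) × Fin n₅)).card
      ≤ k * ((Fintype.card ((((Fin n₁ × Fin n₂) × Fin n₃) × Fin n₄) × Fin n₅) + k - 1) / k) := by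
    rw [Finset.card_univ]
    have hdm := Nat.div_add_mod
      (Fintype.card ((((Fin n₁ × Fin n₂) × Fin n₃) × Fin n₄) × Fin n₅) + k - 1) k
    have hmod : (Fintype.card ((((Fin n₁ × Fin n₂) × Fin n₃) × Fin n₄) × Fin n₅) + k - 1) % k
        < k := Nat.mod_lt _ hkpos
    omega
  have hmain := main_color (G := gridG n₁ n₂ n₃ n₄ n₅) k (by omega)
    (grid_select hn₂ hn₃ hn₄ hn₅ k hk) Finset.univ
    ((Fintype.card ((((Fin n₁ × Fin n₂) × Fin n₃) × Fin n₄) × Fin n₅) + k - 1) / k)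
    L hcard (fun v => le_of_eq (hL v).symm)
  obtain ⟨c, hc1, hc2, hc3⟩ := hmain
  refine ⟨c, fun v => hc1 v (Finset.mem_univ v), fun col => hc2 col, fun col => ?_⟩
  have hnc := hc3 col
  have hset : {v : ((((Fin n₁ × Fin n₂) × Fin n₃) × Fin n₄) × Fin n₅) |
      v ∈ (Finset.univ : Finset ((((Fin n₁ × Fin n₂) × Fin n₃) × Fin n₄) × Fin n₅)) ∧ c v = col}
      = {v | c v = col} := by
    ext v
    simp
  rw [hset] at hnc
  exact isAcyclic_induce_of_noCycleIn hnc
end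

section
/- Let d ≥ 2 and k ≥ 2 be integers, and let G be a d-dimensional grid P_{n₁} □ ⋯ □ P_{n_d} (all n_i ≥ 2). Then G has an equitable proper k-colouring, i.e. a proper colouring of G with k colours in which every colour class has cardinality either ⌈|V(G)|/k⌉ or ⌊|V(G)|/k⌋. -/
open SimpleGraph

/-- The `d`-dimensional grid `P_{n 0} □ ⋯ □ P_{n (d-1)}`: two vertices are adjacent iff they
agree in all coordinates but one, in which they are adjacent in the corresponding path. -/
def gridGraph {d : ℕ} (n : Fin d → ℕ) : SimpleGraph (∀ i, Fin (n i)) where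
  Adj x y := ∃ i, (SimpleGraph.pathGraph (n i)).Adj (x i) (y i) ∧ ∀ j, j ≠ i → x j = y j
  symm := by
    constructor
    rintro x y ⟨i, hadj, heq⟩
    exact ⟨i, hadj.symm, fun j hj => (heq j hj).symm⟩
  loopless := by
    constructor
    rintro x ⟨i, hadj, -⟩
    exact (SimpleGraph.pathGraph (n i)).irrefl hadj

namespace GridEquitable

/-- `z / K = -1` for `-K ≤ z < 0`. -/
lemma ediv_neg_one {K z : ℤ} (hK : 0 < K) (h1 : -K ≤ z) (h2 : z < 0) : z / K = -1 := by
  have h : z = (z + K) + (-1) * K := by ring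
  rw [h, Int.add_mul_ediv_right _ _ (by omega : K ≠ 0),
    Int.ediv_eq_zero_of_lt (by omega) (by omega)]
  ring

lemma ediv_diff {K l : ℤ} (hK : 0 < K) (hl0 : 0 ≤ l) (hlK : l ≤ K) (y : ℤ) :
    y / K - (y - l) / K = if y % K < l then 1 else 0 := by
  have hKne : K ≠ 0 := by omega
  have h2 : (y - l) = ((y % K - l) + (y / K) * K) := by
    have := Int.mul_ediv_add_emod y K; linarith
  rw [h2, Int.add_mul_ediv_right _ _ hKne]
  have hr0 : 0 ≤ y % K := Int.emod_nonneg y hKne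
  have hrK : y % K < K := Int.emod_lt_of_pos y hK
  split_ifs with h
  · have hneg : (y % K - l) / K = -1 := ediv_neg_one hK (by omega) (by omega)
    rw [hneg]; ring
  · have hz : (y % K - l) / K = 0 := Int.ediv_eq_zero_of_lt (by omega) (by omega)
    rw [hz]; ring

/-- Key telescoping count. -/
lemma key (k l s : ℕ) (hk : 0 < k) (hl : 0 < l) (hlk : l ≤ k) (hs : s < k) (n : ℕ) :
    (∑ x ∈ Finset.range n, if (s + l * x * (k - 1)) % k < l then 1 else 0)
      = l * n / k + if s < l * n % k then 1 else 0 := by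
  have hcast : ∀ x : ℕ, ((s + l * x * (k - 1)) % k < l) ↔
      (((s : ℤ) - l * x) % k < l) := by
    intro x
    have h1 : ((s + l * x * (k - 1) : ℕ) : ℤ) = ((s : ℤ) - l * x) + (l * x) * k := by
      push_cast [Nat.cast_sub (by omega : 1 ≤ k)]; ring
    have h2 : (((s + l * x * (k - 1)) % k : ℕ) : ℤ) = ((s : ℤ) - l * x) % k := by
      push_cast [h1]; rw [Int.add_mul_emod_self_right]
    constructor
    · intro h
      have := (Int.ofNat_lt.mpr h); rwa [h2] at this
    · intro h
      have : (((s + l * x * (k - 1)) % k : ℕ) : ℤ) < (l : ℤ) := by rw [h2]; exact_mod_cast h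
      exact_mod_cast this
  -- move to ℤ
  have main : ((∑ x ∈ Finset.range n, if (s + l * x * (k - 1)) % k < l then 1 else 0 : ℕ) : ℤ)
      = ((l * n / k + if s < l * n % k then 1 else 0 : ℕ) : ℤ) := by
    push_cast
    set f : ℕ → ℤ := fun m => ((s : ℤ) - l * m) / k with hf
    have step : ∀ x ∈ Finset.range n,
        ((if (s + l * x * (k - 1)) % k < l then (1:ℤ) else 0)) = f x - f (x + 1) := by
      intro x _
      rw [hf]
      simp only []
      rw [show ((s:ℤ) - l * ((x+1 : ℕ) : ℤ)) = ((s:ℤ) - l * x) - l by push_cast; ring,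
        ediv_diff (by exact_mod_cast hk) (by positivity) (by exact_mod_cast hlk)]
      simp [hcast x]
    rw [Finset.sum_congr rfl step, Finset.sum_range_sub' f]
    have hf0 : f 0 = 0 := by
      rw [hf]; simp only [Nat.cast_zero, mul_zero, sub_zero]
      exact Int.ediv_eq_zero_of_lt (by positivity) (by exact_mod_cast hs)
    rw [hf0]
    have hq := Nat.div_add_mod (l * n) k
    set Q := l * n / k with hQ
    set R := l * n % k with hR
    have hRk : R < k := Nat.mod_lt _ hk
    have h3 : ((s : ℤ) - (l : ℤ) * (n : ℤ)) = ((s : ℤ) - R) + (-(Q:ℤ)) * k := by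
      have h4 : (k : ℤ) * Q + R = (l : ℤ) * n := by exact_mod_cast hq
      linarith
    rw [hf]
    simp only []
    rw [h3, Int.add_mul_ediv_right _ _ (by exact_mod_cast hk.ne' : (k:ℤ) ≠ 0)]
    have hQz : (l:ℤ) * n / k = (Q:ℤ) := by
      have h4 : ((l * n : ℕ) : ℤ) = (R:ℤ) + (Q:ℤ) * (k:ℤ) := by
        exact_mod_cast (by rw [Nat.mul_comm Q k]; omega : l * n = R + Q * k)
      rw [show ((l:ℤ) * n) = ((l * n : ℕ) : ℤ) by push_cast; ring, h4,
        Int.add_mul_ediv_right _ _ (by exact_mod_cast hk.ne' : (k:ℤ) ≠ 0),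
        Int.ediv_eq_zero_of_lt (by positivity) (by exact_mod_cast hRk)]
      ring
    split_ifs with h
    · have hone : ((s:ℤ) - R) / k = -1 :=
        ediv_neg_one (by exact_mod_cast hk) (by push_cast; omega) (by push_cast; omega)
      rw [hone, hQz]; ring
    · have hzero : ((s:ℤ) - R) / k = 0 :=
        Int.ediv_eq_zero_of_lt (by push_cast; omega) (by push_cast; omega)
      rw [hzero, hQz]; ring
  exact_mod_cast main

end GridEquitable

namespace GridEquitable

/-- Product of the sizes of dimensions after `i`. -/
def suf {d : ℕ} (n : Fin d → ℕ) (i : Fin d) : ℕ := ∏ j, if i < j then n j else 1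

/-- The coefficient used in dimension `i`. -/
def cf (k : ℕ) {d : ℕ} (n : Fin d → ℕ) (i : Fin d) : ℕ :=
  if suf n i % k = 0 then 1 else suf n i % k

lemma cf_pos {k d : ℕ} (n : Fin d → ℕ) (i : Fin d) : 0 < cf k n i := by
  unfold cf; split_ifs with h
  · omega
  · exact Nat.pos_of_ne_zero h

lemma cf_lt {k d : ℕ} (hk : 2 ≤ k) (n : Fin d → ℕ) (i : Fin d) : cf k n i < k := by
  unfold cf; split_ifs with h
  · omega
  · exact Nat.mod_lt _ (by omega)

lemma suf_zero {d : ℕ} (n : Fin (d + 1) → ℕ) : suf n 0 = ∏ j : Fin d, n j.succ := by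
  unfold suf
  rw [Fin.prod_univ_succ]
  simp [Fin.succ_pos]

lemma suf_succ {d : ℕ} (n : Fin (d + 1) → ℕ) (i : Fin d) :
    suf n i.succ = suf (fun j => n j.succ) i := by
  unfold suf
  rw [Fin.prod_univ_succ]
  simp [Fin.succ_lt_succ_iff]

lemma cf_succ {k d : ℕ} (n : Fin (d + 1) → ℕ) (i : Fin d) :
    cf k n i.succ = cf k (fun j => n j.succ) i := by
  unfold cf; rw [suf_succ]

lemma shift_iff (k : ℕ) (hk : 1 ≤ k) (w t s : ℕ) (hs : s < k) :
    ((w + t) % k = s) ↔ (t % k = (s + w * (k - 1)) % k) := by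
  have h1 : ((w + t) % k = s) ↔ ((w + t : ℕ) : ZMod k) = (s : ZMod k) := by
    rw [ZMod.natCast_eq_natCast_iff]
    unfold Nat.ModEq
    rw [Nat.mod_eq_of_lt hs]
  have h2 : (t % k = (s + w * (k - 1)) % k) ↔
      ((t : ZMod k) = ((s + w * (k - 1) : ℕ) : ZMod k)) := by
    rw [ZMod.natCast_eq_natCast_iff]
    exact Iff.rfl
  rw [h1, h2]
  have hcast : ((s + w * (k - 1) : ℕ) : ZMod k) = (s : ZMod k) - w := by
    push_cast [Nat.cast_sub (by omega : 1 ≤ k)]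
    rw [ZMod.natCast_self]
    ring
  rw [hcast]
  push_cast
  constructor
  · intro h; rw [← h]; ring
  · intro h; rw [h]; ring

lemma count_card (k : ℕ) (hk : 2 ≤ k) :
    ∀ (d : ℕ) (n : Fin d → ℕ) (s : ℕ), s < k →
    ((Finset.univ.filter fun x : (∀ i, Fin (n i)) =>
        (∑ i, cf k n i * (x i : ℕ)) % k = s).card)
      = (∏ i, n i) / k + if s < (∏ i, n i) % k then 1 else 0 := by
  intro d
  induction d with
  | zero =>
    intro n s hs
    have h1 : (1:ℕ) % k = 1 := Nat.mod_eq_of_lt (by omega)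
    have h2 : (1:ℕ) / k = 0 := Nat.div_eq_of_lt (by omega)
    simp only [Fin.sum_univ_zero, Fin.prod_univ_zero, Nat.zero_mod, h1, h2, Nat.lt_one_iff]
    by_cases h0 : s = 0
    · subst h0
      simp
    · simp [h0, Ne.symm h0]
  | succ d ih =>
    intro n s hs
    have hkpos : 0 < k := Nat.lt_of_lt_of_le Nat.zero_lt_two hk
    have hM := Nat.div_add_mod (∏ j : Fin d, n j.succ) k
    set M := ∏ j : Fin d, n j.succ with hMdef
    rw [Finset.card_filter]
    rw [← Equiv.sum_comp (Fin.consEquiv (fun i => Fin (n i)))]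
    rw [Fintype.sum_prod_type]
    have hsum : ∀ (a : Fin (n 0)) (y : ∀ i : Fin d, Fin (n i.succ)),
        (∑ i, cf k n i * (((Fin.consEquiv (fun i => Fin (n i))) (a, y)) i : ℕ))
          = cf k n 0 * (a : ℕ) + ∑ i, cf k (fun j => n j.succ) i * (y i : ℕ) := by
      intro a y
      rw [Fin.sum_univ_succ]
      simp [Fin.consEquiv, Fin.cons_zero, Fin.cons_succ, cf_succ]
    have hinner : ∀ a : Fin (n 0),
        (∑ y : (∀ i : Fin d, Fin (n i.succ)),
          if (∑ i, cf k n i * (((Fin.consEquiv (fun i => Fin (n i))) (a, y)) i : ℕ)) % k = s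
            then 1 else 0)
        = M / k + if (s + (cf k n 0 * (a:ℕ)) * (k - 1)) % k < M % k then 1 else 0 := by
      intro a
      have heq : (∑ y : (∀ i : Fin d, Fin (n i.succ)),
          if (∑ i, cf k n i * (((Fin.consEquiv (fun i => Fin (n i))) (a, y)) i : ℕ)) % k = s
            then 1 else 0)
          = ∑ y : (∀ i : Fin d, Fin (n i.succ)),
            if (∑ i, cf k (fun j => n j.succ) i * (y i : ℕ)) % k
                = (s + (cf k n 0 * (a:ℕ)) * (k - 1)) % k then 1 else 0 := by
        apply Finset.sum_congr rfl
        intro y _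
        rw [hsum a y]
        exact if_congr (shift_iff k (Nat.one_le_of_lt hk) _ _ s hs) rfl rfl
      rw [heq, ← Finset.card_filter,
        ih (fun j => n j.succ) ((s + (cf k n 0 * (a:ℕ)) * (k - 1)) % k)
          (Nat.mod_lt _ hkpos)]
    rw [Finset.sum_congr rfl (fun a _ => hinner a), Finset.sum_add_distrib,
      Finset.sum_const, Finset.card_univ, Fintype.card_fin, smul_eq_mul,
      Fin.prod_univ_succ]
    by_cases hl : M % k = 0
    · have hdvd : k ∣ M := Nat.dvd_of_mod_eq_zero hl
      simp only [hl, Nat.not_lt_zero, if_false, Finset.sum_const_zero, Nat.add_zero]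
      have h1 : (n 0 * M) % k = 0 := by rw [Nat.mul_mod, hl, Nat.mul_zero, Nat.zero_mod]
      rw [h1, if_neg (Nat.not_lt_zero s), Nat.mul_div_assoc _ hdvd]
      exact (Nat.add_zero _).symm
    · have hc0 : cf k n 0 = M % k := by
        unfold cf
        rw [suf_zero]
        rw [← hMdef]
        rw [if_neg hl]
      rw [hc0]
      rw [Fin.sum_univ_eq_sum_range
        (fun a : ℕ => if (s + M % k * a * (k - 1)) % k < M % k then (1:ℕ) else 0) (n 0)]
      rw [key k (M % k) s hkpos (Nat.pos_of_ne_zero hl)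
        (le_of_lt (Nat.mod_lt _ hkpos)) hs (n 0)]
      have h5 : n 0 * M = M % k * n 0 + (n 0 * (M / k)) * k := by
        calc n 0 * M = n 0 * (k * (M / k) + M % k) := by rw [hM]
        _ = M % k * n 0 + (n 0 * (M / k)) * k := by ring
      rw [h5, Nat.add_mul_div_right _ _ hkpos, Nat.add_mul_mod_self_right]
      ring
end GridEquitable

namespace GridEquitable

lemma ceil_eq {k P : ℕ} (hkpos : 0 < k) (hr : 0 < P % k) :
    (P + k - 1) / k = P / k + 1 := by
  have h6 := Nat.div_add_mod P k
  have hrk : P % k < k := Nat.mod_lt _ hkpos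
  have h8 : (P / k + 1) * k = k * (P / k) + k := by ring
  have h7 : P + k - 1 = (P % k - 1) + (P / k + 1) * k := by rw [h8]; omega
  rw [h7, Nat.add_mul_div_right _ _ hkpos, Nat.div_eq_of_lt (by omega)]
  omega

lemma sum_step {k d : ℕ} (n : Fin d → ℕ) (i : Fin d) (u v : ∀ j, Fin (n j))
    (hrest : ∀ j, j ≠ i → u j = v j) (hi : (v i : ℕ) = (u i : ℕ) + 1) :
    (∑ j, cf k n j * (v j : ℕ)) = (∑ j, cf k n j * (u j : ℕ)) + cf k n i := by
  rw [← Finset.add_sum_erase _ (fun j => cf k n j * (v j : ℕ)) (Finset.mem_univ i),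
    ← Finset.add_sum_erase _ (fun j => cf k n j * (u j : ℕ)) (Finset.mem_univ i)]
  have hco : ∑ j ∈ Finset.univ.erase i, cf k n j * (v j : ℕ)
      = ∑ j ∈ Finset.univ.erase i, cf k n j * (u j : ℕ) := by
    apply Finset.sum_congr rfl
    intro j hj
    rw [hrest j (Finset.ne_of_mem_erase hj)]
  rw [hco, hi]
  ring

lemma step_ne {k d : ℕ} (hk : 2 ≤ k) (n : Fin d → ℕ) (i : Fin d) (u v : ∀ j, Fin (n j))
    (hrest : ∀ j, j ≠ i → u j = v j) (hi : (v i : ℕ) = (u i : ℕ) + 1) :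
    ((∑ j, cf k n j * (u j : ℕ)) % k) ≠ ((∑ j, cf k n j * (v j : ℕ)) % k) := by
  intro hEq
  rw [sum_step n i u v hrest hi] at hEq
  have hz : ((cf k n i : ℕ) : ZMod k) = 0 := by
    have h1 : ((∑ j, cf k n j * (u j : ℕ) : ℕ) : ZMod k)
        = (((∑ j, cf k n j * (u j : ℕ)) + cf k n i : ℕ) : ZMod k) := by
      rw [ZMod.natCast_eq_natCast_iff']
      exact hEq
    push_cast at h1
    linear_combination -h1
  rw [ZMod.natCast_eq_zero_iff] at hz
  have h2 := Nat.le_of_dvd (cf_pos n i) hz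
  have h3 := cf_lt hk n i
  omega

end GridEquitable


open GridEquitable

theorem grid_equitably_properly_colourable (d k : ℕ) (hd : 2 ≤ d) (hk : 2 ≤ k)
    (n : Fin d → ℕ) (hn : ∀ i, 2 ≤ n i) :
    ∃ c : (∀ i, Fin (n i)) → Fin k,
      (∀ x y, (gridGraph n).Adj x y → c x ≠ c y) ∧
      (∀ col : Fin k,
        (Finset.univ.filter fun x => c x = col).card =
            Fintype.card (∀ i, Fin (n i)) / k ∨
        (Finset.univ.filter fun x => c x = col).card =
            (Fintype.card (∀ i, Fin (n i)) + k - 1) / k) := by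
  have hkpos : 0 < k := Nat.lt_of_lt_of_le Nat.zero_lt_two hk
  refine ⟨fun x => ⟨(∑ i, cf k n i * (x i : ℕ)) % k, Nat.mod_lt _ hkpos⟩, ?_, ?_⟩
  · rintro x y ⟨i, hadj, hrest⟩ hcxy
    rw [SimpleGraph.pathGraph_adj] at hadj
    have hval : ((∑ j, cf k n j * (x j : ℕ)) % k) = ((∑ j, cf k n j * (y j : ℕ)) % k) :=
      congrArg Fin.val hcxy
    rcases hadj with h | h
    · exact step_ne hk n i x y (fun j hj => hrest j hj) h.symm hval
    · exact step_ne hk n i y x (fun j hj => (hrest j hj).symm) h.symm hval.symm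
  · intro col
    have hcard := count_card k hk d n col.val col.isLt
    have hset : (Finset.univ.filter fun x : (∀ i, Fin (n i)) =>
          (⟨(∑ i, cf k n i * (x i : ℕ)) % k, Nat.mod_lt _ hkpos⟩ : Fin k) = col)
        = (Finset.univ.filter fun x : (∀ i, Fin (n i)) =>
          (∑ i, cf k n i * (x i : ℕ)) % k = col.val) := by
      apply Finset.filter_congr
      intro x _
      constructor
      · intro h; exact congrArg Fin.val h
      · intro h; exact Fin.ext h
    rw [hset, hcard]
    have hcardpi : Fintype.card (∀ i, Fin (n i)) = ∏ i, n i := by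
      rw [Fintype.card_pi]
      simp
    rw [hcardpi]
    have h6 := Nat.div_add_mod (∏ i, n i) k
    by_cases hcc : (col : ℕ) < (∏ i, n i) % k
    · right
      rw [if_pos hcc]
      have hr : 0 < (∏ i, n i) % k := Nat.lt_of_le_of_lt (Nat.zero_le _) hcc
      exact (ceil_eq hkpos hr).symm
    · left
      rw [if_neg hcc]
      exact Nat.add_zero _
end

section
/- Let d, k be positive integers with k ≥ ⌈(d+1)/2⌉, and let G be a finite d-degenerate simple graph. Then G is k-list arborable: for every list assignment L giving each vertex of G a set of exactly k colours, there is a colouring c of G with c(v) ∈ L(v) for every vertex v such that each colour class induces an acyclic subgraph of G. -/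
open SimpleGraph

/-- A finite simple graph is `d`-degenerate if every nonempty (induced) subgraph has a vertex
of degree at most `d` in that subgraph. -/
def Degenerate {V : Type*} [Fintype V] [DecidableEq V] (G : SimpleGraph V)
    [DecidableRel G.Adj] (d : ℕ) : Prop :=
  ∀ s : Finset V, s.Nonempty → ∃ v ∈ s, (s.filter fun w => G.Adj v w).card ≤ d

/-- If a graph carries an injective rank such that each vertex has at most one neighbour of
smaller rank, then it is acyclic. -/
lemma isAcyclic_of_rank {W : Type*} [DecidableEq W] (H : SimpleGraph W) (r : W → ℕ)
    (hinj : Function.Injective r)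
    (h1 : ∀ v w1 w2, H.Adj v w1 → H.Adj v w2 → r w1 < r v → r w2 < r v → w1 = w2) :
    H.IsAcyclic := by
  intro u p hp
  have hsupp : ∀ x, x ∈ p.support → True := fun _ _ => trivial
  obtain ⟨m, hm, hmax⟩ := Finset.exists_max_image p.support.toFinset r
    ⟨u, by simp [Walk.start_mem_support]⟩
  rw [List.mem_toFinset] at hm
  set q := p.rotate m hm with hqdef
  have hq : q.IsCycle := hp.rotate hm
  have hqsupp : ∀ x, x ∈ q.support → x ∈ p.support := by
    intro x hx
    have := Walk.toSubgraph_rotate p hm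
    have hx' : x ∈ q.toSubgraph.verts := (Walk.mem_verts_toSubgraph q).2 hx
    rw [this] at hx'
    exact (Walk.mem_verts_toSubgraph p).1 hx'
  clear_value q
  obtain ⟨b, hadj, q', rfl⟩ := Walk.not_nil_iff.mp hq.not_nil
  obtain ⟨hq'path, hq'edge⟩ := (Walk.cons_isCycle_iff q' hadj).mp hq
  have hb_ne : b ≠ m := hadj.ne'
  have hq'nil : ¬ q'.reverse.Nil := by
    rw [Walk.not_nil_iff_lt_length, Walk.length_reverse]
    have := hq.three_le_length
    simp only [Walk.length_cons] at this
    omega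
  obtain ⟨b2, hadj2, q'', hq''⟩ := Walk.not_nil_iff.mp hq'nil
  have hb2edge : s(m, b2) ∈ q'.edges := by
    have : s(m, b2) ∈ q'.reverse.edges := by rw [hq'']; simp
    rwa [Walk.edges_reverse, List.mem_reverse] at this
  have hb2_ne_b : b2 ≠ b := by
    rintro rfl
    exact hq'edge hb2edge
  have hb2_ne : b2 ≠ m := hadj2.ne'
  have hb_mem : b ∈ p.support := hqsupp b (by simp [Walk.start_mem_support])
  have hb2_mem : b2 ∈ p.support :=
    hqsupp b2 (by simp [Walk.snd_mem_support_of_mem_edges q' hb2edge])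
  have hrb : r b < r m :=
    lt_of_le_of_ne (hmax b (List.mem_toFinset.mpr hb_mem)) (fun h => hb_ne (hinj h))
  have hrb2 : r b2 < r m :=
    lt_of_le_of_ne (hmax b2 (List.mem_toFinset.mpr hb2_mem)) (fun h => hb2_ne (hinj h))
  exact hb2_ne_b (h1 m b2 b hadj2 hadj hrb2 hrb)

lemma degenerate_key (d k : ℕ) (hk2 : d + 1 ≤ 2 * k) {V : Type*} [Fintype V] [DecidableEq V]
    (G : SimpleGraph V) [DecidableRel G.Adj] (hG : Degenerate G d)
    (L : V → Finset ℕ) (hL : ∀ v, (L v).card = k) :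
    ∀ s : Finset V, ∃ c r : V → ℕ,
      (∀ v ∈ s, c v ∈ L v) ∧ Set.InjOn r s ∧
      ∀ v ∈ s, ∀ w1 ∈ s, ∀ w2 ∈ s, G.Adj v w1 → G.Adj v w2 → c w1 = c v → c w2 = c v →
        r w1 < r v → r w2 < r v → w1 = w2 := by
  intro s
  induction s using Finset.strongInduction with
  | _ s ih =>
  rcases s.eq_empty_or_nonempty with rfl | hs
  · exact ⟨fun _ => 0, fun _ => 0, by simp, by simp [Set.InjOn], by simp⟩
  obtain ⟨v, hv, hdeg⟩ := hG s hs
  set s' := s.erase v with hs'def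
  obtain ⟨c', r', hc'L, hr'inj, hkey⟩ := ih s' (Finset.erase_ssubset hv)
  set N := s'.filter (fun w => G.Adj v w) with hNdef
  have hNle : N.card ≤ d := by
    refine le_trans (Finset.card_le_card ?_) hdeg
    intro w hw
    simp only [hNdef, Finset.mem_filter, hs'def, Finset.mem_erase] at hw ⊢
    exact ⟨hw.1.2, hw.2⟩
  -- choose a colour in L v used by at most one neighbour
  have hcol : ∃ a ∈ L v, (N.filter fun w => c' w = a).card ≤ 1 := by
    by_contra hcon
    push_neg at hcon
    have hdisj : ∀ a ∈ L v, ∀ b ∈ L v, a ≠ b →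
        Disjoint (N.filter fun w => c' w = a) (N.filter fun w => c' w = b) := by
      intro a _ b _ hab
      simp only [Finset.disjoint_left, Finset.mem_filter]
      rintro x ⟨_, rfl⟩ ⟨_, h⟩
      exact hab h
    have hsub : (L v).biUnion (fun a => N.filter fun w => c' w = a) ⊆ N := by
      intro x hx
      obtain ⟨a, _, hx⟩ := Finset.mem_biUnion.mp hx
      exact (Finset.mem_filter.mp hx).1
    have hsum : ∑ a ∈ L v, (N.filter fun w => c' w = a).card ≤ N.card := by
      rw [← Finset.card_biUnion hdisj]
      exact Finset.card_le_card hsub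
    have h2k : 2 * k ≤ ∑ a ∈ L v, (N.filter fun w => c' w = a).card := by
      calc 2 * k = ∑ _a ∈ L v, 2 := by rw [Finset.sum_const, hL v, smul_eq_mul]; ring
      _ ≤ _ := Finset.sum_le_sum fun a ha => hcon a ha
    omega
  obtain ⟨a, haL, ha1⟩ := hcol
  set M := s'.sup r' + 1 with hMdef
  have hM : ∀ w ∈ s', r' w < M := fun w hw =>
    Nat.lt_succ_of_le (Finset.le_sup hw)
  refine ⟨Function.update c' v a, Function.update r' v M, ?_, ?_, ?_⟩
  · intro w hw
    rcases eq_or_ne w v with rfl | hne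
    · simpa using haL
    · rw [Function.update_of_ne hne]
      exact hc'L w (Finset.mem_erase.mpr ⟨hne, hw⟩)
  · intro x hx y hy hxy
    by_cases hxv : x = v
    · by_cases hyv : y = v
      · rw [hxv, hyv]
      · exfalso
        rw [hxv, Function.update_self, Function.update_of_ne hyv] at hxy
        exact absurd hxy.symm
          (Nat.ne_of_lt (hM y (Finset.mem_erase.mpr ⟨hyv, Finset.mem_coe.mp hy⟩)))
    · by_cases hyv : y = v
      · exfalso
        rw [hyv, Function.update_self, Function.update_of_ne hxv] at hxy
        exact absurd hxy
          (Nat.ne_of_lt (hM x (Finset.mem_erase.mpr ⟨hxv, Finset.mem_coe.mp hx⟩)))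
      · rw [Function.update_of_ne hxv, Function.update_of_ne hyv] at hxy
        exact hr'inj (Finset.mem_coe.mpr (Finset.mem_erase.mpr ⟨hxv, Finset.mem_coe.mp hx⟩))
          (Finset.mem_coe.mpr (Finset.mem_erase.mpr ⟨hyv, Finset.mem_coe.mp hy⟩)) hxy
  · intro x hx w1 hw1 w2 hw2 hadj1 hadj2 hcol1 hcol2 hr1 hr2
    by_cases hxv : x = v
    · rw [hxv] at hadj1 hadj2 hcol1 hcol2
      have hw1v : w1 ≠ v := hadj1.ne'
      have hw2v : w2 ≠ v := hadj2.ne'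
      rw [Function.update_of_ne hw1v, Function.update_self] at hcol1
      rw [Function.update_of_ne hw2v, Function.update_self] at hcol2
      have hm1 : w1 ∈ N.filter fun w => c' w = a := by
        simp only [hNdef, Finset.mem_filter, hs'def, Finset.mem_erase]
        exact ⟨⟨⟨hw1v, hw1⟩, hadj1⟩, hcol1⟩
      have hm2 : w2 ∈ N.filter fun w => c' w = a := by
        simp only [hNdef, Finset.mem_filter, hs'def, Finset.mem_erase]
        exact ⟨⟨⟨hw2v, hw2⟩, hadj2⟩, hcol2⟩
      exact Finset.card_le_one.mp ha1 w1 hm1 w2 hm2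
    · have hxs' : x ∈ s' := Finset.mem_erase.mpr ⟨hxv, hx⟩
      have hw1v : w1 ≠ v := by
        rintro rfl
        rw [Function.update_self, Function.update_of_ne hxv] at hr1
        exact absurd hr1 (not_lt_of_gt (hM x hxs'))
      have hw2v : w2 ≠ v := by
        rintro rfl
        rw [Function.update_self, Function.update_of_ne hxv] at hr2
        exact absurd hr2 (not_lt_of_gt (hM x hxs'))
      have hw1s' : w1 ∈ s' := Finset.mem_erase.mpr ⟨hw1v, hw1⟩
      have hw2s' : w2 ∈ s' := Finset.mem_erase.mpr ⟨hw2v, hw2⟩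
      rw [Function.update_of_ne hw1v, Function.update_of_ne hxv] at hcol1 hr1
      rw [Function.update_of_ne hw2v, Function.update_of_ne hxv] at hcol2 hr2
      exact hkey x hxs' w1 hw1s' w2 hw2s' hadj1 hadj2 hcol1 hcol2 hr1 hr2

theorem degenerate_list_arborable (d k : ℕ) (hd : 0 < d) (hk0 : 0 < k)
    (hk : (d + 2) / 2 ≤ k) {V : Type*} [Fintype V] [DecidableEq V]
    (G : SimpleGraph V) [DecidableRel G.Adj] (hG : Degenerate G d) :
    ∀ L : V → Finset ℕ, (∀ v, (L v).card = k) →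
      ∃ c : V → ℕ, (∀ v, c v ∈ L v) ∧
        ∀ col : ℕ, (G.induce {v | c v = col}).IsAcyclic := by
  intro L hL
  have hk2 : d + 1 ≤ 2 * k := by omega
  obtain ⟨c, r, hcL, hrinj, hkey⟩ := degenerate_key d k hk2 G hG L hL Finset.univ
  refine ⟨c, fun v => hcL v (Finset.mem_univ v), fun col => ?_⟩
  refine isAcyclic_of_rank _ (fun x => r x.1) ?_ ?_
  · intro x y hxy
    exact Subtype.ext (hrinj (by simp) (by simp) hxy)
  · rintro ⟨x, hx⟩ ⟨y, hy⟩ ⟨z, hz⟩ hadj1 hadj2 h1 h2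
    have hgxy : G.Adj x y := hadj1
    have hgxz : G.Adj x z := hadj2
    exact Subtype.ext (hkey x (Finset.mem_univ _) y (Finset.mem_univ _) z (Finset.mem_univ _)
      hgxy hgxz (hy.trans hx.symm) (hz.trans hx.symm) h1 h2)
end

section
/- Let k be a positive integer and let G be a finite simple graph. If H is a spanning subgraph of G that covers all cycles of G and H is equitably k-choosable, then G is equitably k-list arborable. -/
open SimpleGraph

def EquitablyChoosable {V : Type*} [Fintype V] (G : SimpleGraph V) (k : ℕ) : Prop :=
  ∀ L : V → Finset ℕ, (∀ v, (L v).card = k) →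
    ∃ c : V → ℕ, (∀ v, c v ∈ L v) ∧ (∀ v w, G.Adj v w → c v ≠ c w) ∧
      (∀ col : ℕ, (Finset.univ.filter fun v => c v = col).card ≤ (Fintype.card V + k - 1) / k)

theorem covering_equitably_list_arborable (k : ℕ) (hk : 0 < k)
    {V : Type*} [Fintype V] (G H : SimpleGraph V) (hle : H ≤ G)
    (hcov : ∀ (v : V) (w : G.Walk v v), w.IsCycle → ∃ e ∈ w.edges, e ∈ H.edgeSet)
    (hH : EquitablyChoosable H k) :
    EquitablyListArborable G k := by
  intro L hL
  obtain ⟨c, hmem, hadj, hcard⟩ := hH L hL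
  refine ⟨c, hmem, hcard, ?_⟩
  intro col v w hw
  let f : G.induce {x | c x = col} ↪g G := Embedding.induce {x | c x = col}
  have hw' : (w.map f.toHom).IsCycle := hw.map f.injective
  obtain ⟨e, he, heH⟩ := hcov _ _ hw'
  rw [Walk.edges_map, List.mem_map] at he
  obtain ⟨e', he', rfl⟩ := he
  induction e' using Sym2.ind with
  | _ a b =>
    have hAdj : H.Adj ↑a ↑b := heH
    exact hadj _ _ hAdj (a.2.trans b.2.symm)
end

section
/- Let k be a positive integer and let (G, c) be a finite coloured graph. If (G, c) has a rainbow special k-partition, then for every positive integer x with x ≤ k, (G, c) also has a rainbow special x-partition. -/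
set_option maxHeartbeats 1000000
set_option linter.unusedSectionVars false
set_option linter.unusedVariables false

namespace RSPaux

variable {V : Type*} [DecidableEq V] (c : V → ℕ)

/-- Rainbow finset. -/
def Rb (S : Finset V) : Prop := ∀ v ∈ S, ∀ w ∈ S, c v = c w → v = w

lemma Rb.mono {c : V → ℕ} {S T : Finset V} (hST : S ⊆ T) (hT : Rb c T) : Rb c S :=
  fun v hv w hw => hT v (hST hv) w (hST hw)

/-- Union of a list of finsets. -/
def uL (l : List (Finset V)) : Finset V := l.foldr (· ∪ ·) ∅

@[simp] lemma uL_nil : uL ([] : List (Finset V)) = ∅ := rfl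

@[simp] lemma uL_cons (a : Finset V) (l : List (Finset V)) : uL (a :: l) = a ∪ uL l := rfl

@[simp] lemma uL_append (l₁ l₂ : List (Finset V)) : uL (l₁ ++ l₂) = uL l₁ ∪ uL l₂ := by
  induction l₁ with
  | nil => simp
  | cons a l ih => simp [ih, Finset.union_assoc]

lemma mem_uL {v : V} {l : List (Finset V)} : v ∈ uL l ↔ ∃ S ∈ l, v ∈ S := by
  induction l with
  | nil => simp
  | cons a l ih => simp [ih]

lemma subset_uL {S : Finset V} {l : List (Finset V)} (hS : S ∈ l) : S ⊆ uL l :=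
  fun v hv => mem_uL.2 ⟨S, hS, hv⟩

lemma disjoint_uL {A : Finset V} {l : List (Finset V)} (h : ∀ S ∈ l, Disjoint A S) :
    Disjoint A (uL l) := by
  rw [Finset.disjoint_left]
  intro v hv hv'
  obtain ⟨S, hS, hvS⟩ := mem_uL.1 hv'
  exact (Finset.disjoint_left.1 (h S hS)) hv hvS

lemma uL_card {l : List (Finset V)} (hl : l.Pairwise Disjoint) :
    (uL l).card = (l.map Finset.card).sum := by
  induction l with
  | nil => simp
  | cons a l ih =>
    rw [List.pairwise_cons] at hl
    rw [uL_cons, Finset.card_union_of_disjoint (disjoint_uL hl.1), List.map_cons, List.sum_cons,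
      ih hl.2]

/-- Pick a subset of a rainbow set avoiding the colours of `B`. -/
lemma exists_avoid {S B : Finset V} (hS : Rb c S) {m : ℕ} (hm : m + B.card ≤ S.card) :
    ∃ T ⊆ S, T.card = m ∧ ∀ v ∈ T, c v ∉ B.image c := by
  classical
  set F := S.filter (fun v => c v ∈ B.image c) with hF
  have hFS : F ⊆ S := Finset.filter_subset _ _
  have hFcard : F.card ≤ B.card := by
    have hinj : Set.InjOn c F := by
      intro a ha b hb hab
      exact hS a (hFS ha) b (hFS hb) hab
    calc F.card = (F.image c).card := (Finset.card_image_of_injOn hinj).symm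
      _ ≤ (B.image c).card := by
          apply Finset.card_le_card
          intro y hy
          obtain ⟨v, hv, rfl⟩ := Finset.mem_image.1 hy
          exact (Finset.mem_filter.1 hv).2
      _ ≤ B.card := Finset.card_image_le
  have hgood : m ≤ (S.filter (fun v => c v ∉ B.image c)).card := by
    have h2 := Finset.card_filter_add_card_filter_not (s := S)
      (p := fun v => c v ∈ B.image c)
    rw [← hF] at h2
    omega
  obtain ⟨T, hTsub, hTcard⟩ := Finset.exists_subset_card_eq hgood
  refine ⟨T, hTsub.trans (Finset.filter_subset _ _), hTcard, fun v hv => ?_⟩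
  exact (Finset.mem_filter.1 (hTsub hv)).2


/-- Chop a rainbow set into blocks of size `x` plus a remainder of size `< x`. -/
lemma chop {x : ℕ} (hx : 0 < x) (R : Finset V) (hR : Rb c R) :
    ∃ (Qs : List (Finset V)) (B : Finset V),
      (B :: Qs).Pairwise Disjoint ∧ uL (B :: Qs) = R ∧
      (∀ Q ∈ Qs, Rb c Q ∧ Q.card = x) ∧ Rb c B ∧ B.card < x := by
  classical
  generalize hn : R.card = n
  induction n using Nat.strong_induction_on generalizing R with
  | _ n ih =>
  by_cases hlt : R.card < x
  · exact ⟨[], R, by simp, by simp [uL], by simp, hR, hlt⟩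
  · push_neg at hlt
    obtain ⟨T, hTR, hTcard⟩ := Finset.exists_subset_card_eq (s := R) hlt
    have hcard : (R \ T).card < n := by
      rw [Finset.card_sdiff_of_subset hTR, hTcard]
      omega
    obtain ⟨Qs, B, hpw, huL, hQs, hB, hBcard⟩ :=
      ih _ hcard (R \ T) (hR.mono (Finset.sdiff_subset)) rfl
    have hsub : ∀ S ∈ B :: Qs, S ⊆ R \ T := fun S hS => huL ▸ subset_uL hS
    refine ⟨T :: Qs, B, ?_, ?_, ?_, hB, hBcard⟩
    · rw [List.pairwise_cons] at hpw
      rw [List.pairwise_cons, List.pairwise_cons]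
      have hdT : ∀ S : Finset V, S ⊆ R \ T → Disjoint S T := fun S hS =>
        Disjoint.mono_left hS Finset.sdiff_disjoint
      refine ⟨fun S hS => ?_,
        fun Q hQ => (hdT Q (hsub Q (List.mem_cons_of_mem _ hQ))).symm, hpw.2⟩
      rcases List.mem_cons.1 hS with rfl | hS
      · exact hdT B (hsub B (List.mem_cons_self))
      · exact hpw.1 S hS
    · rw [uL_cons] at huL ⊢
      rw [uL_cons, ← Finset.union_assoc, Finset.union_comm B T, Finset.union_assoc,
        huL, Finset.union_sdiff_of_subset hTR]
    · intro Q hQ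
      rcases List.mem_cons.1 hQ with rfl | hQ
      · exact ⟨hR.mono hTR, hTcard⟩
      · exact hQs Q hQ


/-- Greedy processing of a list of large rainbow sets, absorbing a partial block. -/
lemma main {x : ℕ} (hx : 0 < x) :
    ∀ (Ps : List (Finset V)) (B : Finset V),
      (B :: Ps).Pairwise Disjoint → Rb c B → B.card < x →
      (∀ P ∈ Ps, Rb c P ∧ x ≤ P.card) →
      ∃ (Qs : List (Finset V)) (B' : Finset V),
        (B' :: Qs).Pairwise Disjoint ∧ uL (B' :: Qs) = uL (B :: Ps) ∧
        (∀ Q ∈ Qs, Rb c Q ∧ Q.card = x) ∧ Rb c B' ∧ B'.card < x := by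
  intro Ps
  induction Ps with
  | nil =>
    intro B hpw hB hBc _
    exact ⟨[], B, by simp, rfl, by simp, hB, hBc⟩
  | cons P Ps ih =>
    intro B hpw hB hBc hPs
    obtain ⟨hPrb, hPcard⟩ := hPs P (List.mem_cons_self)
    rw [List.pairwise_cons] at hpw
    have hBP : Disjoint B P := hpw.1 P (List.mem_cons_self)
    have hBPs : ∀ S ∈ Ps, Disjoint B S := fun S hS => hpw.1 S (List.mem_cons_of_mem _ hS)
    have hpw2 := hpw.2
    rw [List.pairwise_cons] at hpw2
    have hPPs : ∀ S ∈ Ps, Disjoint P S := hpw2.1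
    -- pick the completion T of B inside P, avoiding colours of B
    obtain ⟨T, hTP, hTcard, hTavoid⟩ := exists_avoid c (B := B) hPrb (m := x - B.card) (by omega)
    have hBT : Disjoint B T := hBP.mono_right hTP
    have hQ₀card : (B ∪ T).card = x := by
      rw [Finset.card_union_of_disjoint hBT, hTcard]; omega
    have hQ₀rb : Rb c (B ∪ T) := by
      intro v hv w hw hvw
      rw [Finset.mem_union] at hv hw
      rcases hv with hv | hv <;> rcases hw with hw | hw
      · exact hB v hv w hw hvw
      · exact absurd (by rw [← hvw]; exact Finset.mem_image_of_mem c hv) (hTavoid w hw)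
      · exact absurd (by rw [hvw]; exact Finset.mem_image_of_mem c hw) (hTavoid v hv)
      · exact hPrb v (hTP hv) w (hTP hw) hvw
    -- chop the rest of P
    obtain ⟨Qs₁, B₁, hpw₁, huL₁, hQs₁, hB₁rb, hB₁c⟩ :=
      chop c hx (P \ T) (hPrb.mono Finset.sdiff_subset)
    have hsub₁ : ∀ S ∈ B₁ :: Qs₁, S ⊆ P \ T := fun S hS => huL₁ ▸ subset_uL hS
    rw [List.pairwise_cons] at hpw₁
    -- recurse
    have hpwrec : (B₁ :: Ps).Pairwise Disjoint := by
      rw [List.pairwise_cons]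
      exact ⟨fun S hS => (hPPs S hS).mono_left
        ((hsub₁ B₁ (List.mem_cons_self)).trans Finset.sdiff_subset), hpw2.2⟩
    obtain ⟨Qs₂, B', hpw₂, huL₂, hQs₂, hB'rb, hB'c⟩ :=
      ih B₁ hpwrec hB₁rb hB₁c (fun S hS => hPs S (List.mem_cons_of_mem _ hS))
    have hsub₂ : ∀ S ∈ B' :: Qs₂, S ⊆ B₁ ∪ uL Ps := fun S hS => by
      have h := subset_uL hS
      rwa [huL₂, uL_cons] at h
    rw [List.pairwise_cons] at hpw₂
    -- key disjointness facts
    have h1 : ∀ S : Finset V, S ⊆ B₁ ∪ uL Ps → Disjoint (B ∪ T) S := by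
      intro S hS
      refine Disjoint.mono_right hS ?_
      rw [Finset.disjoint_union_left, Finset.disjoint_union_right, Finset.disjoint_union_right]
      refine ⟨⟨hBP.mono_right ((hsub₁ B₁ (List.mem_cons_self)).trans Finset.sdiff_subset),
        disjoint_uL hBPs⟩,
        ⟨Finset.disjoint_sdiff.mono_right (hsub₁ B₁ (List.mem_cons_self)), ?_⟩⟩
      · exact (disjoint_uL hPPs).mono_left hTP
    have h2 : ∀ Q ∈ Qs₁, ∀ S : Finset V, S ⊆ B₁ ∪ uL Ps → Disjoint Q S := by
      intro Q hQ S hS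
      refine Disjoint.mono_right hS ?_
      rw [Finset.disjoint_union_right]
      exact ⟨(hpw₁.1 Q hQ).symm,
        (disjoint_uL hPPs).mono_left ((hsub₁ Q (List.mem_cons_of_mem _ hQ)).trans
          Finset.sdiff_subset)⟩
    have h3 : ∀ Q ∈ Qs₁, Disjoint (B ∪ T) Q := by
      intro Q hQ
      have hQsub := hsub₁ Q (List.mem_cons_of_mem _ hQ)
      rw [Finset.disjoint_union_left]
      exact ⟨hBP.mono_right (hQsub.trans Finset.sdiff_subset),
        Finset.disjoint_sdiff.mono_right hQsub⟩
    refine ⟨(B ∪ T) :: (Qs₁ ++ Qs₂), B', ?_, ?_, ?_, hB'rb, hB'c⟩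
    · rw [List.pairwise_cons, List.pairwise_cons, List.pairwise_append]
      refine ⟨?_, ?_, hpw₁.2, hpw₂.2, ?_⟩
      · intro S hS
        rcases List.mem_cons.1 hS with rfl | hS
        · exact (h1 _ (hsub₂ _ (List.mem_cons_self))).symm
        · rcases List.mem_append.1 hS with hS | hS
          · exact (h2 S hS B' (hsub₂ B' (List.mem_cons_self))).symm
          · exact hpw₂.1 S hS
      · intro S hS
        rcases List.mem_append.1 hS with hS | hS
        · exact h3 S hS
        · exact h1 S (hsub₂ S (List.mem_cons_of_mem _ hS))
      · intro a ha b hb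
        exact h2 a ha b (hsub₂ b (List.mem_cons_of_mem _ hb))
    · have huL₁' : B₁ ∪ uL Qs₁ = P \ T := by rw [← uL_cons]; exact huL₁
      have huL₂' : B' ∪ uL Qs₂ = B₁ ∪ uL Ps := by
        have h := huL₂; rw [uL_cons, uL_cons] at h; exact h
      rw [uL_cons, uL_cons, uL_append, uL_cons, uL_cons,
        ← Finset.union_sdiff_of_subset hTP, ← huL₁']
      have key := fun a => (Finset.ext_iff.1 huL₂' a)
      ext a
      have ha := key a
      simp only [Finset.mem_union] at ha ⊢
      tauto
    · intro Q hQ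
      rcases List.mem_cons.1 hQ with rfl | hQ
      · exact ⟨hQ₀rb, hQ₀card⟩
      · rcases List.mem_append.1 hQ with hQ | hQ
        · exact hQs₁ Q hQ
        · exact hQs₂ Q hQ


lemma sum_map_card {x : ℕ} (l : List (Finset V)) (h : ∀ Q ∈ l, Q.card = x) :
    (l.map Finset.card).sum = x * l.length := by
  induction l with
  | nil => simp
  | cons a l ih =>
    simp only [List.map_cons, List.sum_cons, List.length_cons,
      h a (List.mem_cons_self), ih (fun Q hQ => h Q (List.mem_cons_of_mem _ hQ))]
    ring

lemma assemble [Fintype V] {x M : ℕ} (FL : List (Finset V)) (hLen : FL.length = M)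
    (hPW : FL.Pairwise Disjoint) (hUniv : uL FL = Finset.univ)
    (hNE : ∀ S ∈ FL, S.Nonempty) (hRB : ∀ S ∈ FL, Rb c S)
    (hEXC : ∀ i j : ℕ, ∀ hi : i < FL.length, ∀ hj : j < FL.length,
      (FL[i]).card ≠ x → (FL[j]).card ≠ x → i = j) :
    ∃ P : Fin M → Finset V, (∀ i, (P i).Nonempty) ∧ (∀ i j, i ≠ j → Disjoint (P i) (P j)) ∧
      (∀ v, ∃ i, v ∈ P i) ∧ (∀ i, ∀ v ∈ P i, ∀ w ∈ P i, c v = c w → v = w) ∧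
      (∀ i j, (P i).card ≠ x → (P j).card ≠ x → i = j) := by
  subst hLen
  refine ⟨fun i => FL[(i : ℕ)], fun i => hNE _ (FL.getElem_mem i.2), ?_, ?_,
    fun i => hRB _ (FL.getElem_mem i.2), ?_⟩
  · intro i j hij
    have hpg := List.pairwise_iff_getElem.1 hPW
    rcases lt_trichotomy (i : ℕ) (j : ℕ) with hlt | heq | hlt
    · exact hpg _ _ i.2 j.2 hlt
    · exact absurd (Fin.ext heq) hij
    · exact (hpg _ _ j.2 i.2 hlt).symm
  · intro v
    have hv : v ∈ uL FL := hUniv ▸ Finset.mem_univ v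
    obtain ⟨S, hS, hvS⟩ := mem_uL.1 hv
    obtain ⟨m, hm, rfl⟩ := List.mem_iff_getElem.1 hS
    exact ⟨⟨m, hm⟩, hvS⟩
  · intro i j hi hj
    exact Fin.ext (hEXC _ _ i.2 j.2 hi hj)

end RSPaux

open SimpleGraph

/-- A rainbow special `k`-partition of a coloured graph: a partition of the vertex set into
`⌈|V|/k⌉` nonempty sets, all of which except at most one have exactly `k` elements, such that
the vertices of each set receive pairwise distinct colours. -/
def RainbowSpecialPartition {V : Type*} [Fintype V] (c : V → ℕ) (k : ℕ) : Prop :=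
  ∃ P : Fin ((Fintype.card V + k - 1) / k) → Finset V,
    (∀ i, (P i).Nonempty) ∧
    (∀ i j, i ≠ j → Disjoint (P i) (P j)) ∧
    (∀ v, ∃ i, v ∈ P i) ∧
    (∀ i, ∀ v ∈ P i, ∀ w ∈ P i, c v = c w → v = w) ∧
    (∀ i j, (P i).card ≠ k → (P j).card ≠ k → i = j)

theorem rainbow_special_partition_down (k : ℕ) (hk : 0 < k)
    {V : Type*} [Fintype V] (G : SimpleGraph V) (c : V → ℕ)
    (h : RainbowSpecialPartition c k) :
    ∀ x : ℕ, 0 < x → x ≤ k → RainbowSpecialPartition c x := by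
  classical
  intro x hx hxk
  obtain ⟨P, hne, hdisj, hcov, hrb, hexc⟩ := h
  open RSPaux in
  by_cases hn0 : Fintype.card V = 0
  · have hM0 : (Fintype.card V + x - 1) / x = 0 := by
      rw [hn0]
      exact Nat.div_eq_of_lt (by omega)
    have hI : IsEmpty (Fin ((Fintype.card V + x - 1) / x)) := by
      rw [hM0]; infer_instance
    have hVempty : IsEmpty V := Fintype.card_eq_zero_iff.mp hn0
    exact ⟨fun _ => ∅, fun i => (hI.false i).elim, fun i j _ => (hI.false i).elim,
      fun v => (hVempty.false v).elim, fun i => (hI.false i).elim,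
      fun i j _ _ => (hI.false i).elim⟩
  · have hm : 0 < (Fintype.card V + k - 1) / k := Nat.div_pos (by omega) hk
    -- the exceptional index
    obtain ⟨i₀, hi₀⟩ : ∃ i₀ : Fin ((Fintype.card V + k - 1) / k),
        ∀ j, (P j).card ≠ k → j = i₀ := by
      by_cases hex : ∃ i, (P i).card ≠ k
      · obtain ⟨i, hi⟩ := hex
        exact ⟨i, fun j hj => hexc j i hj hi⟩
      · push_neg at hex
        exact ⟨⟨0, hm⟩, fun j hj => absurd (hex j) hj⟩
    set Ls : List (Finset V) :=
      ((List.finRange ((Fintype.card V + k - 1) / k)).filter (fun i => i ≠ i₀)).map P with hLs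
    have hmemLs : ∀ S ∈ Ls, ∃ i, i ≠ i₀ ∧ P i = S := by
      intro S hS
      rw [hLs, List.mem_map] at hS
      obtain ⟨i, hi, rfl⟩ := hS
      rw [List.mem_filter] at hi
      exact ⟨i, by simpa using hi.2, rfl⟩
    have hLsprop : ∀ S ∈ Ls, Rb c S ∧ x ≤ S.card := by
      intro S hS
      obtain ⟨i, hine, rfl⟩ := hmemLs S hS
      have hcard : (P i).card = k := by
        by_contra hc
        exact hine (hi₀ i hc)
      exact ⟨hrb i, hcard ▸ hxk⟩
    have hLspw : Ls.Pairwise Disjoint := by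
      rw [hLs, List.pairwise_map]
      exact ((List.nodup_finRange _).filter _).imp (fun hne' => hdisj _ _ hne')
    have hdisj₀ : ∀ S ∈ Ls, Disjoint (P i₀) S := by
      intro S hS
      obtain ⟨i, hine, rfl⟩ := hmemLs S hS
      exact hdisj _ _ (Ne.symm hine)
    -- chop the exceptional set
    obtain ⟨Qs₀, B₀, hpw₀, huL₀, hQs₀, hB₀rb, hB₀c⟩ := chop c hx (P i₀) (hrb i₀)
    have hsub₀ : ∀ S ∈ B₀ :: Qs₀, S ⊆ P i₀ := fun S hS => huL₀ ▸ subset_uL hS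
    rw [List.pairwise_cons] at hpw₀
    -- greedily process the full sets
    have hpwrec : (B₀ :: Ls).Pairwise Disjoint := by
      rw [List.pairwise_cons]
      exact ⟨fun S hS => (hdisj₀ S hS).mono_left (hsub₀ B₀ (List.mem_cons_self)), hLspw⟩
    obtain ⟨Qs₂, B', hpw', huL', hQs', hB'rb, hB'c⟩ :=
      main c hx Ls B₀ hpwrec hB₀rb hB₀c hLsprop
    have hsub' : ∀ S ∈ B' :: Qs₂, S ⊆ B₀ ∪ uL Ls := fun S hS => by
      have hq := subset_uL hS
      rwa [huL', uL_cons] at hq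
    rw [List.pairwise_cons] at hpw'
    -- the combined list
    have hcards : ∀ Q ∈ Qs₀ ++ Qs₂, Rb c Q ∧ Q.card = x := by
      intro Q hQ
      rcases List.mem_append.1 hQ with hQ | hQ
      · exact hQs₀ Q hQ
      · exact hQs' Q hQ
    have hdQ₀ : ∀ Q ∈ Qs₀, ∀ S : Finset V, S ⊆ B₀ ∪ uL Ls → Disjoint Q S := by
      intro Q hQ S hS
      refine Disjoint.mono_right hS ?_
      rw [Finset.disjoint_union_right]
      exact ⟨(hpw₀.1 Q hQ).symm,
        (disjoint_uL hdisj₀).mono_left (hsub₀ Q (List.mem_cons_of_mem _ hQ))⟩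
    have hPW : (B' :: (Qs₀ ++ Qs₂)).Pairwise Disjoint := by
      rw [List.pairwise_cons, List.pairwise_append]
      refine ⟨?_, hpw₀.2, hpw'.2, ?_⟩
      · intro S hS
        rcases List.mem_append.1 hS with hS | hS
        · exact (hdQ₀ S hS B' (hsub' B' (List.mem_cons_self))).symm
        · exact hpw'.1 S hS
      · intro a ha b hb
        exact hdQ₀ a ha b (hsub' b (List.mem_cons_of_mem _ hb))
    have hUniv : uL (B' :: (Qs₀ ++ Qs₂)) = Finset.univ := by
      have huL₀' : B₀ ∪ uL Qs₀ = P i₀ := by rw [← uL_cons]; exact huL₀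
      have huL'' : B' ∪ uL Qs₂ = B₀ ∪ uL Ls := by
        have hq := huL'; rw [uL_cons, uL_cons] at hq; exact hq
      apply Finset.eq_univ_of_forall
      intro v
      obtain ⟨i, hvi⟩ := hcov v
      rw [uL_cons, uL_append, Finset.mem_union, Finset.mem_union]
      by_cases hii : i = i₀
      · subst hii
        rw [← huL₀', Finset.mem_union] at hvi
        rcases hvi with hvi | hvi
        · have : v ∈ B' ∪ uL Qs₂ := by
            rw [huL'']; exact Finset.mem_union_left _ hvi
          rw [Finset.mem_union] at this
          tauto
        · tauto
      · have hvLs : v ∈ uL Ls := subset_uL (by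
          rw [hLs, List.mem_map]
          exact ⟨i, List.mem_filter.2 ⟨List.mem_finRange i, by simpa using hii⟩, rfl⟩) hvi
        have : v ∈ B' ∪ uL Qs₂ := by
          rw [huL'']; exact Finset.mem_union_right _ hvLs
        rw [Finset.mem_union] at this
        tauto
    -- counting
    have hsum : Fintype.card V = x * (Qs₀ ++ Qs₂).length + B'.card := by
      have h1 : (uL (B' :: (Qs₀ ++ Qs₂))).card = Fintype.card V := by
        rw [hUniv, Finset.card_univ]
      rw [uL_card hPW] at h1
      rw [List.map_cons, List.sum_cons,
        sum_map_card (x := x) _ (fun Q hQ => (hcards Q hQ).2)] at h1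
      omega
    by_cases hB'0 : B'.card = 0
    · -- no remainder
      have hB'e : B' = ∅ := Finset.card_eq_zero.1 hB'0
      have hLen : (Qs₀ ++ Qs₂).length = (Fintype.card V + x - 1) / x := by
        have he : Fintype.card V + x - 1 = x * (Qs₀ ++ Qs₂).length + (x - 1) := by omega
        rw [he, Nat.mul_add_div hx, Nat.div_eq_of_lt (by omega), Nat.add_zero]
      refine assemble c _ hLen ?_ ?_ ?_ (fun S hS => (hcards S hS).1) ?_
      · rw [List.pairwise_cons] at hPW; exact hPW.2
      · rw [uL_cons, hB'e, Finset.empty_union] at hUniv; exact hUniv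
      · exact fun S hS => Finset.card_pos.1 ((hcards S hS).2 ▸ hx)
      · intro i j hi hj hci hcj
        exact absurd (hcards _ ((Qs₀ ++ Qs₂).getElem_mem hi)).2 hci
    · -- remainder is the single exceptional block
      have hLen : (B' :: (Qs₀ ++ Qs₂)).length = (Fintype.card V + x - 1) / x := by
        rw [List.length_cons]
        have he : Fintype.card V + x - 1 = x * (Qs₀ ++ Qs₂).length + ((B'.card - 1) + x) := by
          omega
        rw [he, Nat.mul_add_div hx, Nat.add_div_right _ hx, Nat.div_eq_of_lt (by omega)]
      refine assemble c _ hLen hPW hUniv ?_ ?_ ?_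
      · intro S hS
        rcases List.mem_cons.1 hS with rfl | hS
        · exact Finset.card_pos.1 (by omega)
        · exact Finset.card_pos.1 ((hcards S hS).2 ▸ hx)
      · intro S hS
        rcases List.mem_cons.1 hS with rfl | hS
        · exact hB'rb
        · exact (hcards S hS).1
      · intro i j hi hj hci hcj
        have key : ∀ m : ℕ, ∀ hm : m < (B' :: (Qs₀ ++ Qs₂)).length,
            ((B' :: (Qs₀ ++ Qs₂))[m]).card ≠ x → m = 0 := by
          intro m hm hcm
          by_contra hm0
          obtain ⟨m', rfl⟩ := Nat.exists_eq_succ_of_ne_zero hm0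
          rw [List.getElem_cons_succ] at hcm
          exact hcm (hcards _ ((Qs₀ ++ Qs₂).getElem_mem (by simpa using hm))).2
        rw [key i hi hci, key j hj hcj]
end

section
/- Let k be an integer with k ≥ 2. If G is a finite bipartite simple graph with maximum degree Δ(G) ≤ 2, then G is equitably k-choosable. -/
open SimpleGraph

open Finset
set_option linter.unusedSectionVars false
set_option linter.unusedVariables false
set_option maxHeartbeats 1000000

namespace EqChooseAux
variable {V : Type*} [Fintype V] [DecidableEq V] {G : SimpleGraph V} [DecidableRel G.Adj]
variable {k : ℕ} {L : V → Finset ℕ}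

lemma filter_adj_card_le (hdeg : G.maxDegree ≤ 2) (v : V) (s : Finset V) :
    (s.filter (fun w => G.Adj v w)).card ≤ 2 := by
  have h1 : s.filter (fun w => G.Adj v w) ⊆ G.neighborFinset v := by
    intro w hw
    rw [SimpleGraph.mem_neighborFinset]
    exact (Finset.mem_filter.mp hw).2
  calc (s.filter (fun w => G.Adj v w)).card ≤ (G.neighborFinset v).card :=
        Finset.card_le_card h1
    _ = G.degree v := G.card_neighborFinset_eq_degree v
    _ ≤ G.maxDegree := G.degree_le_maxDegree v
    _ ≤ 2 := hdeg

variable {k : ℕ} {L : V → Finset ℕ}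

lemma pick_color (u : V) (hLk : (L u).card = k) (c' : V → ℕ) (s' : Finset V) (F : Finset ℕ)
    (h : (s'.filter (fun v => G.Adj u v)).card + F.card < k) :
    ∃ x ∈ L u, x ∉ F ∧ ∀ v ∈ s', G.Adj u v → x ≠ c' v := by
  set bad := F ∪ (s'.filter (fun v => G.Adj u v)).image c' with hbaddef
  have hbad : bad.card < k := by
    calc bad.card ≤ F.card + ((s'.filter (fun v => G.Adj u v)).image c').card :=
          Finset.card_union_le _ _
      _ ≤ F.card + (s'.filter (fun v => G.Adj u v)).card :=
          Nat.add_le_add_left (Finset.card_image_le) _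
      _ < k := by omega
  have hne : (L u \ bad).Nonempty := by
    rw [← Finset.card_pos]
    have := Finset.le_card_sdiff bad (L u)
    omega
  obtain ⟨x, hx⟩ := hne
  rw [Finset.mem_sdiff] at hx
  refine ⟨x, hx.1, fun hF => hx.2 (Finset.mem_union_left _ hF), ?_⟩
  intro v hv hadj heq
  exact hx.2 (Finset.mem_union_right _ (Finset.mem_image.mpr
    ⟨v, Finset.mem_filter.mpr ⟨hv, hadj⟩, heq.symm⟩))


/-- extension of a partial colouring of `s'` to a set `T` of new vertices, all receiving
distinct colours avoiding `F` and the colours of their neighbours in `s'`. -/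
lemma extfin (hLk : ∀ v, (L v).card = k) (s' : Finset V) (c' : V → ℕ) :
    ∀ (n : ℕ) (T : Finset V) (F : Finset ℕ), T.card = n → (∀ x ∈ T, x ∉ s') →
    (∀ x ∈ T, (s'.filter (fun v => G.Adj x v)).card ≤ 2) →
    T.card + F.card ≤ k →
    ((T.filter (fun x => 1 ≤ (s'.filter (fun v => G.Adj x v)).card)).Nonempty →
      (T.filter (fun x => 1 ≤ (s'.filter (fun v => G.Adj x v)).card)).card + F.card + 1 ≤ k) →
    ((T.filter (fun x => 2 ≤ (s'.filter (fun v => G.Adj x v)).card)).Nonempty →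
      (T.filter (fun x => 2 ≤ (s'.filter (fun v => G.Adj x v)).card)).card + F.card + 2 ≤ k) →
    ∃ c : V → ℕ, (∀ v ∈ s', c v = c' v) ∧ (∀ x ∈ T, c x ∈ L x) ∧ (∀ x ∈ T, c x ∉ F) ∧
      (∀ x ∈ T, ∀ v ∈ s', G.Adj x v → c x ≠ c' v) ∧
      (∀ x ∈ T, ∀ y ∈ T, x ≠ y → c x ≠ c y) := by
  intro n
  induction n with
  | zero =>
    intro T F hTcard _ _ _ _ _
    rw [Finset.card_eq_zero] at hTcard
    subst hTcard
    exact ⟨c', fun v _ => rfl, by simp, by simp, by simp, by simp⟩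
  | succ m ih =>
    intro T F hTcard hdisj hdd h1 h2 h3
    have hTne : T.Nonempty := by rw [← Finset.card_pos]; omega
    obtain ⟨x, hxT, hxmax⟩ := Finset.exists_max_image T
      (fun x => (s'.filter (fun v => G.Adj x v)).card) hTne
    
    -- colour x
    have hroom : ((s'.filter (fun v => G.Adj x v)).card) + F.card < k := by
      rcases Nat.lt_or_ge (((s'.filter (fun v => G.Adj x v)).card)) 1 with h0 | h1'
      · omega
      rcases Nat.lt_or_ge (((s'.filter (fun v => G.Adj x v)).card)) 2 with hd1 | hd2
      · have := h2 ⟨x, Finset.mem_filter.mpr ⟨hxT, h1'⟩⟩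
        have : 1 ≤ (T.filter (fun x => 1 ≤ ((s'.filter (fun v => G.Adj x v)).card))).card :=
          Finset.card_pos.mpr ⟨x, Finset.mem_filter.mpr ⟨hxT, h1'⟩⟩
        have := h2 ⟨x, Finset.mem_filter.mpr ⟨hxT, h1'⟩⟩
        omega
      · have hd2' : ((s'.filter (fun v => G.Adj x v)).card) = 2 := le_antisymm (hdd x hxT) hd2
        have hmem : x ∈ T.filter (fun x => 2 ≤ ((s'.filter (fun v => G.Adj x v)).card)) := Finset.mem_filter.mpr ⟨hxT, hd2⟩
        have := h3 ⟨x, hmem⟩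
        have : 1 ≤ (T.filter (fun x => 2 ≤ ((s'.filter (fun v => G.Adj x v)).card))).card := Finset.card_pos.mpr ⟨x, hmem⟩
        have := h3 ⟨x, hmem⟩
        omega
    obtain ⟨xc, hxcL, hxcF, hxcnbr⟩ := pick_color (G := G) x (hLk x) c' s' F hroom
    set T' := T.erase x with hT'def
    set F' := insert xc F with hF'def
    have hT'card : T'.card = m := by
      rw [hT'def, Finset.card_erase_of_mem hxT]; omega
    have hF'card : F'.card = F.card + 1 := Finset.card_insert_of_notMem hxcF
    have hsubT : T' ⊆ T := Finset.erase_subset _ _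
    -- clauses for recursive call
    have h1' : T'.card + F'.card ≤ k := by omega
    have hfe : ∀ j : ℕ, T'.filter (fun y => j ≤ (s'.filter (fun v => G.Adj y v)).card) ⊆ (T.filter (fun y => j ≤ (s'.filter (fun v => G.Adj y v)).card)).erase x := by
      intro j y hy
      rw [Finset.mem_filter, hT'def, Finset.mem_erase] at hy
      exact Finset.mem_erase.mpr ⟨hy.1.1, Finset.mem_filter.mpr ⟨hy.1.2, hy.2⟩⟩
    have h2' : (T'.filter (fun y => 1 ≤ ((s'.filter (fun v => G.Adj y v)).card))).Nonempty →
        (T'.filter (fun y => 1 ≤ ((s'.filter (fun v => G.Adj y v)).card))).card + F'.card + 1 ≤ k := by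
      intro ⟨y, hy⟩
      have hyd : 1 ≤ ((s'.filter (fun v => G.Adj y v)).card) := (Finset.mem_filter.mp hy).2
      have hyT : y ∈ T := hsubT (Finset.mem_filter.mp hy).1
      have hxd : 1 ≤ ((s'.filter (fun v => G.Adj x v)).card) := le_trans hyd (hxmax y hyT)
      have hxmem : x ∈ T.filter (fun y => 1 ≤ ((s'.filter (fun v => G.Adj y v)).card)) := Finset.mem_filter.mpr ⟨hxT, hxd⟩
      have hc := h2 ⟨x, hxmem⟩
      have hsub := hfe 1
      have := Finset.card_le_card hsub
      rw [Finset.card_erase_of_mem hxmem] at this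
      omega
    have h3' : (T'.filter (fun y => 2 ≤ ((s'.filter (fun v => G.Adj y v)).card))).Nonempty →
        (T'.filter (fun y => 2 ≤ ((s'.filter (fun v => G.Adj y v)).card))).card + F'.card + 2 ≤ k := by
      intro ⟨y, hy⟩
      have hyd : 2 ≤ ((s'.filter (fun v => G.Adj y v)).card) := (Finset.mem_filter.mp hy).2
      have hyT : y ∈ T := hsubT (Finset.mem_filter.mp hy).1
      have hxd : 2 ≤ ((s'.filter (fun v => G.Adj x v)).card) := le_trans hyd (hxmax y hyT)
      have hxmem : x ∈ T.filter (fun y => 2 ≤ ((s'.filter (fun v => G.Adj y v)).card)) := Finset.mem_filter.mpr ⟨hxT, hxd⟩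
      have hc := h3 ⟨x, hxmem⟩
      have hsub := hfe 2
      have := Finset.card_le_card hsub
      rw [Finset.card_erase_of_mem hxmem] at this
      omega
    obtain ⟨c, hc1, hc2, hc3, hc4, hc5⟩ := ih T' F' hT'card
      (fun y hy => hdisj y (hsubT hy)) (fun y hy => hdd y (hsubT hy)) h1' h2' h3'
    refine ⟨Function.update c x xc, ?_, ?_, ?_, ?_, ?_⟩
    · intro v hv
      rw [Function.update_of_ne (fun h => hdisj x hxT (by rw [← h]; exact hv))]
      exact hc1 v hv
    · intro y hy
      by_cases hyx : y = x
      · subst hyx; rw [Function.update_self]; exact hxcL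
      · rw [Function.update_of_ne hyx]
        exact hc2 y (Finset.mem_erase.mpr ⟨hyx, hy⟩)
    · intro y hy
      by_cases hyx : y = x
      · subst hyx; rw [Function.update_self]; exact hxcF
      · rw [Function.update_of_ne hyx]
        have := hc3 y (Finset.mem_erase.mpr ⟨hyx, hy⟩)
        rw [hF'def] at this
        exact fun hmem => this (Finset.mem_insert_of_mem hmem)
    · intro y hy v hv hadj
      by_cases hyx : y = x
      · subst hyx; rw [Function.update_self]; exact hxcnbr v hv hadj
      · rw [Function.update_of_ne hyx]
        exact hc4 y (Finset.mem_erase.mpr ⟨hyx, hy⟩) v hv hadj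
    · intro y hy z hz hyz
      by_cases hyx : y = x
      · subst hyx
        rw [Function.update_self, Function.update_of_ne (fun h => hyz h.symm)]
        have := hc3 z (Finset.mem_erase.mpr ⟨fun h => hyz h.symm, hz⟩)
        rw [hF'def] at this
        intro heq
        exact this (heq ▸ Finset.mem_insert_self _ _)
      · by_cases hzx : z = x
        · subst hzx
          rw [Function.update_self, Function.update_of_ne hyx]
          have := hc3 y (Finset.mem_erase.mpr ⟨hyx, hy⟩)
          rw [hF'def] at this
          intro heq
          exact this (heq ▸ Finset.mem_insert_self _ _)
        · rw [Function.update_of_ne hyx, Function.update_of_ne hzx]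
          exact hc5 y (Finset.mem_erase.mpr ⟨hyx, hy⟩) z (Finset.mem_erase.mpr ⟨hzx, hz⟩) hyz


/-- Hall base case: a rainbow list colouring of a small set. -/
lemma hall_small (hLk : ∀ v, (L v).card = k) (s : Finset V) (hs : s.card ≤ k) (hk : 1 ≤ k) :
    ∃ c : V → ℕ, (∀ v ∈ s, c v ∈ L v) ∧
      (∀ v ∈ s, ∀ w ∈ s, v ≠ w → c v ≠ c w) := by
  have hall : ∀ s'' : Finset {v // v ∈ s}, s''.card ≤ (s''.biUnion (fun v => L v.1)).card := by
    intro s''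
    rcases s''.eq_empty_or_nonempty with h | ⟨a, ha⟩
    · simp [h]
    · have h1 : L a.1 ⊆ s''.biUnion (fun v => L v.1) := fun x hx =>
        Finset.mem_biUnion.mpr ⟨a, ha, hx⟩
      have h2 := Finset.card_le_card h1
      have h3 : s''.card ≤ s.card := by
        have := Finset.card_le_univ s''
        simpa [Fintype.card_coe] using this
      rw [hLk a.1] at h2
      omega
  obtain ⟨f, hfinj, hfmem⟩ :=
    (Finset.all_card_le_biUnion_card_iff_exists_injective (fun v : {v // v ∈ s} => L v.1)).mp hall
  refine ⟨fun v => if h : v ∈ s then f ⟨v, h⟩ else 0, ?_, ?_⟩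
  · intro v hv; simp only [dif_pos hv]; exact hfmem ⟨v, hv⟩
  · intro v hv w hw hvw
    simp only [dif_pos hv, dif_pos hw]
    intro heq
    exact hvw (congrArg Subtype.val (hfinj heq))

section Main2
variable (b : V → Bool)

/-- 2-choosability of bipartite graphs with max degree at most 2, with one vertex
precoloured provided at most one of its neighbours has that colour in its list. -/
lemma main2B (hdeg : G.maxDegree ≤ 2) (hb : ∀ ⦃v w⦄, G.Adj v w → b v ≠ b w)
    (hL2 : ∀ v, (L v).card = 2) :
    ∀ (n : ℕ) (s : Finset V), s.card = n →
      ∀ u ∈ s, ∀ x ∈ L u, ((s.erase u).filter (fun v => G.Adj u v ∧ x ∈ L v)).card ≤ 1 →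
      ∃ c : V → ℕ, c u = x ∧ (∀ v ∈ s, c v ∈ L v) ∧
        (∀ v ∈ s, ∀ w ∈ s, G.Adj v w → c v ≠ c w) := by
  intro n
  induction n using Nat.strong_induction_on with
  | _ n ih =>
  -- first, the unconstrained statement at smaller sizes
  have A : ∀ (m : ℕ), m < n → ∀ (s : Finset V), s.card = m →
      ∃ c : V → ℕ, (∀ v ∈ s, c v ∈ L v) ∧ (∀ v ∈ s, ∀ w ∈ s, G.Adj v w → c v ≠ c w) := by
    intro m hm s hcard
    by_cases hEx : ∃ u ∈ s, ∃ x ∈ L u, ((s.erase u).filter (fun v => G.Adj u v ∧ x ∈ L v)).card ≤ 1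
    · obtain ⟨u, hu, x, hx, hD⟩ := hEx
      obtain ⟨c, _, hc2, hc3⟩ := ih m hm s hcard u hu x hx hD
      exact ⟨c, hc2, hc3⟩
    · push_neg at hEx
      -- all lists equal along edges inside s
      have hedge : ∀ u ∈ s, ∀ v ∈ s, G.Adj u v → L u = L v := by
        intro u hu v hv hadj
        have hsub : L u ⊆ L v := by
          intro x hx
          have hcard2 := hEx u hu x hx
          have hDsub : (s.erase u).filter (fun w => G.Adj u w ∧ x ∈ L w) ⊆
              (s.erase u).filter (fun w => G.Adj u w) := by
            intro w hw
            rw [Finset.mem_filter] at hw ⊢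
            exact ⟨hw.1, hw.2.1⟩
          have hNsub : (s.erase u).filter (fun w => G.Adj u w) ⊆ G.neighborFinset u := by
            intro w hw
            rw [SimpleGraph.mem_neighborFinset]
            exact (Finset.mem_filter.mp hw).2
          have hle2 : ((s.erase u).filter (fun w => G.Adj u w)).card ≤ 2 := by
            calc _ ≤ (G.neighborFinset u).card := Finset.card_le_card hNsub
              _ = G.degree u := G.card_neighborFinset_eq_degree u
              _ ≤ G.maxDegree := G.degree_le_maxDegree u
              _ ≤ 2 := hdeg
          have heq : (s.erase u).filter (fun w => G.Adj u w ∧ x ∈ L w) =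
              (s.erase u).filter (fun w => G.Adj u w) :=
            Finset.eq_of_subset_of_card_le hDsub (by
              have := Finset.card_le_card hDsub
              omega)
          have hvmem : v ∈ (s.erase u).filter (fun w => G.Adj u w) :=
            Finset.mem_filter.mpr ⟨Finset.mem_erase.mpr ⟨hadj.ne', hv⟩, hadj⟩
          rw [← heq] at hvmem
          exact (Finset.mem_filter.mp hvmem).2.2
        exact Finset.eq_of_subset_of_card_le hsub (by rw [hL2, hL2])
      have hLne : ∀ v : V, (L v).Nonempty := by
        intro v; rw [← Finset.card_pos, hL2]; norm_num
      refine ⟨fun v => if b v then (L v).min' (hLne v) else (L v).max' (hLne v), ?_, ?_⟩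
      · intro v hv
        by_cases hbv : b v <;> simp [hbv, Finset.min'_mem, Finset.max'_mem]
      · intro v hv w hw hadj
        have hLeq : L v = L w := hedge v hv w hw hadj
        have hbvw := hb hadj
        have hlt : (L v).min' (hLne v) < (L v).max' (hLne v) :=
          Finset.min'_lt_max'_of_card _ (by rw [hL2]; norm_num)
        cases hbv : b v <;> cases hbw : b w <;> simp_all [hLeq] <;> omega
  -- now the constrained statement at n
  intro s hcard u hu x hx hD
  have hn : 1 ≤ n := by rw [← hcard]; exact Finset.card_pos.mpr ⟨u, hu⟩
  set s' := s.erase u with hs'def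
  have hs'card : s'.card = n - 1 := by rw [hs'def, Finset.card_erase_of_mem hu, hcard]
  set D := s'.filter (fun v => G.Adj u v ∧ x ∈ L v) with hDdef
  have hucol : ∀ (c' : V → ℕ), (∀ v ∈ s', c' v ∈ L v) →
      (∀ v ∈ s', ∀ w ∈ s', G.Adj v w → c' v ≠ c' w) →
      (∀ v ∈ D, c' v ≠ x) →
      ∃ c : V → ℕ, c u = x ∧ (∀ v ∈ s, c v ∈ L v) ∧
        (∀ v ∈ s, ∀ w ∈ s, G.Adj v w → c v ≠ c w) := by
    intro c' hmem hprop hDne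
    refine ⟨Function.update c' u x, Function.update_self u x c', ?_, ?_⟩
    · intro v hv
      by_cases hvu : v = u
      · subst hvu; rw [Function.update_self]; exact hx
      · rw [Function.update_of_ne hvu]
        exact hmem v (Finset.mem_erase.mpr ⟨hvu, hv⟩)
    · intro v hv w hw hadj
      by_cases hvu : v = u
      · rw [hvu] at hadj hv ⊢
        have hwu : w ≠ u := fun h => G.irrefl (by rw [h] at hadj; exact hadj)
        rw [Function.update_self, Function.update_of_ne hwu]
        have hws' : w ∈ s' := Finset.mem_erase.mpr ⟨hwu, hw⟩
        by_cases hxw : x ∈ L w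
        · exact (hDne w (Finset.mem_filter.mpr ⟨hws', hadj, hxw⟩)).symm
        · intro heq; exact hxw (heq ▸ hmem w hws')
      · by_cases hwu : w = u
        · rw [hwu] at hadj hw ⊢
          rw [Function.update_self, Function.update_of_ne hvu]
          have hvs' : v ∈ s' := Finset.mem_erase.mpr ⟨hvu, hv⟩
          by_cases hxv : x ∈ L v
          · exact hDne v (Finset.mem_filter.mpr ⟨hvs', G.adj_symm hadj, hxv⟩)
          · intro heq; exact hxv (heq ▸ hmem v hvs')
        · rw [Function.update_of_ne hvu, Function.update_of_ne hwu]
          exact hprop v (Finset.mem_erase.mpr ⟨hvu, hv⟩) w (Finset.mem_erase.mpr ⟨hwu, hw⟩) hadj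
  rcases Nat.eq_zero_or_pos D.card with hD0 | hD1
  · rw [Finset.card_eq_zero] at hD0
    obtain ⟨c', hmem, hprop⟩ := A (n-1) (by omega) s' hs'card
    exact hucol c' hmem hprop (by rw [hD0]; intro v hv; exact absurd hv (Finset.notMem_empty v))
  · have hDcard : D.card = 1 := le_antisymm hD hD1
    obtain ⟨w, hDw⟩ := Finset.card_eq_one.mp hDcard
    have hwD : w ∈ D := hDw ▸ Finset.mem_singleton_self w
    have hwprops := Finset.mem_filter.mp hwD
    have hws' : w ∈ s' := hwprops.1
    have hadj_uw : G.Adj u w := hwprops.2.1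
    have hxLw : x ∈ L w := hwprops.2.2
    -- pick the other colour y in L w
    have hyE : ((L w).erase x).Nonempty := by
      rw [← Finset.card_pos, Finset.card_erase_of_mem hxLw, hL2]; norm_num
    obtain ⟨y, hy⟩ := hyE
    have hyx : y ≠ x := (Finset.mem_erase.mp hy).1
    have hyLw : y ∈ L w := (Finset.mem_erase.mp hy).2
    -- the new D is small
    have hD' : ((s'.erase w).filter (fun v => G.Adj w v ∧ y ∈ L v)).card ≤ 1 := by
      have hsub : (s'.erase w).filter (fun v => G.Adj w v ∧ y ∈ L v) ⊆
          (s.filter (fun v => G.Adj w v)).erase u := by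
        intro v hv
        rw [Finset.mem_filter, Finset.mem_erase, Finset.mem_erase] at hv
        refine Finset.mem_erase.mpr ⟨?_, Finset.mem_filter.mpr ⟨hv.1.2.2, hv.2.1⟩⟩
        intro hvu
        subst hvu
        exact hv.1.2.1 rfl
      have humem : u ∈ s.filter (fun v => G.Adj w v) :=
        Finset.mem_filter.mpr ⟨hu, G.adj_symm hadj_uw⟩
      have h2 : (s.filter (fun v => G.Adj w v)).card ≤ 2 := by
        have hNsub : s.filter (fun v => G.Adj w v) ⊆ G.neighborFinset w := by
          intro z hz
          rw [SimpleGraph.mem_neighborFinset]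
          exact (Finset.mem_filter.mp hz).2
        calc _ ≤ (G.neighborFinset w).card := Finset.card_le_card hNsub
          _ = G.degree w := G.card_neighborFinset_eq_degree w
          _ ≤ G.maxDegree := G.degree_le_maxDegree w
          _ ≤ 2 := hdeg
      calc ((s'.erase w).filter (fun v => G.Adj w v ∧ y ∈ L v)).card
          ≤ ((s.filter (fun v => G.Adj w v)).erase u).card := Finset.card_le_card hsub
        _ = (s.filter (fun v => G.Adj w v)).card - 1 := Finset.card_erase_of_mem humem
        _ ≤ 1 := by omega
    obtain ⟨c', hc'w, hmem, hprop⟩ := ih (n-1) (by omega) s' hs'card w hws' y hyLw hD'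
    refine hucol c' hmem hprop ?_
    intro v hv
    rw [hDw, Finset.mem_singleton] at hv
    subst hv
    rw [hc'w]
    exact hyx

end Main2

lemma cl_half_aux (bb : V → Bool) (hbb : ∀ ⦃v w⦄, G.Adj v w → bb v ≠ bb w)
    (s₀ : Finset V) (hreg : ∀ v ∈ s₀, (s₀.filter (fun w => G.Adj v w)).card = 2)
    (I : Finset V) (hIs : I ⊆ s₀) (hind : ∀ v ∈ I, ∀ w ∈ I, ¬ G.Adj v w) :
    (I.filter (fun v => bb v = true)).card + (I.filter (fun v => bb v = false)).card ≤
      (s₀.filter (fun v => bb v = false)).card := by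
  set IA := I.filter (fun v => bb v = true) with hIAdef
  set IB := I.filter (fun v => bb v = false) with hIBdef
  set B := s₀.filter (fun v => bb v = false) with hBdef
  have hIBB : IB ⊆ B := by
    intro v hv
    rw [hIBdef, Finset.mem_filter] at hv
    exact Finset.mem_filter.mpr ⟨hIs hv.1, hv.2⟩
  have key : 2 * IA.card ≤ 2 * (B \ I).card := by
    calc 2 * IA.card = ∑ a ∈ IA, 2 := by rw [Finset.sum_const, smul_eq_mul, mul_comm]
      _ = ∑ a ∈ IA, (s₀.filter (fun w => G.Adj a w)).card := by
          refine Finset.sum_congr rfl fun a ha => ?_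
          rw [hreg a (hIs (Finset.filter_subset _ _ ha))]
      _ = ∑ a ∈ IA, ∑ v ∈ s₀, if G.Adj a v then 1 else 0 := by
          refine Finset.sum_congr rfl fun a _ => ?_
          rw [Finset.card_filter]
      _ = ∑ v ∈ s₀, ∑ a ∈ IA, if G.Adj a v then 1 else 0 := Finset.sum_comm
      _ = ∑ v ∈ s₀, (IA.filter (fun a => G.Adj a v)).card := by
          refine Finset.sum_congr rfl fun v _ => ?_
          rw [Finset.card_filter]
      _ ≤ ∑ v ∈ s₀, (if v ∈ B \ I then 2 else 0) := by
          refine Finset.sum_le_sum fun v hv => ?_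
          rcases (IA.filter (fun a => G.Adj a v)).eq_empty_or_nonempty with he | ⟨a, ha⟩
          · simp [he]
          · have haIA : a ∈ IA := (Finset.mem_filter.mp ha).1
            have haadj : G.Adj a v := (Finset.mem_filter.mp ha).2
            have haI : a ∈ I := Finset.filter_subset _ _ haIA
            have hbba : bb a = true := (Finset.mem_filter.mp haIA).2
            have hvB : v ∈ B := by
              refine Finset.mem_filter.mpr ⟨hv, ?_⟩
              have := hbb haadj
              rw [hbba] at this
              exact Bool.not_eq_true _ ▸ (by simpa using this.symm)
            have hvI : v ∉ I := fun hvI => hind a haI v hvI haadj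
            rw [if_pos (Finset.mem_sdiff.mpr ⟨hvB, hvI⟩)]
            calc (IA.filter (fun a => G.Adj a v)).card
                ≤ (s₀.filter (fun w => G.Adj v w)).card := by
                  refine Finset.card_le_card ?_
                  intro a' ha'
                  have h1 : a' ∈ IA := (Finset.mem_filter.mp ha').1
                  have h2 : G.Adj a' v := (Finset.mem_filter.mp ha').2
                  exact Finset.mem_filter.mpr ⟨hIs (Finset.filter_subset _ _ h1), G.adj_symm h2⟩
              _ = 2 := hreg v hv
      _ = ∑ v ∈ s₀ ∩ (B \ I), 2 := (Finset.sum_ite_mem _ _ _)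
      _ = 2 * (B \ I).card := by
          rw [Finset.inter_eq_right.mpr (le_trans (Finset.sdiff_subset)
            (Finset.filter_subset _ _)), Finset.sum_const, smul_eq_mul, mul_comm]
  have hBsplit : (B \ I).card + (B ∩ I).card = B.card := Finset.card_sdiff_add_card_inter B I
  have hBI : B ∩ I = IB := by
    ext v
    rw [Finset.mem_inter, hBdef, hIBdef, Finset.mem_filter, Finset.mem_filter]
    constructor
    · rintro ⟨⟨_, h2⟩, h3⟩; exact ⟨h3, h2⟩
    · rintro ⟨h1, h2⟩; exact ⟨⟨hIs h1, h2⟩, h1⟩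
  rw [hBI] at hBsplit
  omega

lemma cl_half (b : V → Bool) (hb : ∀ ⦃v w⦄, G.Adj v w → b v ≠ b w)
    (s₀ : Finset V) (hreg : ∀ v ∈ s₀, (s₀.filter (fun w => G.Adj v w)).card = 2)
    (I : Finset V) (hIs : I ⊆ s₀) (hind : ∀ v ∈ I, ∀ w ∈ I, ¬ G.Adj v w) :
    I.card ≤ s₀.card / 2 := by
  have h1 := cl_half_aux b hb s₀ hreg I hIs hind
  have h2 := cl_half_aux (fun v => !(b v)) (fun v w hadj => by
      have := hb hadj
      cases hbv : b v <;> cases hbw : b w <;> simp_all) s₀ hreg I hIs hind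
  simp only [Bool.not_eq_true', Bool.not_eq_false'] at h2
  have hIsplit : (I.filter (fun v => b v = true)).card +
      (I.filter (fun v => b v = false)).card = I.card := by
    have heqf : I.filter (fun v => b v = false) = I.filter (fun v => ¬ (b v = true)) :=
      Finset.filter_congr (fun v _ => by simp)
    rw [heqf, Finset.card_filter_add_card_filter_not]
  have hssplit : (s₀.filter (fun v => b v = true)).card +
      (s₀.filter (fun v => b v = false)).card = s₀.card := by
    have heqf : s₀.filter (fun v => b v = false) = s₀.filter (fun v => ¬ (b v = true)) :=
      Finset.filter_congr (fun v _ => by simp)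
    rw [heqf, Finset.card_filter_add_card_filter_not]
  omega


/-- The deletion step. -/
lemma delstep (hk : 2 ≤ k) (hdeg : G.maxDegree ≤ 2) (hLk : ∀ v, (L v).card = k)
    (s S : Finset V) (hSs : S ⊆ s) (hScard : S.card = k)
    (u w : V) (huS : u ∈ S) (hwS : w ∈ S) (huw : u ≠ w)
    (hu : ∀ v ∈ s \ S, ¬ G.Adj u v)
    (hw : ((s \ S).filter (fun v => G.Adj w v)).card ≤ 1)
    (c' : V → ℕ) (hmem' : ∀ v ∈ s \ S, c' v ∈ L v)
    (hprop' : ∀ v ∈ s \ S, ∀ y ∈ s \ S, G.Adj v y → c' v ≠ c' y)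
    (hbound' : ∀ col, ((s \ S).filter (fun v => c' v = col)).card ≤ ((s \ S).card + k - 1) / k) :
    ∃ c : V → ℕ, (∀ v ∈ s, c v ∈ L v) ∧ (∀ v ∈ s, ∀ y ∈ s, G.Adj v y → c v ≠ c y) ∧
      ∀ col, (s.filter (fun v => c v = col)).card ≤ (s.card + k - 1) / k := by
  have hkpos : 0 < k := by omega
  have hdu : ((s \ S).filter (fun v => G.Adj u v)).card = 0 := by
    rw [Finset.card_eq_zero, Finset.filter_eq_empty_iff]
    exact hu
  have hwu : w ∈ S.erase u := Finset.mem_erase.mpr ⟨huw.symm, hwS⟩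
  have hc2 : (S.filter (fun x => 1 ≤ ((s \ S).filter (fun v => G.Adj x v)).card)).card + 0 + 1 ≤ k := by
    have hsub : S.filter (fun x => 1 ≤ ((s \ S).filter (fun v => G.Adj x v)).card) ⊆ S.erase u := by
      intro x hx
      rw [Finset.mem_filter] at hx
      refine Finset.mem_erase.mpr ⟨?_, hx.1⟩
      rintro rfl
      omega
    have := Finset.card_le_card hsub
    rw [Finset.card_erase_of_mem huS, hScard] at this
    omega
  have hc3 : (S.filter (fun x => 2 ≤ ((s \ S).filter (fun v => G.Adj x v)).card)).card + 0 + 2 ≤ k := by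
    have hsub : S.filter (fun x => 2 ≤ ((s \ S).filter (fun v => G.Adj x v)).card) ⊆
        (S.erase u).erase w := by
      intro x hx
      rw [Finset.mem_filter] at hx
      refine Finset.mem_erase.mpr ⟨?_, Finset.mem_erase.mpr ⟨?_, hx.1⟩⟩
      · rintro rfl; omega
      · rintro rfl; omega
    have := Finset.card_le_card hsub
    rw [Finset.card_erase_of_mem hwu, Finset.card_erase_of_mem huS, hScard] at this
    omega
  obtain ⟨c, hP1, hP2, _, hP4, hP5⟩ := extfin hLk (s \ S) c' k S ∅ hScard
    (fun x hx hmem => (Finset.mem_sdiff.mp hmem).2 hx)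
    (fun x _ => filter_adj_card_le hdeg x _)
    (by simp [hScard])
    (fun _ => by simpa using hc2)
    (fun _ => by simpa using hc3)
  have hks : k ≤ s.card := by
    have := Finset.card_le_card hSs
    omega
  have hsplit : ∀ v ∈ s, v ∈ S ∨ v ∈ s \ S := by
    intro v hv
    by_cases hvS : v ∈ S
    · exact Or.inl hvS
    · exact Or.inr (Finset.mem_sdiff.mpr ⟨hv, hvS⟩)
  refine ⟨c, ?_, ?_, ?_⟩
  · intro v hv
    rcases hsplit v hv with h | h
    · exact hP2 v h
    · rw [hP1 v h]; exact hmem' v h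
  · intro v hv y hy hadj
    rcases hsplit v hv with h1 | h1 <;> rcases hsplit y hy with h2 | h2
    · exact hP5 v h1 y h2 hadj.ne
    · rw [hP1 y h2]; exact hP4 v h1 y h2 hadj
    · rw [hP1 v h1]
      intro heq
      exact hP4 y h2 v h1 (G.adj_symm hadj) heq.symm
    · rw [hP1 v h1, hP1 y h2]; exact hprop' v h1 y h2 hadj
  · intro col
    have hsub : s.filter (fun v => c v = col) ⊆
        ((s \ S).filter (fun v => c' v = col)) ∪ (S.filter (fun v => c v = col)) := by
      intro v hv
      rw [Finset.mem_filter] at hv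
      rcases hsplit v hv.1 with h | h
      · exact Finset.mem_union_right _ (Finset.mem_filter.mpr ⟨h, hv.2⟩)
      · exact Finset.mem_union_left _ (Finset.mem_filter.mpr ⟨h, by rw [← hP1 v h]; exact hv.2⟩)
    have hS1 : (S.filter (fun v => c v = col)).card ≤ 1 := by
      refine Finset.card_le_one.mpr ?_
      intro a ha b hb
      rw [Finset.mem_filter] at ha hb
      by_contra hne
      exact hP5 a ha.1 b hb.1 hne (by rw [ha.2, hb.2])
    have hsd : (s \ S).card = s.card - k := by rw [Finset.card_sdiff_of_subset hSs, hScard]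
    calc (s.filter (fun v => c v = col)).card
        ≤ ((s \ S).filter (fun v => c' v = col)).card + (S.filter (fun v => c v = col)).card :=
          le_trans (Finset.card_le_card hsub) (Finset.card_union_le _ _)
      _ ≤ ((s \ S).card + k - 1) / k + 1 := by
          have := hbound' col
          omega
      _ = (s.card + k - 1) / k := by
          rw [hsd]
          rw [show s.card + k - 1 = (s.card - k + k - 1) + k by omega,
            Nat.add_div_right _ hkpos]


/-- unconstrained 2-list-colourability -/
lemma main2A (b : V → Bool) (hdeg : G.maxDegree ≤ 2) (hb : ∀ ⦃v w⦄, G.Adj v w → b v ≠ b w)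
    (hL2 : ∀ v, (L v).card = 2) (s : Finset V) :
    ∃ c : V → ℕ, (∀ v ∈ s, c v ∈ L v) ∧ (∀ v ∈ s, ∀ w ∈ s, G.Adj v w → c v ≠ c w) := by
  by_cases hEx : ∃ u ∈ s, ∃ x ∈ L u, ((s.erase u).filter (fun v => G.Adj u v ∧ x ∈ L v)).card ≤ 1
  · obtain ⟨u, hu, x, hx, hD⟩ := hEx
    obtain ⟨c, _, hc2, hc3⟩ := main2B b hdeg hb hL2 s.card s rfl u hu x hx hD
    exact ⟨c, hc2, hc3⟩
  · push_neg at hEx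
    have hedge : ∀ u ∈ s, ∀ v ∈ s, G.Adj u v → L u = L v := by
      intro u hu v hv hadj
      have hsub : L u ⊆ L v := by
        intro x hx
        have hcard2 := hEx u hu x hx
        have hDsub : (s.erase u).filter (fun w => G.Adj u w ∧ x ∈ L w) ⊆
            (s.erase u).filter (fun w => G.Adj u w) := by
          intro w hw
          rw [Finset.mem_filter] at hw ⊢
          exact ⟨hw.1, hw.2.1⟩
        have hle2 : ((s.erase u).filter (fun w => G.Adj u w)).card ≤ 2 :=
          filter_adj_card_le hdeg u _
        have heq : (s.erase u).filter (fun w => G.Adj u w ∧ x ∈ L w) =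
            (s.erase u).filter (fun w => G.Adj u w) :=
          Finset.eq_of_subset_of_card_le hDsub (by
            have := Finset.card_le_card hDsub
            omega)
        have hvmem : v ∈ (s.erase u).filter (fun w => G.Adj u w) :=
          Finset.mem_filter.mpr ⟨Finset.mem_erase.mpr ⟨hadj.ne', hv⟩, hadj⟩
        rw [← heq] at hvmem
        exact (Finset.mem_filter.mp hvmem).2.2
      exact Finset.eq_of_subset_of_card_le hsub (by rw [hL2, hL2])
    have hLne : ∀ v : V, (L v).Nonempty := by
      intro v; rw [← Finset.card_pos, hL2]; norm_num
    refine ⟨fun v => if b v then (L v).min' (hLne v) else (L v).max' (hLne v), ?_, ?_⟩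
    · intro v hv
      by_cases hbv : b v <;> simp [hbv, Finset.min'_mem, Finset.max'_mem]
    · intro v hv w hw hadj
      have hLeq : L v = L w := hedge v hv w hw hadj
      have hbvw := hb hadj
      have hlt : (L v).min' (hLne v) < (L v).max' (hLne v) :=
        Finset.min'_lt_max'_of_card _ (by rw [hL2]; norm_num)
      cases hbv : b v <;> cases hbw : b w <;> simp_all [hLeq] <;> omega

/-- The main lemma. -/
lemma main (hk : 2 ≤ k) (hdeg : G.maxDegree ≤ 2) (b : V → Bool)
    (hb : ∀ ⦃v w⦄, G.Adj v w → b v ≠ b w) (hLk : ∀ v, (L v).card = k) :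
    ∀ (n : ℕ) (s : Finset V), s.card = n →
      ∃ c : V → ℕ, (∀ v ∈ s, c v ∈ L v) ∧ (∀ v ∈ s, ∀ w ∈ s, G.Adj v w → c v ≠ c w) ∧
        ∀ col, (s.filter (fun v => c v = col)).card ≤ (s.card + k - 1) / k := by
  intro n
  induction n using Nat.strong_induction_on with
  | _ n ih =>
  intro s hcard
  have hkpos : 0 < k := by omega
  by_cases hsmall : s.card ≤ k
  -- base case: rainbow colouring via Hall
  · obtain ⟨c, hmem, hinj⟩ := hall_small hLk s hsmall (by omega)
    refine ⟨c, hmem, fun v hv w hw hadj => hinj v hv w hw hadj.ne, ?_⟩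
    intro col
    rcases (s.filter (fun v => c v = col)).eq_empty_or_nonempty with he | ⟨a, ha⟩
    · simp [he]
    · have h1 : (s.filter (fun v => c v = col)).card ≤ 1 := by
        refine Finset.card_le_one.mpr ?_
        intro a' ha' b' hb'
        rw [Finset.mem_filter] at ha' hb'
        by_contra hne
        exact hinj a' ha'.1 b' hb'.1 hne (by rw [ha'.2, hb'.2])
      have hane : a ∈ s := (Finset.mem_filter.mp ha).1
      have hspos : 1 ≤ s.card := Finset.card_pos.mpr ⟨a, hane⟩
      have : 1 ≤ (s.card + k - 1) / k := by
        rw [Nat.le_div_iff_mul_le hkpos]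
        omega
      omega
  -- inductive step
  · push_neg at hsmall
    -- helper to apply delstep given a suitable S
    have step : ∀ (S : Finset V) (u w : V), S ⊆ s → S.card = k → u ∈ S → w ∈ S → u ≠ w →
        (∀ v ∈ s \ S, ¬ G.Adj u v) → ((s \ S).filter (fun v => G.Adj w v)).card ≤ 1 →
        ∃ c : V → ℕ, (∀ v ∈ s, c v ∈ L v) ∧ (∀ v ∈ s, ∀ w ∈ s, G.Adj v w → c v ≠ c w) ∧
          ∀ col, (s.filter (fun v => c v = col)).card ≤ (s.card + k - 1) / k := by
      intro S u w hSs hScard huS hwS huw hu hw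
      have hsd : (s \ S).card = s.card - k := by rw [Finset.card_sdiff_of_subset hSs, hScard]
      have hlt : (s \ S).card < n := by
        rw [hsd, ← hcard]
        omega
      obtain ⟨c', hmem', hprop', hbound'⟩ := ih (s \ S).card hlt (s \ S) rfl
      exact delstep hk hdeg hLk s S hSs hScard u w huS hwS huw hu hw c' hmem' hprop' hbound'
    -- a vertex's neighbours in s
    by_cases hk3 : 3 ≤ k
    · -- k ≥ 3 : an S always exists
      have hsne : s.Nonempty := by rw [← Finset.card_pos]; omega
      obtain ⟨u, hus⟩ := hsne
      rcases (s.filter (fun v => G.Adj u v)).eq_empty_or_nonempty with hNu | ⟨w, hwNu⟩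
      · -- u isolated in s; pick any other vertex w
        obtain ⟨w, hws, hwu⟩ := Finset.exists_mem_ne (s := s) (by omega) u
        rcases (s.filter (fun v => G.Adj w v)).eq_empty_or_nonempty with hNw | ⟨z, hzNw⟩
        · -- both isolated
          have hcore : {u, w} ⊆ s := by
            intro v hv
            rcases Finset.mem_insert.mp hv with rfl | hv
            · exact hus
            · rw [Finset.mem_singleton.mp hv]; exact hws
          have hcc : ({u, w} : Finset V).card ≤ k := by
            have h1 := Finset.card_insert_le u ({w} : Finset V)
            simp only [Finset.card_singleton] at h1
            omega
          obtain ⟨S, hcoreS, hSs, hScard⟩ := Finset.exists_subsuperset_card_eq (n := k) hcore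
            hcc (by omega)
          refine step S u w hSs hScard (hcoreS (by simp)) (hcoreS (by simp)) hwu.symm ?_ ?_
          · intro v hv hadj
            have : v ∈ s.filter (fun v => G.Adj u v) :=
              Finset.mem_filter.mpr ⟨(Finset.mem_sdiff.mp hv).1, hadj⟩
            rw [hNu] at this
            exact absurd this (Finset.notMem_empty v)
          · have hsub : (s \ S).filter (fun v => G.Adj w v) ⊆ s.filter (fun v => G.Adj w v) :=
              Finset.filter_subset_filter _ (Finset.sdiff_subset)
            rw [hNw] at hsub
            have := Finset.card_le_card hsub
            simp only [Finset.card_empty] at this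
            omega
        · -- w has a neighbour z in s
          have hzs : z ∈ s := (Finset.mem_filter.mp hzNw).1
          have hwz : G.Adj w z := (Finset.mem_filter.mp hzNw).2
          have hzu : z ≠ u := by
            rintro rfl
            have hcontra : w ∈ s.filter (fun v => G.Adj z v) :=
              Finset.mem_filter.mpr ⟨hws, G.adj_symm hwz⟩
            rw [hNu] at hcontra
            exact absurd hcontra (Finset.notMem_empty w)
          have hcore : {u, w, z} ⊆ s := by
            intro v hv
            rcases Finset.mem_insert.mp hv with rfl | hv
            · exact hus
            rcases Finset.mem_insert.mp hv with rfl | hv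
            · exact hws
            · rw [Finset.mem_singleton.mp hv]; exact hzs
          have hcc : ({u, w, z} : Finset V).card ≤ k := by
            have h1 := Finset.card_insert_le u ({w, z} : Finset V)
            have h2 := Finset.card_insert_le w ({z} : Finset V)
            simp only [Finset.card_singleton] at h1 h2
            omega
          obtain ⟨S, hcoreS, hSs, hScard⟩ := Finset.exists_subsuperset_card_eq (n := k) hcore
            hcc (by omega)
          refine step S u w hSs hScard (hcoreS (by simp)) (hcoreS (by simp)) hwu.symm ?_ ?_
          · intro v hv hadj
            have : v ∈ s.filter (fun v => G.Adj u v) :=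
              Finset.mem_filter.mpr ⟨(Finset.mem_sdiff.mp hv).1, hadj⟩
            rw [hNu] at this
            exact absurd this (Finset.notMem_empty v)
          · have hzS : z ∈ S := hcoreS (by simp)
            have hsub : (s \ S).filter (fun v => G.Adj w v) ⊆
                (s.filter (fun v => G.Adj w v)).erase z := by
              intro v hv
              rw [Finset.mem_filter, Finset.mem_sdiff] at hv
              refine Finset.mem_erase.mpr ⟨?_, Finset.mem_filter.mpr ⟨hv.1.1, hv.2⟩⟩
              rintro rfl
              exact hv.1.2 hzS
            have h2 := filter_adj_card_le hdeg w s
            have := Finset.card_le_card hsub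
            rw [Finset.card_erase_of_mem hzNw] at this
            omega
      · -- u has a neighbour w in s
        have hws : w ∈ s := (Finset.mem_filter.mp hwNu).1
        have huw : G.Adj u w := (Finset.mem_filter.mp hwNu).2
        have hcore : insert u (s.filter (fun v => G.Adj u v)) ⊆ s := by
          intro v hv
          rcases Finset.mem_insert.mp hv with rfl | hv
          · exact hus
          · exact (Finset.mem_filter.mp hv).1
        have hcorecard : (insert u (s.filter (fun v => G.Adj u v))).card ≤ k := by
          have h1 := Finset.card_insert_le u (s.filter (fun v => G.Adj u v))
          have h2 := filter_adj_card_le hdeg u s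
          omega
        obtain ⟨S, hcoreS, hSs, hScard⟩ := Finset.exists_subsuperset_card_eq (n := k) hcore
          hcorecard (by omega)
        refine step S u w hSs hScard (hcoreS (Finset.mem_insert_self _ _))
          (hcoreS (Finset.mem_insert_of_mem hwNu)) huw.ne ?_ ?_
        · intro v hv hadj
          rw [Finset.mem_sdiff] at hv
          exact hv.2 (hcoreS (Finset.mem_insert_of_mem (Finset.mem_filter.mpr ⟨hv.1, hadj⟩)))
        · have huS : u ∈ S := hcoreS (Finset.mem_insert_self _ _)
          have hsub : (s \ S).filter (fun v => G.Adj w v) ⊆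
              (s.filter (fun v => G.Adj w v)).erase u := by
            intro v hv
            rw [Finset.mem_filter, Finset.mem_sdiff] at hv
            refine Finset.mem_erase.mpr ⟨?_, Finset.mem_filter.mpr ⟨hv.1.1, hv.2⟩⟩
            rintro rfl
            exact hv.1.2 huS
          have humem : u ∈ s.filter (fun v => G.Adj w v) :=
            Finset.mem_filter.mpr ⟨hus, G.adj_symm huw⟩
          have h2 := filter_adj_card_le hdeg w s
          have := Finset.card_le_card hsub
          rw [Finset.card_erase_of_mem humem] at this
          omega
    · -- k = 2
      have hk2 : k = 2 := by omega
      by_cases hc1 : ∃ u ∈ s, (s.filter (fun v => G.Adj u v)).card = 1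
      · obtain ⟨u, hus, hdu⟩ := hc1
        obtain ⟨w, hweq⟩ := Finset.card_eq_one.mp hdu
        have hwmem : w ∈ s.filter (fun v => G.Adj u v) := hweq ▸ Finset.mem_singleton_self w
        have hws : w ∈ s := (Finset.mem_filter.mp hwmem).1
        have huw : G.Adj u w := (Finset.mem_filter.mp hwmem).2
        have hScard : ({u, w} : Finset V).card = k := by
          rw [Finset.card_insert_of_notMem (by simp [huw.ne]), Finset.card_singleton, hk2]
        have hSs : ({u, w} : Finset V) ⊆ s := by
          intro v hv
          rcases Finset.mem_insert.mp hv with rfl | hv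
          · exact hus
          · rw [Finset.mem_singleton.mp hv]; exact hws
        refine step {u, w} u w hSs hScard (by simp) (by simp) huw.ne ?_ ?_
        · intro v hv hadj
          rw [Finset.mem_sdiff] at hv
          have : v ∈ s.filter (fun v => G.Adj u v) := Finset.mem_filter.mpr ⟨hv.1, hadj⟩
          rw [hweq, Finset.mem_singleton] at this
          exact hv.2 (by rw [this]; simp)
        · have hsub : (s \ {u, w}).filter (fun v => G.Adj w v) ⊆
              (s.filter (fun v => G.Adj w v)).erase u := by
            intro v hv
            rw [Finset.mem_filter, Finset.mem_sdiff] at hv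
            refine Finset.mem_erase.mpr ⟨?_, Finset.mem_filter.mpr ⟨hv.1.1, hv.2⟩⟩
            rintro rfl
            exact hv.1.2 (by simp)
          have humem : u ∈ s.filter (fun v => G.Adj w v) :=
            Finset.mem_filter.mpr ⟨hus, G.adj_symm huw⟩
          have h2 := filter_adj_card_le hdeg w s
          have := Finset.card_le_card hsub
          rw [Finset.card_erase_of_mem humem] at this
          omega
      · by_cases hc2 : ∃ u ∈ s, ∃ w ∈ s, u ≠ w ∧ (s.filter (fun v => G.Adj u v)).card = 0 ∧
            (s.filter (fun v => G.Adj w v)).card ≤ 1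
        · obtain ⟨u, hus, w, hws, huw, hdu, hdw⟩ := hc2
          have hScard : ({u, w} : Finset V).card = k := by
            rw [Finset.card_insert_of_notMem (by simp [huw]), Finset.card_singleton, hk2]
          have hSs : ({u, w} : Finset V) ⊆ s := by
            intro v hv
            rcases Finset.mem_insert.mp hv with rfl | hv
            · exact hus
            · rw [Finset.mem_singleton.mp hv]; exact hws
          refine step {u, w} u w hSs hScard (by simp) (by simp) huw ?_ ?_
          · intro v hv hadj
            rw [Finset.mem_sdiff] at hv
            have : v ∈ s.filter (fun v => G.Adj u v) := Finset.mem_filter.mpr ⟨hv.1, hadj⟩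
            rw [Finset.card_eq_zero.mp hdu] at this
            exact absurd this (Finset.notMem_empty v)
          · have : (s \ {u, w}).filter (fun v => G.Adj w v) ⊆ s.filter (fun v => G.Adj w v) :=
              Finset.filter_subset_filter _ (Finset.sdiff_subset)
            have := Finset.card_le_card this
            omega
        · -- the bad case : all degrees are 2, except at most one isolated vertex
          push_neg at hc1 hc2
          set Z := s.filter (fun v => (s.filter (fun w => G.Adj v w)).card = 0) with hZdef
          have hZcard : Z.card ≤ 1 := by
            by_contra hZ2
            push_neg at hZ2
            obtain ⟨a, ha, b', hb', hab⟩ := Finset.one_lt_card.mp hZ2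
            rw [hZdef, Finset.mem_filter] at ha hb'
            have hcontra := hc2 a ha.1 b' hb'.1 hab ha.2
            rw [hb'.2] at hcontra
            exact absurd hcontra (by omega)
          have hdeg2 : ∀ v ∈ s \ Z, (s.filter (fun w => G.Adj v w)).card = 2 := by
            intro v hv
            rw [Finset.mem_sdiff, hZdef, Finset.mem_filter] at hv
            have h2 := filter_adj_card_le hdeg v s
            have h1 := hc1 v hv.1
            have h0 : ¬ (s.filter (fun w => G.Adj v w)).card = 0 := fun h => hv.2 ⟨hv.1, h⟩
            omega
          -- degrees within s \ Z are still 2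
          have hreg : ∀ v ∈ s \ Z, ((s \ Z).filter (fun w => G.Adj v w)).card = 2 := by
            intro v hv
            have heq : (s \ Z).filter (fun w => G.Adj v w) = s.filter (fun w => G.Adj v w) := by
              ext w
              rw [Finset.mem_filter, Finset.mem_filter, Finset.mem_sdiff]
              constructor
              · rintro ⟨⟨h1, _⟩, h3⟩; exact ⟨h1, h3⟩
              · rintro ⟨h1, h3⟩
                refine ⟨⟨h1, ?_⟩, h3⟩
                rw [hZdef, Finset.mem_filter]
                rintro ⟨_, hz⟩
                have : v ∈ s.filter (fun y => G.Adj w y) :=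
                  Finset.mem_filter.mpr ⟨(Finset.mem_sdiff.mp hv).1, G.adj_symm h3⟩
                rw [Finset.card_eq_zero.mp hz] at this
                exact absurd this (Finset.notMem_empty v)
            rw [heq]
            exact hdeg2 v hv
          obtain ⟨c, hmem, hprop⟩ := main2A b hdeg hb (fun v => hk2 ▸ hLk v) s
          refine ⟨c, hmem, hprop, ?_⟩
          intro col
          set I := s.filter (fun v => c v = col) with hIdef
          have hIind : ∀ v ∈ I, ∀ w ∈ I, ¬ G.Adj v w := by
            intro v hv w hw hadj
            rw [hIdef, Finset.mem_filter] at hv hw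
            exact hprop v hv.1 w hw.1 hadj (by rw [hv.2, hw.2])
          have hIZ : I \ Z ⊆ s \ Z := by
            intro v hv
            rw [Finset.mem_sdiff] at hv ⊢
            exact ⟨Finset.filter_subset _ _ hv.1, hv.2⟩
          have hIZind : ∀ v ∈ I \ Z, ∀ w ∈ I \ Z, ¬ G.Adj v w := by
            intro v hv w hw
            exact hIind v (Finset.mem_sdiff.mp hv).1 w (Finset.mem_sdiff.mp hw).1
          have hbound := cl_half b hb (s \ Z) hreg (I \ Z) hIZ hIZind
          have hZs : Z ⊆ s := Finset.filter_subset _ _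
          have hIcard : I.card ≤ (I \ Z).card + Z.card := by
            have := Finset.card_sdiff_add_card_inter I Z
            have := Finset.card_le_card (Finset.inter_subset_right (s₁ := I) (s₂ := Z))
            omega
          have hsZ : (s \ Z).card = s.card - Z.card := Finset.card_sdiff_of_subset hZs
          have hZle : Z.card ≤ s.card := Finset.card_le_card hZs
          rw [hk2]
          rw [hk2] at hsmall
          -- I.card ≤ (s.card - Z.card)/2 + Z.card ≤ (s.card + 1)/2
          have hfin : (s.card - Z.card) / 2 + Z.card ≤ (s.card + 2 - 1) / 2 := by
            interval_cases h : Z.card <;> omega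
          omega


end EqChooseAux

theorem bipartite_maxdeg_two_equitably_choosable (k : ℕ) (hk : 2 ≤ k)
    {V : Type*} [Fintype V] (G : SimpleGraph V) [DecidableRel G.Adj]
    (hbip : G.Colorable 2) (hdeg : G.maxDegree ≤ 2) :
    EquitablyChoosable G k := by
  classical
  intro L hL
  obtain ⟨C⟩ := hbip
  have hb : ∀ ⦃v w⦄, G.Adj v w → (fun v => decide (C v = 0)) v ≠ (fun v => decide (C v = 0)) w := by
    intro v w hadj
    have hval : (C v).val ≠ (C w).val := fun h => C.valid hadj (Fin.ext h)
    have h1 := (C v).isLt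
    have h2 := (C w).isLt
    simp only [ne_eq, decide_eq_decide, Fin.ext_iff, Fin.val_zero]
    omega
  obtain ⟨c, h1, h2, h3⟩ := EqChooseAux.main hk hdeg (fun v => decide (C v = 0)) hb hL
    Finset.univ.card Finset.univ rfl
  refine ⟨c, fun v => h1 v (Finset.mem_univ v),
    fun v w hadj => h2 v (Finset.mem_univ v) w (Finset.mem_univ w) hadj, fun col => ?_⟩
  have := h3 col
  rwa [Finset.card_univ] at this
end
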